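/- arXiv:2307.04424 — 7 statements merged into one kernel-verified Lean document; each statement's English description precedes it below -/
import Mathlib

section
/- Let f be a nonzero formal power series in K[[ξ_1,…,ξ_r]]. Then there exist natural numbers ρ_1,…,ρ_{r−1} with the following property: letting φ : K[[ξ_1,…,ξ_r]] → K[[η_1,…,η_r]] be the continuous K-algebra homomorphism determined by φ(ξ_r) = η_r and, descending, φ(ξ_i) = η_i · φ(ξ_{i+1})^{ρ_i} for i = r−1,…,1 (so each φ(ξ_i) is a monomial in η_1,…,η_r), there exist α ∈ ℕ^r and a power series g ∈ K[[η_1,…,η_r]] with nonzero constant term (hence invertible) such that φ(f) = η^α · g. Moreover the ρ_i can be chosen so that ρ_i ≤ 1 + β_{i+1} for every i = 1,…,r−1, where β = (β_1,…,β_r) is the lexicographically smallest element of the support of f. -/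
/-- The exponent of the monomial `φ(ξ_i)` in the variables `η`, for the change of variables
`φ(ξ_r) = η_r`, `φ(ξ_i) = η_i · φ(ξ_{i+1})^(ρ_i)` (descending recursion, `0`-indexed). -/
noncomputable def expAux (r : ℕ) (ρ : Fin r → ℕ) : ℕ → (Fin r →₀ ℕ)
  | i =>
    if h : i < r then
      Finsupp.single ⟨i, h⟩ 1 +
        (if h1 : i + 1 < r then ρ ⟨i, h⟩ • expAux r ρ (i + 1) else 0)
    else 0
  termination_by i => r - i
  decreasing_by omega

/-- The exponent of the monomial `φ(ξ^n)` in the variables `η`. -/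
noncomputable def expMap (r : ℕ) (ρ : Fin r → ℕ) (n : Fin r →₀ ℕ) : Fin r →₀ ℕ :=
  n.sum fun i v => v • expAux r ρ (i : ℕ)



lemma expAux_apply_of_lt {r : ℕ} (ρ : Fin r → ℕ) (j : Fin r) :
    ∀ k i, r ≤ i + k → (j : ℕ) < i → expAux r ρ i j = 0 := by
  intro k
  induction k with
  | zero =>
    intro i hi hj
    rw [expAux, dif_neg (by omega)]
    rfl
  | succ k ih =>
    intro i hi hj
    rw [expAux]
    by_cases h : i < r
    · rw [dif_pos h, Finsupp.add_apply, Finsupp.single_apply,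
        if_neg (by simp only [Fin.ext_iff]; omega)]
      by_cases h1 : i + 1 < r
      · rw [dif_pos h1, Finsupp.smul_apply, ih (i+1) (by omega) (by omega)]
        simp
      · rw [dif_neg h1]; rfl
    · rw [dif_neg h]; rfl

lemma expAux_apply_zero {r : ℕ} (ρ : Fin r → ℕ) (j : Fin r) (i : ℕ) (h : (j : ℕ) < i) :
    expAux r ρ i j = 0 :=
  expAux_apply_of_lt ρ j r i (by omega) h

/-- The key estimate for the chosen `ρ`. -/
lemma expAux_key {r : ℕ} (β : Fin r →₀ ℕ) (ρ : Fin r → ℕ)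
    (hρ : ∀ (i : ℕ) (h1 : i + 1 < r), ρ ⟨i, by omega⟩ = 1 + β ⟨i + 1, h1⟩)
    (j : Fin r) :
    ∀ k d, (j : ℕ) ≤ d + k → d ≤ (j : ℕ) →
      1 + ∑ i ∈ Finset.Ico (d + 1) r,
            (if h : i < r then β ⟨i, h⟩ else 0) * expAux r ρ i j ≤ expAux r ρ d j := by
  intro k
  induction k with
  | zero =>
    intro d h1 h2
    have hd : d = (j : ℕ) := by omega
    have hsum : ∑ i ∈ Finset.Ico (d + 1) r,
        (if h : i < r then β ⟨i, h⟩ else 0) * expAux r ρ i j = 0 := by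
      apply Finset.sum_eq_zero
      intro i hi
      rw [Finset.mem_Ico] at hi
      rw [expAux_apply_zero ρ j i (by omega), mul_zero]
    rw [hsum]
    rw [expAux, dif_pos (by omega : d < r), Finsupp.add_apply, Finsupp.single_apply,
      if_pos (by exact Fin.ext hd)]
    omega
  | succ k ih =>
    intro d h1 h2
    by_cases hd : d = (j : ℕ)
    · -- same as base case
      have hsum : ∑ i ∈ Finset.Ico (d + 1) r,
          (if h : i < r then β ⟨i, h⟩ else 0) * expAux r ρ i j = 0 := by
        apply Finset.sum_eq_zero
        intro i hi
        rw [Finset.mem_Ico] at hi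
        rw [expAux_apply_zero ρ j i (by omega), mul_zero]
      rw [hsum]
      rw [expAux, dif_pos (by omega : d < r), Finsupp.add_apply, Finsupp.single_apply,
        if_pos (by exact Fin.ext hd)]
      omega
    · have hdj : d < (j : ℕ) := by omega
      have hd1 : d + 1 < r := by have := j.isLt; omega
      have hwd : expAux r ρ d j = (1 + β ⟨d + 1, hd1⟩) * expAux r ρ (d+1) j := by
        rw [expAux, dif_pos (by omega : d < r), Finsupp.add_apply, Finsupp.single_apply,
          if_neg (by simp only [Fin.ext_iff]; omega),
          dif_pos hd1, Finsupp.smul_apply, smul_eq_mul, hρ d hd1, zero_add]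
      have hsplit : ∑ i ∈ Finset.Ico (d + 1) r,
          (if h : i < r then β ⟨i, h⟩ else 0) * expAux r ρ i j
          = (if h : d + 1 < r then β ⟨d+1, h⟩ else 0) * expAux r ρ (d+1) j
            + ∑ i ∈ Finset.Ico (d + 2) r,
              (if h : i < r then β ⟨i, h⟩ else 0) * expAux r ρ i j := by
        rw [Finset.sum_eq_sum_Ico_succ_bot hd1]
      have hih := ih (d + 1) (by omega) (by omega)
      rw [hwd, hsplit, dif_pos hd1]
      nlinarith [hih]

lemma expMap_apply {r : ℕ} (ρ : Fin r → ℕ) (x : Fin r →₀ ℕ) (j : Fin r) :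
    expMap r ρ x j
      = ∑ i ∈ Finset.range r, (if h : i < r then x ⟨i, h⟩ else 0) * expAux r ρ i j := by
  have h1 : expMap r ρ x = ∑ i : Fin r, x i • expAux r ρ (i : ℕ) := by
    rw [expMap, Finsupp.sum_fintype]
    intro i; exact zero_smul ℕ _
  have h2 : expMap r ρ x j = ∑ i : Fin r, x i * expAux r ρ (i : ℕ) j := by
    rw [h1, Finsupp.finset_sum_apply]
    exact Finset.sum_congr rfl fun i _ => by rw [Finsupp.smul_apply, smul_eq_mul]
  rw [h2, ← Fin.sum_univ_eq_sum_range
    (fun i => (if h : i < r then x ⟨i, h⟩ else 0) * expAux r ρ i j) r]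
  exact Finset.sum_congr rfl fun i _ => by rw [dif_pos i.isLt, Fin.eta]

lemma expMap_le {r : ℕ} (β : Fin r →₀ ℕ) (ρ : Fin r → ℕ)
    (hρ : ∀ (i : ℕ) (h1 : i + 1 < r), ρ ⟨i, by omega⟩ = 1 + β ⟨i + 1, h1⟩)
    (n : Fin r →₀ ℕ) (d : Fin r) (heq : ∀ i : Fin r, i < d → n i = β i)
    (hlt : β d < n d) (j : Fin r) :
    expMap r ρ β j ≤ expMap r ρ n j := by
  rw [expMap_apply, expMap_apply]
  have hdr : (d : ℕ) < r := d.isLt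
  set B : ℕ → ℕ := fun i => (if h : i < r then β ⟨i, h⟩ else 0) with hB
  set N : ℕ → ℕ := fun i => (if h : i < r then n ⟨i, h⟩ else 0) with hN
  set w : ℕ → ℕ := fun i => (expAux r ρ i j : ℕ) with hw
  have hsplit : ∀ x : ℕ → ℕ, ∑ i ∈ Finset.range r, x i * w i
      = (∑ i ∈ Finset.Ico 0 (d : ℕ), x i * w i) + x d * w d
        + ∑ i ∈ Finset.Ico ((d : ℕ) + 1) r, x i * w i := by
    intro x
    rw [Finset.range_eq_Ico, ← Finset.sum_Ico_consecutive _ (Nat.zero_le (d : ℕ)) (le_of_lt hdr),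
      Finset.sum_eq_sum_Ico_succ_bot hdr]
    ring
  rw [hsplit B, hsplit N]
  have hhead : ∑ i ∈ Finset.Ico 0 (d : ℕ), B i * w i
      = ∑ i ∈ Finset.Ico 0 (d : ℕ), N i * w i := by
    apply Finset.sum_congr rfl
    intro i hi
    rw [Finset.mem_Ico] at hi
    have hir : i < r := by omega
    simp only [hB, hN, dif_pos hir]
    rw [heq ⟨i, hir⟩ (by exact hi.2)]
  have hNd : B (d : ℕ) + 1 ≤ N (d : ℕ) := by
    simp only [hB, hN, dif_pos hdr, Fin.eta]; omega
  rw [hhead]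
  by_cases hdj : (d : ℕ) ≤ (j : ℕ)
  · have hkey := expAux_key β ρ hρ j r (d : ℕ) (by have := j.isLt; omega) hdj
    have hsum_le : ∑ i ∈ Finset.Ico ((d : ℕ) + 1) r, B i * w i + 1 ≤ w d := by
      simp only [hB, hw]; omega
    nlinarith [Nat.zero_le (∑ i ∈ Finset.Ico ((d : ℕ) + 1) r, N i * w i)]
  · have hz : ∀ i, (d : ℕ) ≤ i → w i = 0 := fun i hi =>
      expAux_apply_zero ρ j i (by omega)
    have h1 : B (d : ℕ) * w d = 0 := by rw [hz _ le_rfl, mul_zero]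
    have h2 : ∑ i ∈ Finset.Ico ((d : ℕ) + 1) r, B i * w i = 0 := by
      apply Finset.sum_eq_zero
      intro i hi
      rw [Finset.mem_Ico] at hi
      rw [hz i (by omega), mul_zero]
    rw [h1, h2]
    omega

/-- **The monomialization lemma.**
Let `f ∈ K[[ξ₁,…,ξ_r]]` be nonzero with lexicographically smallest support element `β`.
Then there exist `ρ₁,…,ρ_{r-1} ∈ ℕ` with `ρ_i ≤ 1 + β_{i+1}` such that, `φ` being the
continuous `K`-algebra homomorphism with `φ(ξ_r) = η_r` and `φ(ξ_i) = η_i·φ(ξ_{i+1})^(ρ_i)`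
(so that the coefficient of `η^(expMap r ρ n)` in `φ(f)` is the coefficient of `ξ^n` in `f`,
and all other coefficients of `φ(f)` vanish), one has `φ(f) = η^α · g` for some `α ∈ ℕ^r`
and some `g` with nonzero constant coefficient. -/
theorem monomialization {K : Type*} [Field K] [CharZero K] {r : ℕ} (hr : 2 ≤ r)
    (f : MvPowerSeries (Fin r) K) (hf : f ≠ 0) (β : Fin r →₀ ℕ)
    (hβ : MvPowerSeries.coeff β f ≠ 0 ∧
      ∀ n, toLex n < toLex β → MvPowerSeries.coeff n f = 0) :
    ∃ ρ : Fin r → ℕ,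
      (∀ i : Fin r, (hi : (i : ℕ) + 1 < r) → ρ i ≤ 1 + β ⟨(i : ℕ) + 1, hi⟩) ∧
      ∀ F : MvPowerSeries (Fin r) K,
        ((∀ n, MvPowerSeries.coeff (expMap r ρ n) F = MvPowerSeries.coeff n f) ∧
          (∀ mon, (∀ n, expMap r ρ n ≠ mon) → MvPowerSeries.coeff mon F = 0)) →
        ∃ (α : Fin r →₀ ℕ) (g : MvPowerSeries (Fin r) K),
          MvPowerSeries.constantCoeff g ≠ 0 ∧
          F = (MvPowerSeries.monomial α) 1 * g := by
  classical
  set ρ : Fin r → ℕ := fun i => if h : (i : ℕ) + 1 < r then 1 + β ⟨(i : ℕ) + 1, h⟩ else 0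
    with hρdef
  have hρ : ∀ (i : ℕ) (h1 : i + 1 < r), ρ ⟨i, by omega⟩ = 1 + β ⟨i + 1, h1⟩ := by
    intro i h1
    simp only [hρdef, dif_pos h1]
  refine ⟨ρ, ?_, ?_⟩
  · intro i hi
    rw [hρ (i : ℕ) hi]
  · intro F ⟨hF1, hF2⟩
    set α : Fin r →₀ ℕ := expMap r ρ β with hα
    -- key: α is pointwise below expMap of any support element
    have hle : ∀ n, MvPowerSeries.coeff n f ≠ 0 → α ≤ expMap r ρ n := by
      intro n hn
      rcases eq_or_ne n β with rfl | hne
      · exact le_rfl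
      have h1 : ¬ (toLex n < toLex β) := fun h => hn (hβ.2 n h)
      have h2 : toLex β < toLex n := by
        rcases lt_trichotomy (toLex β) (toLex n) with h | h | h
        · exact h
        · exact absurd (toLex.injective h).symm hne
        · exact absurd h h1
      rw [Finsupp.Lex.lt_iff] at h2
      obtain ⟨d, hd1, hd2⟩ := h2
      rw [Finsupp.le_def]
      intro j
      exact expMap_le β ρ hρ n d (fun i hi => (hd1 i hi).symm) hd2 j
    set g : MvPowerSeries (Fin r) K := fun m => MvPowerSeries.coeff (α + m) F with hg
    have hgc : ∀ m, MvPowerSeries.coeff m g = MvPowerSeries.coeff (α + m) F := by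
      intro m
      rw [MvPowerSeries.coeff_apply]
    refine ⟨α, g, ?_, ?_⟩
    · rw [← MvPowerSeries.coeff_zero_eq_constantCoeff_apply, hgc, add_zero, hα, hF1 β]
      exact hβ.1
    · ext m
      rw [MvPowerSeries.coeff_monomial_mul]
      by_cases hm : α ≤ m
      · rw [if_pos hm, hgc, add_tsub_cancel_of_le hm, one_mul]
      · rw [if_neg hm]
        by_cases hex : ∃ n, expMap r ρ n = m
        · obtain ⟨n, hn⟩ := hex
          rw [← hn, hF1 n]
          by_contra hc
          exact hm (hn ▸ hle n hc)
        · exact hF2 m fun n hn => hex ⟨n, hn⟩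
end

section
/- Let A be an integral domain with fraction field F, let n ≥ 2 be an integer, and let M be an n×n matrix with entries in A whose rank as a matrix over F equals n − p for some 1 ≤ p < n. Then there exists a nonzero vector V ∈ A^n with M·V = 0 such that every nonzero entry of V is equal, up to sign, to the determinant of some (n−p)×(n−p) submatrix (a minor of order n−p) of M. -/
open Matrix Submodule Set Function Module

lemma aux_exists_subfamily {K W : Type*} [Field K] [AddCommGroup W] [Module K W]
    [FiniteDimensional K W] {ι : Type*} (v : ι → W) (r : ℕ)
    (h : r ≤ finrank K (Submodule.span K (Set.range v))) :
    ∃ f : Fin r → ι, Function.Injective f ∧ LinearIndependent K (v ∘ f) := by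
  obtain ⟨b, hb_sub, hb_span, hb_li⟩ := exists_linearIndependent K (Set.range v)
  have hbfin : b.Finite := hb_li.setFinite
  haveI := hbfin.fintype
  have hcard : Fintype.card b = finrank K (Submodule.span K b) := by
    have := linearIndependent_iff_card_eq_finrank_span.mp hb_li
    rwa [Set.finrank, Subtype.range_coe] at this
  have hr : r ≤ Fintype.card b := by rw [hcard, hb_span]; exact h
  let g : Fin r → b := (Fintype.equivFin b).symm ∘ Fin.castLE hr
  have hg : Function.Injective g :=
    (Fintype.equivFin b).symm.injective.comp (Fin.castLE_injective hr)
  have hchoice : ∀ k : Fin r, ∃ i : ι, v i = (g k : W) := fun k => hb_sub (g k).2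
  choose f hf using hchoice
  have hvf : v ∘ f = fun k => ((g k : W)) := funext fun k => hf k
  refine ⟨f, ?_, ?_⟩
  · intro a b' hab
    apply hg
    apply Subtype.ext
    rw [← hf a, ← hf b', hab]
  · rw [hvf]
    exact hb_li.comp g hg

lemma aux_exists_nonzero_minor {K : Type*} [Field K] {n : ℕ} (N : Matrix (Fin n) (Fin n) K)
    {r : ℕ} (h : r ≤ N.rank) :
    ∃ R C : Fin r → Fin n, Function.Injective R ∧ Function.Injective C ∧
      (N.submatrix R C).det ≠ 0 := by
  have h1 : r ≤ finrank K (Submodule.span K (Set.range N)) := by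
    exact h.trans (N.rank_eq_finrank_span_row).le
  obtain ⟨R, hRinj, hRli⟩ := aux_exists_subfamily N r h1
  have hN' : (N.submatrix R id).rank = r := by
    have : LinearIndependent K (N.submatrix R id) := hRli
    have h' := this.rank_matrix
    rw [Fintype.card_fin] at h'
    exact h'
  have h2 : r ≤ finrank K (Submodule.span K (Set.range (N.submatrix R id)ᵀ)) := by
    exact (hN'.symm.trans ((N.submatrix R id).rank_eq_finrank_span_cols)).le
  obtain ⟨C, hCinj, hCli⟩ := aux_exists_subfamily (N.submatrix R id)ᵀ r h2
  refine ⟨R, C, hRinj, hCinj, ?_⟩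
  have hli : LinearIndependent K ((N.submatrix R C)ᵀ) := hCli
  have hu : IsUnit (N.submatrix R C)ᵀ := linearIndependent_rows_iff_isUnit.mp hli
  have hd : (N.submatrix R C)ᵀ.det ≠ 0 := ((Matrix.isUnit_iff_isUnit_det _).mp hu).ne_zero
  rwa [Matrix.det_transpose] at hd

lemma aux_det_submatrix_eq_zero {K : Type*} [Field K] {n r : ℕ} (N : Matrix (Fin n) (Fin n) K)
    (h : N.rank < r) (f g : Fin r → Fin n) (hg : Function.Injective g) :
    (N.submatrix f g).det = 0 := by
  by_contra hd
  have hu : IsUnit (N.submatrix f g) :=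
    (Matrix.isUnit_iff_isUnit_det _).mpr (isUnit_iff_ne_zero.mpr hd)
  have hli : LinearIndependent K (N.submatrix f g) := linearIndependent_rows_iff_isUnit.mpr hu
  have hli2 : LinearIndependent K (fun i => N (f i)) := by
    apply LinearIndependent.of_comp (LinearMap.funLeft K K g)
    exact hli
  have hcard : Fintype.card (Fin r) = Set.finrank K (Set.range fun i => N (f i)) :=
    linearIndependent_iff_card_eq_finrank_span.mp hli2
  have hle : Set.finrank K (Set.range fun i => N (f i)) ≤ N.rank := by
    rw [N.rank_eq_finrank_span_row]
    exact Submodule.finrank_mono (Submodule.span_mono (Set.range_comp_subset_range f N))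
  rw [Fintype.card_fin] at hcard
  omega

/-- **A kernel vector made of minors.**  Let `A` be an integral domain with fraction field `F`,
`n ≥ 2`, and `M` an `n × n` matrix over `A` of rank `n - p` over `F`, with `1 ≤ p < n`.
Then there is a nonzero vector `V ∈ Aⁿ` with `M · V = 0` whose nonzero entries are, up to
sign, minors of order `n - p` of `M`. -/
theorem kernel_vector_of_minors {A : Type*} [CommRing A] [IsDomain A]
    {n p : ℕ} (hn : 2 ≤ n) (hp1 : 1 ≤ p) (hpn : p < n)
    (M : Matrix (Fin n) (Fin n) A)
    (hrank : (M.map (algebraMap A (FractionRing A))).rank = n - p) :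
    ∃ V : Fin n → A, V ≠ 0 ∧ M.mulVec V = 0 ∧
      ∀ i, V i ≠ 0 → ∃ (rsel csel : Fin (n - p) → Fin n),
        Function.Injective rsel ∧ Function.Injective csel ∧
        (V i = (M.submatrix rsel csel).det ∨ V i = -(M.submatrix rsel csel).det) := by
  classical
  set F := FractionRing A
  have halg : Function.Injective (algebraMap A F) := IsFractionRing.injective A F
  set N := M.map (algebraMap A F) with hN
  set r := n - p with hr
  have hr1 : 1 ≤ r := by omega
  have hrn : r < n := by omega
  -- nonzero minor of order r
  obtain ⟨R, C, hRinj, hCinj, hdet⟩ := aux_exists_nonzero_minor N (r := r) hrank.ge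
  -- a column index outside the range of C
  have hnotsurj : ¬ Function.Surjective C := by
    intro hs
    have := Fintype.card_le_of_surjective C hs
    simp only [Fintype.card_fin] at this
    omega
  rw [Function.Surjective] at hnotsurj
  push_neg at hnotsurj
  obtain ⟨j₀, hj₀⟩ := hnotsurj
  set C' : Fin (r + 1) → Fin n := Fin.snoc C j₀ with hC'
  have hC'inj : Function.Injective C' := by
    intro a b hab
    induction a using Fin.lastCases with
    | last =>
      induction b using Fin.lastCases with
      | last => rfl
      | cast b =>
        simp only [hC', Fin.snoc_last, Fin.snoc_castSucc] at hab
        exact absurd hab.symm (hj₀ b)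
    | cast a =>
      induction b using Fin.lastCases with
      | last =>
        simp only [hC', Fin.snoc_last, Fin.snoc_castSucc] at hab
        exact absurd hab (hj₀ a)
      | cast b =>
        simp only [hC', Fin.snoc_castSucc] at hab
        exact congrArg Fin.castSucc (hCinj hab)
  -- the candidate cofactor values
  set c : Fin (r + 1) → A :=
    fun k => (-1 : A) ^ (k : ℕ) * (M.submatrix R (C' ∘ Fin.succAbove k)).det with hc
  set V : Fin n → A := fun j => ∑ k, if C' k = j then c k else 0 with hV
  -- value of V at points of C'
  have hVC' : ∀ k, V (C' k) = c k := by
    intro k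
    rw [hV]
    simp only
    rw [Finset.sum_eq_single k]
    · simp
    · intro b _ hb
      rw [if_neg fun h => hb (hC'inj h)]
    · simp
  -- the last entry is (up to sign) the nonzero minor
  have hClast : C' ∘ Fin.castSucc = C := by
    funext a
    simp [hC']
  have hMdet : (M.submatrix R C).det ≠ 0 := by
    intro h0
    apply hdet
    have : (N.submatrix R C) = (M.submatrix R C).map (algebraMap A F) := by
      ext a b; simp [hN]
    rw [this]
    rw [show (M.submatrix R C).map (algebraMap A F)
        = (algebraMap A F).mapMatrix (M.submatrix R C) from rfl]
    rw [← RingHom.map_det, h0, map_zero]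
  have hclast : c (Fin.last r) ≠ 0 := by
    rw [hc]
    simp only [Fin.succAbove_last, hClast, Fin.val_last]
    intro h0
    rcases mul_eq_zero.mp h0 with h | h
    · exact pow_ne_zero _ (neg_ne_zero.mpr one_ne_zero) h
    · exact hMdet h
  have hVne : V ≠ 0 := by
    intro h0
    apply hclast
    rw [← hVC' (Fin.last r), h0, Pi.zero_apply]
  -- M · V = 0
  have hmul : M.mulVec V = 0 := by
    funext i
    -- the bordered matrix
    set B : Matrix (Fin (r + 1)) (Fin (r + 1)) A :=
      Matrix.of (fun a b => M ((Fin.cons i R : Fin (r + 1) → Fin n) a) (C' b)) with hB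
    have hmv : M.mulVec V i = B.det := by
      rw [Matrix.det_succ_row_zero]
      have : M.mulVec V i = ∑ k, M i (C' k) * c k := by
        simp only [Matrix.mulVec, dotProduct, hV, Finset.mul_sum, mul_ite, mul_zero]
        rw [Finset.sum_comm]
        refine Finset.sum_congr rfl fun k _ => ?_
        rw [Finset.sum_eq_single (C' k)]
        · simp
        · intro b _ hb
          rw [if_neg fun h => hb h.symm]
        · simp
      rw [this]
      refine Finset.sum_congr rfl fun k _ => ?_
      have hB0 : B 0 k = M i (C' k) := by simp [hB]
      have hBsub : B.submatrix Fin.succ k.succAbove = M.submatrix R (C' ∘ k.succAbove) := by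
        ext a b
        simp [hB]
      rw [hB0, hBsub, hc]
      ring
    have hBdet : B.det = 0 := by
      by_cases hinj : Function.Injective (Fin.cons i R : Fin (r + 1) → Fin n)
      · apply halg
        rw [map_zero, RingHom.map_det]
        have : B.map (algebraMap A F) = N.submatrix (Fin.cons i R) C' := by
          ext a b
          simp [hB, hN]
        rw [show ((algebraMap A F).mapMatrix B) = B.map (algebraMap A F) from rfl, this]
        exact aux_det_submatrix_eq_zero N (by rw [hrank]; omega) _ _ hC'inj
      · rw [Function.not_injective_iff] at hinj
        obtain ⟨a, b, hab, hne⟩ := hinj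
        refine Matrix.det_zero_of_row_eq hne ?_
        funext y
        simp [hB, hab]
    rw [Pi.zero_apply, hmv, hBdet]
  refine ⟨V, hVne, hmul, fun i hVi => ?_⟩
  -- nonzero entries are signed minors
  have : ∃ k, C' k = i := by
    by_contra hk
    push_neg at hk
    apply hVi
    rw [hV]
    simp only
    exact Finset.sum_eq_zero fun k _ => if_neg (hk k)
  obtain ⟨k, rfl⟩ := this
  rw [hVC' k] at hVi ⊢
  refine ⟨R, C' ∘ k.succAbove, hRinj, hC'inj.comp Fin.succAbove_right_injective, ?_⟩
  have hbeta : c k = (-1 : A) ^ (k : ℕ) * (M.submatrix R (C' ∘ k.succAbove)).det := rfl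
  rw [hbeta]
  rcases Nat.even_or_odd (k : ℕ) with he | ho
  · left; rw [he.neg_one_pow, one_mul]
  · right; rw [ho.neg_one_pow, neg_one_mul]
end

section
/- Let d_x, d, δ_x, δ be positive integers. Let P, Q ∈ K[x_1,…,x_r][y] be nonzero polynomials with deg_x P ≤ d_x, deg_y P ≤ d, deg_x Q ≤ δ_x, deg_y Q ≤ δ. Let c_0 ∈ K[[x_1,…,x_r]] be a formal power series such that P(x, c_0) = 0 and Q(x, c_0) ≠ 0. Then ord(Q(x, c_0)) ≤ δ_x·d + d_x·δ. -/
open Polynomial MvPolynomial Matrix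

namespace OrderBoundAux

variable {K : Type*} [Field K] {r : ℕ}

/-- maximal total degree in `x` of the coefficients -/
noncomputable def xdeg (f : Polynomial (MvPolynomial (Fin r) K)) : ℕ :=
  f.support.sup fun i => (f.coeff i).totalDegree

lemma coeff_le_xdeg (f : Polynomial (MvPolynomial (Fin r) K)) (i : ℕ) :
    (f.coeff i).totalDegree ≤ xdeg f := by
  by_cases h : i ∈ f.support
  · exact Finset.le_sup (f := fun j => (f.coeff j).totalDegree) h
  · rw [Polynomial.notMem_support_iff.mp h, totalDegree_zero]
    exact Nat.zero_le _

lemma xdeg_le {f : Polynomial (MvPolynomial (Fin r) K)} {a : ℕ}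
    (h : ∀ i, (f.coeff i).totalDegree ≤ a) : xdeg f ≤ a :=
  Finset.sup_le fun i _ => h i

lemma degree_add (u v : Fin r →₀ ℕ) : (u + v).degree = u.degree + v.degree := by
  simp only [Finsupp.degree_eq_weight_one]
  exact map_add _ u v

lemma hc_totalDegree_ne_zero {p : MvPolynomial (Fin r) K} (hp : p ≠ 0) :
    homogeneousComponent p.totalDegree p ≠ 0 := by
  obtain ⟨d, hd, hdeg⟩ := p.support.exists_mem_eq_sup (MvPolynomial.support_nonempty.mpr hp)
    (fun s => s.sum fun _ e => e)
  have hdd : d.degree = p.totalDegree := by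
    rw [MvPolynomial.totalDegree, hdeg]; rfl
  intro h
  have := congrArg (MvPolynomial.coeff d) h
  rw [coeff_homogeneousComponent, if_pos hdd] at this
  exact (MvPolynomial.mem_support_iff.mp hd) (by simpa using this)

lemma hc_mul {p q : MvPolynomial (Fin r) K} {a b : ℕ} (hp : p.totalDegree ≤ a)
    (hq : q.totalDegree ≤ b) :
    homogeneousComponent (a + b) (p * q) =
      homogeneousComponent a p * homogeneousComponent b q := by
  ext d
  rw [coeff_homogeneousComponent, MvPolynomial.coeff_mul, MvPolynomial.coeff_mul]
  simp only [coeff_homogeneousComponent]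
  split_ifs with h
  · refine Finset.sum_congr rfl fun x hx => ?_
    rw [Finset.HasAntidiagonal.mem_antidiagonal] at hx
    have hsum : x.1.degree + x.2.degree = a + b := by rw [← degree_add, hx, h]
    by_cases h1 : x.1.degree = a
    · have h2 : x.2.degree = b := by omega
      rw [if_pos h1, if_pos h2]
    · rcases lt_or_gt_of_ne h1 with hlt | hgt
      · have h2 : b < x.2.degree := by omega
        have hz : MvPolynomial.coeff x.2 q = 0 := by
          apply coeff_eq_zero_of_totalDegree_lt
          calc q.totalDegree ≤ b := hq
            _ < x.2.degree := h2
            _ = ∑ i ∈ x.2.support, x.2 i := rfl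
        simp [hz]
      · have hz : MvPolynomial.coeff x.1 p = 0 := by
          apply coeff_eq_zero_of_totalDegree_lt
          calc p.totalDegree ≤ a := hp
            _ < x.1.degree := hgt
            _ = ∑ i ∈ x.1.support, x.1 i := rfl
        simp [hz]
  · symm
    refine Finset.sum_eq_zero fun x hx => ?_
    rw [Finset.HasAntidiagonal.mem_antidiagonal] at hx
    by_cases h1 : x.1.degree = a
    · by_cases h2 : x.2.degree = b
      · exfalso; apply h; rw [← hx, degree_add, h1, h2]
      · rw [if_neg h2, mul_zero]
    · rw [if_neg h1, zero_mul]

noncomputable def topPart (a : ℕ) (f : Polynomial (MvPolynomial (Fin r) K)) :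
    Polynomial (MvPolynomial (Fin r) K) :=
  ∑ i ∈ f.support, Polynomial.C (homogeneousComponent a (f.coeff i)) * Polynomial.X ^ i

lemma coeff_topPart (a : ℕ) (f : Polynomial (MvPolynomial (Fin r) K)) (k : ℕ) :
    (topPart a f).coeff k = homogeneousComponent a (f.coeff k) := by
  rw [topPart, finset_sum_coeff]
  simp only [Polynomial.coeff_C_mul, Polynomial.coeff_X_pow, mul_ite, mul_one, mul_zero]
  rw [Finset.sum_ite_eq f.support k (fun i => homogeneousComponent a (f.coeff i))]
  split_ifs with h
  · rfl
  · rw [Polynomial.notMem_support_iff.mp h, map_zero]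

lemma topPart_mul {f g : Polynomial (MvPolynomial (Fin r) K)} :
    topPart (xdeg f + xdeg g) (f * g) = topPart (xdeg f) f * topPart (xdeg g) g := by
  apply Polynomial.ext
  intro k
  rw [coeff_topPart, Polynomial.coeff_mul, Polynomial.coeff_mul,
    map_sum (homogeneousComponent (xdeg f + xdeg g)) _ (Finset.HasAntidiagonal.antidiagonal k)]
  refine Finset.sum_congr rfl fun x _ => ?_
  rw [coeff_topPart, coeff_topPart]
  exact hc_mul (coeff_le_xdeg f x.1) (coeff_le_xdeg g x.2)

lemma topPart_ne_zero {f : Polynomial (MvPolynomial (Fin r) K)} (hf : f ≠ 0) :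
    topPart (xdeg f) f ≠ 0 := by
  obtain ⟨i, hi, hideg⟩ := f.support.exists_mem_eq_sup
    (Polynomial.support_nonempty.mpr hf) (fun i => (f.coeff i).totalDegree)
  intro h
  have := congrArg (fun p => Polynomial.coeff p i) h
  simp only [coeff_topPart, Polynomial.coeff_zero] at this
  rw [xdeg, hideg] at this
  exact hc_totalDegree_ne_zero (Polynomial.mem_support_iff.mp hi) this

lemma xdeg_mul {f g : Polynomial (MvPolynomial (Fin r) K)} (hf : f ≠ 0) (hg : g ≠ 0) :
    xdeg (f * g) = xdeg f + xdeg g := by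
  refine le_antisymm (xdeg_le fun k => ?_) ?_
  · rw [Polynomial.coeff_mul]
    refine le_trans (totalDegree_finset_sum _ _) (Finset.sup_le fun x _ => ?_)
    exact le_trans (totalDegree_mul _ _)
      (add_le_add (coeff_le_xdeg f x.1) (coeff_le_xdeg g x.2))
  · have hne : topPart (xdeg f + xdeg g) (f * g) ≠ 0 := by
      rw [topPart_mul]
      exact mul_ne_zero (topPart_ne_zero hf) (topPart_ne_zero hg)
    obtain ⟨k, hk⟩ : ∃ k, (topPart (xdeg f + xdeg g) (f * g)).coeff k ≠ 0 := by
      by_contra h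
      push_neg at h
      exact hne (Polynomial.ext h)
    rw [coeff_topPart] at hk
    have : xdeg f + xdeg g ≤ ((f * g).coeff k).totalDegree := by
      by_contra h
      exact hk (homogeneousComponent_eq_zero _ _ (lt_of_not_ge h))
    exact le_trans this (coeff_le_xdeg _ _)

lemma eq_C_of_totalDegree_eq_zero {p : MvPolynomial (Fin r) K} (h : p.totalDegree = 0) :
    p = MvPolynomial.C (MvPolynomial.coeff 0 p) := by
  ext m
  rw [MvPolynomial.coeff_C]
  by_cases hm : m = 0
  · subst hm; simp
  · rw [if_neg (fun he => hm he.symm)]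
    by_contra hc
    have hms : m ∈ p.support := MvPolynomial.mem_support_iff.mpr hc
    have := (totalDegree_eq_zero_iff _ p).mp h m hms
    exact hm (Finsupp.ext this)

lemma one_le_of_not_unit {g : Polynomial (MvPolynomial (Fin r) K)} (hg : g ≠ 0)
    (hng : ¬ IsUnit g) : 1 ≤ g.natDegree + xdeg g := by
  by_contra h
  push_neg at h
  have h1 : g.natDegree = 0 := by omega
  have h2 : xdeg g = 0 := by omega
  have hgC : g = Polynomial.C (g.coeff 0) := Polynomial.eq_C_of_natDegree_eq_zero h1
  have h3 : (g.coeff 0).totalDegree = 0 := le_antisymm (h2 ▸ coeff_le_xdeg g 0) (Nat.zero_le _)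
  have h4 : g.coeff 0 = MvPolynomial.C (MvPolynomial.coeff 0 (g.coeff 0)) :=
    eq_C_of_totalDegree_eq_zero h3
  have h5 : g.coeff 0 ≠ 0 := fun hc => hg (by rw [hgC, hc, map_zero])
  apply hng
  rw [hgC, h4]
  have h6 : MvPolynomial.coeff 0 (g.coeff 0) ≠ 0 := fun hc => h5 (by rw [h4, hc, map_zero])
  exact (Polynomial.isUnit_C).mpr
    (IsUnit.map (MvPolynomial.C : K →+* MvPolynomial (Fin r) K) (isUnit_iff_ne_zero.mpr h6))

/-- helper: coefficient of a linear combination `∑ C (c i) * X^i`. -/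
lemma coeff_comb {k : ℕ} (c : Fin k → MvPolynomial (Fin r) K) (j : Fin k) :
    (∑ i : Fin k, Polynomial.C (c i) * Polynomial.X ^ (i : ℕ)).coeff (j : ℕ) = c j := by
  rw [finset_sum_coeff]
  simp only [Polynomial.coeff_C_mul, Polynomial.coeff_X_pow, mul_ite, mul_one, mul_zero]
  rw [Finset.sum_eq_single j]
  · rw [if_pos rfl]
  · intro b _ hb
    rw [if_neg (fun h => hb (Fin.ext h.symm))]
  · intro h; exact absurd (Finset.mem_univ j) h

lemma natDegree_comb_le {k : ℕ} (c : Fin k → MvPolynomial (Fin r) K) (a : ℕ) (hk : k ≤ a + 1) :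
    (∑ i : Fin k, Polynomial.C (c i) * Polynomial.X ^ (i : ℕ)).natDegree ≤ a := by
  apply Polynomial.natDegree_sum_le_of_forall_le
  intro i _
  exact le_trans (Polynomial.natDegree_C_mul_X_pow_le _ _) (by omega)

theorem sylvester (P Q : Polynomial (MvPolynomial (Fin r) K)) (hP0 : P ≠ 0) (hQ0 : Q ≠ 0)
    (hn : 1 ≤ P.natDegree) :
    (∃ D : MvPolynomial (Fin r) K, D ≠ 0 ∧
        D.totalDegree ≤ Q.natDegree * xdeg P + P.natDegree * xdeg Q ∧
        ∃ A B : Polynomial (MvPolynomial (Fin r) K), Polynomial.C D = A * P + B * Q) ∨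
      (∃ A B : Polynomial (MvPolynomial (Fin r) K),
        A * P + B * Q = 0 ∧ A ≠ 0 ∧ B ≠ 0 ∧ B.natDegree < P.natDegree) := by
  classical
  set n := P.natDegree with hnn
  set m := Q.natDegree with hmm
  -- the common index type
  let ι := Fin m ⊕ Fin n
  let e : ι → ℕ := fun c => ((finSumFinEquiv c : Fin (m + n)) : ℕ)
  have he_lt : ∀ c, e c < m + n := fun c => (finSumFinEquiv c).isLt
  have he_inj : Function.Injective e := fun a b h =>
    finSumFinEquiv.injective (Fin.ext h)
  -- row data
  let R0 : ι → Polynomial (MvPolynomial (Fin r) K) := Sum.elim (fun _ => P) (fun _ => Q)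
  let idx : ι → ℕ := Sum.elim Fin.val Fin.val
  have hrowdeg : ∀ row, idx row + (R0 row).natDegree < m + n := by
    rintro (i | i)
    · simp only [R0, idx, Sum.elim_inl]
      have := i.isLt
      omega
    · simp only [R0, idx, Sum.elim_inr]
      have := i.isLt
      omega
  -- the Sylvester matrix
  let S : Matrix ι ι (MvPolynomial (Fin r) K) := fun row c =>
    if idx row ≤ e c then (R0 row).coeff (e c - idx row) else 0
  -- the key polynomial identity for the rows
  have key : ∀ row, (∑ c : ι, Polynomial.C (S row c) * Polynomial.X ^ (e c)) =
      Polynomial.X ^ (idx row) * R0 row := by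
    intro row
    apply Polynomial.ext
    intro t
    rw [finset_sum_coeff]
    simp only [Polynomial.coeff_C_mul, Polynomial.coeff_X_pow, mul_ite, mul_one, mul_zero]
    by_cases ht : t < m + n
    · -- only the term c = finSumFinEquiv.symm ⟨t, ht⟩ contributes
      rw [Finset.sum_eq_single (finSumFinEquiv.symm ⟨t, ht⟩)]
      · have het : e (finSumFinEquiv.symm ⟨t, ht⟩) = t := by
          simp [e]
        rw [if_pos het.symm]
        simp only [S]
        rw [het, mul_comm (Polynomial.X ^ (idx row)) (R0 row), Polynomial.coeff_mul_X_pow']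
      · intro b _ hb
        rw [if_neg]
        intro h
        apply hb
        apply he_inj
        rw [← h]
        simp [e]
      · intro h; exact absurd (Finset.mem_univ _) h
    · rw [Finset.sum_eq_zero, eq_comm]
      · apply Polynomial.coeff_eq_zero_of_natDegree_lt
        refine lt_of_le_of_lt ?_ (lt_of_lt_of_le (hrowdeg row) (le_of_not_gt ht))
        refine le_trans (Polynomial.natDegree_mul_le) ?_
        simp [Polynomial.natDegree_X_pow]
      · intro c _
        rw [if_neg]
        intro h
        exact ht (h ▸ he_lt c)
  by_cases hdet : S.det = 0
  · -- kernel vector gives a relation A * P + B * Q = 0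
    right
    obtain ⟨u, hu0, hu⟩ := (Matrix.exists_vecMul_eq_zero_iff).mpr hdet
    let A : Polynomial (MvPolynomial (Fin r) K) :=
      ∑ i : Fin m, Polynomial.C (u (Sum.inl i)) * Polynomial.X ^ (i : ℕ)
    let B : Polynomial (MvPolynomial (Fin r) K) :=
      ∑ i : Fin n, Polynomial.C (u (Sum.inr i)) * Polynomial.X ^ (i : ℕ)
    have hid : A * P + B * Q = 0 := by
      have h1 : A * P + B * Q =
          ∑ row : ι, Polynomial.C (u row) * (Polynomial.X ^ (idx row) * R0 row) := by
        rw [Fintype.sum_sum_type]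
        simp only [A, B, Finset.sum_mul]
        refine congrArg₂ (· + ·) ?_ ?_
        · refine Finset.sum_congr rfl fun i _ => ?_
          simp only [idx, R0, Sum.elim_inl]
          ring
        · refine Finset.sum_congr rfl fun i _ => ?_
          simp only [idx, R0, Sum.elim_inr]
          ring
      rw [h1]
      have h2 : ∀ row : ι, Polynomial.X ^ (idx row) * R0 row =
          ∑ c : ι, Polynomial.C (S row c) * Polynomial.X ^ (e c) := fun row => (key row).symm
      calc ∑ row : ι, Polynomial.C (u row) * (Polynomial.X ^ (idx row) * R0 row)
          = ∑ row : ι, ∑ c : ι, Polynomial.C (u row) * (Polynomial.C (S row c) * Polynomial.X ^ (e c)) := by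
            refine Finset.sum_congr rfl fun row _ => ?_
            rw [h2 row, Finset.mul_sum]
        _ = ∑ c : ι, Polynomial.C ((u ᵥ* S) c) * Polynomial.X ^ (e c) := by
            rw [Finset.sum_comm]
            refine Finset.sum_congr rfl fun c _ => ?_
            have : (u ᵥ* S) c = ∑ row : ι, u row * S row c := rfl
            rw [this, map_sum, Finset.sum_mul]
            refine Finset.sum_congr rfl fun row _ => ?_
            rw [_root_.map_mul]; ring
        _ = 0 := by
            rw [hu]
            simp
    have hBu : ∀ i : Fin n, B.coeff (i : ℕ) = u (Sum.inr i) := fun i => coeff_comb _ i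
    have hAu : ∀ i : Fin m, A.coeff (i : ℕ) = u (Sum.inl i) := fun i => coeff_comb _ i
    have hB0 : B ≠ 0 := by
      intro hB
      have hA0 : A ≠ 0 := by
        intro hA
        apply hu0
        funext row
        rcases row with i | i
        · rw [← hAu i, hA, Polynomial.coeff_zero]; rfl
        · rw [← hBu i, hB, Polynomial.coeff_zero]; rfl
      rw [hB, zero_mul, add_zero] at hid
      exact hA0 ((mul_eq_zero.mp hid).resolve_right hP0)
    have hA0 : A ≠ 0 := by
      intro hA
      rw [hA, zero_mul, zero_add] at hid
      exact hB0 ((mul_eq_zero.mp hid).resolve_right hQ0)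
    refine ⟨A, B, hid, hA0, hB0, ?_⟩
    have : B.natDegree ≤ n - 1 := natDegree_comb_le _ _ (by omega)
    omega
  · -- nonzero resultant
    left
    refine ⟨S.det, hdet, ?_, ?_⟩
    · -- degree bound
      rw [Matrix.det_apply]
      refine le_trans (totalDegree_finset_sum _ _) (Finset.sup_le fun σ _ => ?_)
      have hsmul : ∀ (v : ℤˣ) (x : MvPolynomial (Fin r) K),
          (v • x).totalDegree = x.totalDegree := by
        intro v x
        rcases Int.units_eq_one_or v with h | h <;> subst h
        · rw [one_smul]
        · have : (-1 : ℤˣ) • x = -x := by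
            rw [Units.neg_smul, one_smul]
          rw [this, totalDegree_neg]
      rw [hsmul]
      refine le_trans (totalDegree_finset_prod _ _) ?_
      have hentry : ∀ row c, (S row c).totalDegree ≤
          Sum.elim (fun _ : Fin m => xdeg P) (fun _ : Fin n => xdeg Q) row := by
        intro row c
        rcases row with i | i <;> simp only [S, Sum.elim_inl, Sum.elim_inr] <;> split_ifs
        · exact coeff_le_xdeg P _
        · simp
        · exact coeff_le_xdeg Q _
        · simp
      refine le_trans (Finset.sum_le_sum fun i _ => hentry (σ i) i) ?_
      rw [Equiv.sum_comp σ (Sum.elim (fun _ : Fin m => xdeg P) (fun _ : Fin n => xdeg Q))]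
      rw [Fintype.sum_sum_type]
      simp [Finset.sum_const, mul_comm]
    · -- Bezout identity via adjugate
      let S' : Matrix ι ι (Polynomial (MvPolynomial (Fin r) K)) :=
        (Polynomial.C).mapMatrix S
      let w : ι → Polynomial (MvPolynomial (Fin r) K) := fun c => Polynomial.X ^ (e c)
      let v : ι → Polynomial (MvPolynomial (Fin r) K) := fun row =>
        Polynomial.X ^ (idx row) * R0 row
      have h1 : S' *ᵥ w = v := by
        funext row
        have : (S' *ᵥ w) row = ∑ c : ι, Polynomial.C (S row c) * Polynomial.X ^ (e c) := by
          simp [Matrix.mulVec, dotProduct, S', w]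
        rw [this]
        exact key row
      have h2 : S'.adjugate *ᵥ v = Polynomial.C S.det • w := by
        rw [← h1, Matrix.mulVec_mulVec, Matrix.adjugate_mul]
        rw [Matrix.smul_mulVec, Matrix.one_mulVec]
        congr 1
        rw [RingHom.map_det]
      -- index with e = 0
      have hmn : 0 < m + n := by omega
      let c0 : ι := finSumFinEquiv.symm ⟨0, hmn⟩
      have hec0 : e c0 = 0 := by simp [e, c0]
      have h3 : Polynomial.C S.det =
          ∑ row : ι, S'.adjugate c0 row * v row := by
        have := congrFun h2 c0
        simp only [Pi.smul_apply, w, hec0, pow_zero, smul_eq_mul, mul_one] at this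
        rw [← this]
        rfl
      rw [Fintype.sum_sum_type] at h3
      refine ⟨∑ i : Fin m, S'.adjugate c0 (Sum.inl i) * Polynomial.X ^ (i : ℕ),
        ∑ i : Fin n, S'.adjugate c0 (Sum.inr i) * Polynomial.X ^ (i : ℕ), ?_⟩
      rw [h3, Finset.sum_mul, Finset.sum_mul]
      refine congrArg₂ (· + ·) ?_ ?_
      · refine Finset.sum_congr rfl fun i _ => ?_
        simp only [v, idx, R0, Sum.elim_inl]
        ring
      · refine Finset.sum_congr rfl fun i _ => ?_
        simp only [v, idx, R0, Sum.elim_inr]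
        ring


lemma degree_finsupp_eq (d : Fin r →₀ ℕ) : d.degree = d.sum fun _ e => e := rfl

lemma coe_ne_zero {p : MvPolynomial (Fin r) K} (hp : p ≠ 0) :
    (MvPolynomial.coeToMvPowerSeries.ringHom p : MvPowerSeries (Fin r) K) ≠ 0 := by
  intro h
  apply hp
  apply MvPolynomial.coe_injective (Fin r) K
  rw [show ((p : MvPolynomial (Fin r) K) : MvPowerSeries (Fin r) K) =
    MvPolynomial.coeToMvPowerSeries.ringHom p from rfl, h]
  rfl

lemma order_coe_le {p : MvPolynomial (Fin r) K} (hp : p ≠ 0) :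
    (MvPolynomial.coeToMvPowerSeries.ringHom p : MvPowerSeries (Fin r) K).order
      ≤ (p.totalDegree : ℕ∞) := by
  obtain ⟨d, hd⟩ := (MvPolynomial.support_nonempty.mpr hp)
  have hco : MvPowerSeries.coeff d (MvPolynomial.coeToMvPowerSeries.ringHom p) ≠ 0 := by
    have : MvPowerSeries.coeff d (MvPolynomial.coeToMvPowerSeries.ringHom p)
        = MvPolynomial.coeff d p := MvPolynomial.coeff_coe p d
    rw [this]
    exact MvPolynomial.mem_support_iff.mp hd
  refine le_trans (MvPowerSeries.order_le hco) ?_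
  rw [Nat.cast_le, degree_finsupp_eq]
  exact MvPolynomial.le_totalDegree hd

lemma deg_zero_contra {c0 : MvPowerSeries (Fin r) K}
    {P : Polynomial (MvPolynomial (Fin r) K)} (hP : P ≠ 0) (h0 : P.natDegree = 0)
    (hroot : Polynomial.eval₂ MvPolynomial.coeToMvPowerSeries.ringHom c0 P = 0) : False := by
  have hPC : P = Polynomial.C (P.coeff 0) := Polynomial.eq_C_of_natDegree_eq_zero h0
  have h1 : P.coeff 0 ≠ 0 := fun h => hP (by rw [hPC, h, map_zero])
  apply coe_ne_zero h1
  rw [← Polynomial.eval₂_C MvPolynomial.coeToMvPowerSeries.ringHom c0 (a := P.coeff 0), ← hPC, hroot]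

theorem aux (c0 : MvPowerSeries (Fin r) K) :
    ∀ M : ℕ, ∀ P Q : Polynomial (MvPolynomial (Fin r) K),
      P.natDegree + xdeg P ≤ M → P ≠ 0 → Q ≠ 0 →
      Polynomial.eval₂ MvPolynomial.coeToMvPowerSeries.ringHom c0 P = 0 →
      Polynomial.eval₂ MvPolynomial.coeToMvPowerSeries.ringHom c0 Q ≠ 0 →
      MvPowerSeries.order (Polynomial.eval₂ MvPolynomial.coeToMvPowerSeries.ringHom c0 Q)
        ≤ ((Q.natDegree * xdeg P + P.natDegree * xdeg Q : ℕ) : ℕ∞) := by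
  intro M
  induction M with
  | zero =>
    intro P Q hM hP hQ hroot hne
    exact absurd hroot (fun h => deg_zero_contra hP (by omega) h)
  | succ M ih =>
    intro P Q hM hP hQ hroot hne
    by_cases hn0 : P.natDegree = 0
    · exact absurd hroot (fun h => deg_zero_contra hP hn0 h)
    have hn : 1 ≤ P.natDegree := Nat.one_le_iff_ne_zero.mpr hn0
    rcases sylvester P Q hP hQ hn with ⟨D, hD, hDdeg, A, B, hid⟩ | ⟨A, B, hid, hA, hB, hBdeg⟩
    · -- nonzero resultant case
      have hEq : (MvPolynomial.coeToMvPowerSeries.ringHom D : MvPowerSeries (Fin r) K) =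
          Polynomial.eval₂ MvPolynomial.coeToMvPowerSeries.ringHom c0 B *
            Polynomial.eval₂ MvPolynomial.coeToMvPowerSeries.ringHom c0 Q := by
        have := congrArg (Polynomial.eval₂ MvPolynomial.coeToMvPowerSeries.ringHom c0) hid
        rwa [Polynomial.eval₂_C, Polynomial.eval₂_add, Polynomial.eval₂_mul,
          Polynomial.eval₂_mul, hroot, mul_zero, zero_add] at this
      calc MvPowerSeries.order (Polynomial.eval₂ MvPolynomial.coeToMvPowerSeries.ringHom c0 Q)
          ≤ MvPowerSeries.order (Polynomial.eval₂ MvPolynomial.coeToMvPowerSeries.ringHom c0 B)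
            + MvPowerSeries.order (Polynomial.eval₂ MvPolynomial.coeToMvPowerSeries.ringHom c0 Q) :=
            le_add_self
        _ ≤ MvPowerSeries.order (Polynomial.eval₂ MvPolynomial.coeToMvPowerSeries.ringHom c0 B *
              Polynomial.eval₂ MvPolynomial.coeToMvPowerSeries.ringHom c0 Q) :=
            MvPowerSeries.le_order_mul
        _ = (MvPolynomial.coeToMvPowerSeries.ringHom D : MvPowerSeries (Fin r) K).order := by
            rw [hEq]
        _ ≤ (D.totalDegree : ℕ∞) := order_coe_le hD
        _ ≤ _ := Nat.cast_le.mpr hDdeg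
    · -- common factor case
      letI : StrongNormalizationMonoid (Polynomial (MvPolynomial (Fin r) K)) :=
        UniqueFactorizationMonoid.normalizationMonoid
      letI : StrongNormalizedGCDMonoid (Polynomial (MvPolynomial (Fin r) K)) :=
        UniqueFactorizationMonoid.toStrongNormalizedGCDMonoid _
      have hPdvd : P ∣ B * Q := ⟨-A, by linear_combination hid⟩
      by_cases hu : IsUnit (gcd P Q)
      · exfalso
        have h1 : P ∣ gcd (Q * B) (P * B) :=
          dvd_gcd (by rwa [mul_comm Q B]) (dvd_mul_right P B)
        rw [gcd_mul_right] at h1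
        have h2 : IsUnit (gcd Q P) := by rw [gcd_comm Q P]; exact hu
        have h3 : P ∣ normalize B := (h2.dvd_mul_left).mp h1
        have h4 : P ∣ B := dvd_normalize_iff.mp h3
        have := Polynomial.natDegree_le_of_dvd h4 hB
        omega
      · obtain ⟨P₁, hP₁⟩ := gcd_dvd_left P Q
        obtain ⟨Q₁, hQ₁⟩ := gcd_dvd_right P Q
        have hg0 : gcd P Q ≠ 0 := fun h => hP (by rw [hP₁, h, zero_mul])
        have hP₁0 : P₁ ≠ 0 := fun h => hP (by rw [hP₁, h, mul_zero])
        have hEg : Polynomial.eval₂ MvPolynomial.coeToMvPowerSeries.ringHom c0 (gcd P Q) ≠ 0 := by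
          intro h
          apply hne
          rw [hQ₁, Polynomial.eval₂_mul, h, zero_mul]
        have hEP₁ : Polynomial.eval₂ MvPolynomial.coeToMvPowerSeries.ringHom c0 P₁ = 0 := by
          have h := hroot
          rw [hP₁, Polynomial.eval₂_mul] at h
          exact (mul_eq_zero.mp h).resolve_left hEg
        have hdeg : P.natDegree = (gcd P Q).natDegree + P₁.natDegree := by
          have h := Polynomial.natDegree_mul hg0 hP₁0
          rw [← hP₁] at h
          exact h
        have hxdeg : xdeg P = xdeg (gcd P Q) + xdeg P₁ := by
          have h := xdeg_mul hg0 hP₁0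
          rw [← hP₁] at h
          exact h
        have hmeas : 1 ≤ (gcd P Q).natDegree + xdeg (gcd P Q) := one_le_of_not_unit hg0 hu
        have hM' : P₁.natDegree + xdeg P₁ ≤ M := by omega
        refine le_trans (ih P₁ Q hM' hP₁0 hQ hEP₁ hne) (Nat.cast_le.mpr ?_)
        exact add_le_add (Nat.mul_le_mul le_rfl (by omega)) (Nat.mul_le_mul (by omega) le_rfl)

end OrderBoundAux

/-- **Order bound for a polynomial evaluated at an algebraic power series.**
Let `P, Q ∈ K[x₁,…,x_r][y]` be nonzero with `deg_x P ≤ d_x`, `deg_y P ≤ d`,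
`deg_x Q ≤ δ_x`, `deg_y Q ≤ δ`.  If `c₀ ∈ K[[x₁,…,x_r]]` satisfies `P(x, c₀) = 0` and
`Q(x, c₀) ≠ 0`, then `ord (Q(x, c₀)) ≤ δ_x·d + d_x·δ`. -/
theorem order_le_of_algebraic {K : Type*} [Field K] [CharZero K] [IsAlgClosed K]
    {r : ℕ} (hr : 1 ≤ r) (dx d δx δ : ℕ) (hdx : 0 < dx) (hd : 0 < d) (hδx : 0 < δx) (hδ : 0 < δ)
    (P Q : Polynomial (MvPolynomial (Fin r) K)) (hP : P ≠ 0) (hQ : Q ≠ 0)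
    (hPx : ∀ n, (P.coeff n).totalDegree ≤ dx) (hPy : P.natDegree ≤ d)
    (hQx : ∀ n, (Q.coeff n).totalDegree ≤ δx) (hQy : Q.natDegree ≤ δ)
    (c0 : MvPowerSeries (Fin r) K)
    (hroot : Polynomial.eval c0 (P.map MvPolynomial.coeToMvPowerSeries.ringHom) = 0)
    (hne : Polynomial.eval c0 (Q.map MvPolynomial.coeToMvPowerSeries.ringHom) ≠ 0) :
    MvPowerSeries.order (Polynomial.eval c0 (Q.map MvPolynomial.coeToMvPowerSeries.ringHom))
      ≤ (δx * d + dx * δ : ℕ) := by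
  rw [Polynomial.eval_map] at hroot hne ⊢
  refine le_trans
    (OrderBoundAux.aux c0 (P.natDegree + OrderBoundAux.xdeg P) P Q le_rfl hP hQ hroot hne) ?_
  rw [Nat.cast_le]
  have h1 : OrderBoundAux.xdeg P ≤ dx := OrderBoundAux.xdeg_le hPx
  have h2 : OrderBoundAux.xdeg Q ≤ δx := OrderBoundAux.xdeg_le hQx
  calc Q.natDegree * OrderBoundAux.xdeg P + P.natDegree * OrderBoundAux.xdeg Q
      ≤ δ * dx + d * δx := add_le_add (Nat.mul_le_mul hQy h1) (Nat.mul_le_mul hPy h2)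
    _ = δx * d + dx * δ := by ring
end

section
/- Let i ≥ 1, d_s ∈ ℕ and d' ≥ 3. Let y_0',…,y_i' ∈ K[[s_1,…,s_τ]] be power series, not all zero, such that for each j = 0,…,i there is a nonzero polynomial P_j ∈ K[s, z_0,…,z_j] with deg_s P_j ≤ d_s and deg_{z_k} P_j ≤ d' for all k = 0,…,j, satisfying P_j(s, y_0',…,y_j') = 0 while P_j(s, y_0',…,y_{j−1}', z_j) is not identically zero. Let K' and L' be finite sets of pairs (k,l) ∈ ℕ^τ × ℕ^{i+1} such that every element (k,l) of K' has l ≠ 0, every element of L' has l = 0, K' is nonempty, |k| ≤ d_s for all (k,l) ∈ K'∪L', and l_j ≤ d' for all (k,l) ∈ K' and all j. Set N := 2 · 3^{1 + d' + (d')² + ⋯ + (d')^{i−1}} · d_s · (d')^{1 + d' + (d')² + ⋯ + (d')^{i}}. Then there exists a nonzero polynomial with coefficients in K, with support contained in K'∪L', vanishing at (s, y_0',…,y_i'), if and only if there exists a family (a_{k,l})_{(k,l)∈K'} of elements of K, not all zero, such that for every m ∈ ℕ^τ with (m,0) ∉ L' and |m| ≤ N, the coefficient of s^m in Σ_{(k,l)∈K'}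 a_{k,l} s^k (y_0')^{l_0}⋯(y_i')^{l_i} is zero. -/
/-- Substitution of the power series `c j` for the variables `z j` in a polynomial of
`K[s₁,…,s_τ, z₀,…,z_{m-1}]`. -/
noncomputable def substSeries {K : Type*} [Field K] {τ m : ℕ}
    (c : Fin m → MvPowerSeries (Fin τ) K) (Q : MvPolynomial (Fin τ ⊕ Fin m) K) :
    MvPowerSeries (Fin τ) K :=
  MvPolynomial.aeval (Sum.elim (fun a => (MvPowerSeries.X a : MvPowerSeries (Fin τ) K)) c) Q

/-- Substitution of `c k` for `z k` for every `k ≠ j`, keeping `z j` as a polynomial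
variable. -/
noncomputable def substExcept {K : Type*} [Field K] {τ m : ℕ}
    (c : Fin m → MvPowerSeries (Fin τ) K) (j : Fin m) (Q : MvPolynomial (Fin τ ⊕ Fin m) K) :
    Polynomial (MvPowerSeries (Fin τ) K) :=
  MvPolynomial.aeval (Sum.elim (fun a => Polynomial.C (MvPowerSeries.X a))
    (fun k => if k = j then Polynomial.X else Polynomial.C (c k))) Q



section Sylv
open Polynomial Matrix
variable {B : Type*} [CommRing B]

noncomputable def wzSyl (p q : Polynomial B) (n m : ℕ) :
    Matrix (Fin (m + n)) (Fin (m + n)) B :=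
  fun ρ c =>
    if (ρ : ℕ) < m then
      (if (c : ℕ) ≤ n + (ρ : ℕ) then p.coeff (n + (ρ : ℕ) - (c : ℕ)) else 0)
    else
      (if (c : ℕ) ≤ (ρ : ℕ) then q.coeff ((ρ : ℕ) - (c : ℕ)) else 0)

lemma wz_rowsum (u : Polynomial B) (d N e : ℕ) (hd : u.natDegree ≤ d)
    (hdN : d + e + 1 = N) :
    ∑ c ∈ Finset.range N,
        (if c ≤ d then Polynomial.C (u.coeff (d - c)) else 0) * Polynomial.X ^ (N - 1 - c)
      = Polynomial.X ^ e * u := by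
  have h1 : ∀ c ∈ Finset.range N,
      (if c ≤ d then C (u.coeff (d - c)) else 0) * X ^ (N - 1 - c)
        = if c ≤ d then C (u.coeff (d - c)) * X ^ (N - 1 - c) else 0 := by
    intro c _; split <;> simp
  rw [Finset.sum_congr rfl h1, ← Finset.sum_filter]
  have h2 : (Finset.range N).filter (fun c => c ≤ d) = Finset.range (d + 1) := by
    ext c; simp only [Finset.mem_filter, Finset.mem_range]; omega
  rw [h2]
  have h3 : ∀ c ∈ Finset.range (d + 1),
      C (u.coeff (d - c)) * X ^ (N - 1 - c)
        = (fun k => C (u.coeff k) * X ^ (e + k)) (d + 1 - 1 - c) := by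
    intro c hc
    simp only [Finset.mem_range] at hc
    have hc' : d + 1 - 1 - c = d - c := by omega
    have he : N - 1 - c = e + (d - c) := by omega
    rw [hc', he]
  rw [Finset.sum_congr rfl h3,
    Finset.sum_range_reflect (fun k => C (u.coeff k) * X ^ (e + k)) (d + 1)]
  have h4 : ∀ k ∈ Finset.range (d + 1), C (u.coeff k) * X ^ (e + k)
      = X ^ e * (monomial k (u.coeff k)) := by
    intro k _
    rw [pow_add, ← C_mul_X_pow_eq_monomial]; ring
  rw [Finset.sum_congr rfl h4, ← Finset.mul_sum, ← Polynomial.as_sum_range' u (d + 1) (by omega)]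

lemma wz_row_eq (p q : Polynomial B) (n m : ℕ) (hn : p.natDegree ≤ n)
    (hm : q.natDegree ≤ m) (ρ : Fin (m + n)) :
    ∑ c : Fin (m + n), Polynomial.C (wzSyl p q n m ρ c) * Polynomial.X ^ (m + n - 1 - (c : ℕ))
      = if (ρ : ℕ) < m then Polynomial.X ^ (m - 1 - (ρ : ℕ)) * p
        else Polynomial.X ^ (m + n - 1 - (ρ : ℕ)) * q := by
  by_cases hρ : (ρ : ℕ) < m
  · rw [if_pos hρ]
    have h0 : ∀ c : Fin (m + n),
        C (wzSyl p q n m ρ c) * X ^ (m + n - 1 - (c : ℕ))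
          = (fun c : ℕ => (if c ≤ n + (ρ : ℕ) then C (p.coeff (n + (ρ : ℕ) - c)) else 0)
              * X ^ (m + n - 1 - c)) (c : ℕ) := by
      intro c
      simp only [wzSyl, if_pos hρ]
      split <;> simp
    rw [Finset.sum_congr rfl (fun c _ => h0 c),
      Fin.sum_univ_eq_sum_range (fun c : ℕ => (if c ≤ n + (ρ : ℕ) then C (p.coeff (n + (ρ : ℕ) - c)) else 0)
        * X ^ (m + n - 1 - c)) (m + n)]
    exact wz_rowsum p (n + ρ) (m + n) (m - 1 - ρ) (le_trans hn (by omega)) (by omega)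
  · rw [if_neg hρ]
    have h0 : ∀ c : Fin (m + n),
        C (wzSyl p q n m ρ c) * X ^ (m + n - 1 - (c : ℕ))
          = (fun c : ℕ => (if c ≤ (ρ : ℕ) then C (q.coeff ((ρ : ℕ) - c)) else 0)
              * X ^ (m + n - 1 - c)) (c : ℕ) := by
      intro c
      simp only [wzSyl, if_neg hρ]
      split <;> simp
    rw [Finset.sum_congr rfl (fun c _ => h0 c),
      Fin.sum_univ_eq_sum_range (fun c : ℕ => (if c ≤ (ρ : ℕ) then C (q.coeff ((ρ : ℕ) - c)) else 0)
        * X ^ (m + n - 1 - c)) (m + n)]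
    exact wz_rowsum q (ρ : ℕ) (m + n) (m + n - 1 - ρ) (le_trans hm (by omega)) (by omega)

lemma wz_det_comb (p q : Polynomial B) (n m : ℕ) (hn : p.natDegree ≤ n)
    (hm : q.natDegree ≤ m) (hN : 1 ≤ m + n) :
    ∃ a b : Polynomial B, Polynomial.C ((wzSyl p q n m).det) = a * p + b * q := by
  classical
  set N := m + n with hNdef
  set M : Matrix (Fin (m + n)) (Fin (m + n)) (Polynomial B) :=
    (Polynomial.C (R := B)).mapMatrix (wzSyl p q n m) with hM
  set v : Fin (m + n) → Polynomial B := fun c => Polynomial.X ^ (m + n - 1 - (c : ℕ)) with hv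
  have hrow : ∀ ρ, (M.mulVec v) ρ
      = if (ρ : ℕ) < m then Polynomial.X ^ (m - 1 - (ρ : ℕ)) * p
        else Polynomial.X ^ (m + n - 1 - (ρ : ℕ)) * q := by
    intro ρ
    rw [← wz_row_eq p q n m hn hm ρ]
    simp [Matrix.mulVec, dotProduct, hM, hv]
  have hadj : M.adjugate.mulVec (M.mulVec v) = M.det • v := by
    rw [Matrix.mulVec_mulVec, Matrix.adjugate_mul, Matrix.smul_mulVec, Matrix.one_mulVec]
  set last : Fin (m + n) := ⟨m + n - 1, by omega⟩ with hlast
  have h1 : (M.det • v) last = M.det := by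
    simp [hv, hlast]
  have h2 : M.det = Polynomial.C ((wzSyl p q n m).det) := by
    rw [RingHom.map_det]
  have h3 : M.adjugate.mulVec (M.mulVec v) last
      = ∑ ρ, M.adjugate last ρ * (M.mulVec v) ρ := by
    simp [Matrix.mulVec, dotProduct]
  refine ⟨∑ ρ : Fin (m + n), (if (ρ : ℕ) < m then M.adjugate last ρ * Polynomial.X ^ (m - 1 - (ρ : ℕ)) else 0),
    ∑ ρ : Fin (m + n), (if (ρ : ℕ) < m then 0 else M.adjugate last ρ * Polynomial.X ^ (m + n - 1 - (ρ : ℕ))), ?_⟩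
  rw [← h2, ← h1, ← congrFun hadj last, h3]
  rw [Finset.sum_mul, Finset.sum_mul, ← Finset.sum_add_distrib]
  refine Finset.sum_congr rfl fun ρ _ => ?_
  rw [hrow ρ]
  by_cases hρ : (ρ : ℕ) < m
  · rw [if_pos hρ, if_pos hρ, if_pos hρ]; ring
  · rw [if_neg hρ, if_neg hρ, if_neg hρ]; ring



lemma wz_card_lt (m n : ℕ) :
    (Finset.univ.filter fun c : Fin (m + n) => (c : ℕ) < m).card = m := by
  have h : (Finset.univ.filter fun c : Fin (m + n) => (c : ℕ) < m)
      = Finset.image (Fin.castAdd n) Finset.univ := by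
    ext x
    simp only [Finset.mem_filter, Finset.mem_univ, true_and, Finset.mem_image]
    constructor
    · intro hx; exact ⟨⟨(x : ℕ), hx⟩, Fin.ext (by simp)⟩
    · rintro ⟨a, rfl⟩; simp
  rw [h, Finset.card_image_of_injective _
    (fun a b hab => Fin.ext (by have := congrArg Fin.val hab; simpa using this)),
    Finset.card_univ, Fintype.card_fin]

lemma wz_card_ge (m n : ℕ) :
    (Finset.univ.filter fun c : Fin (m + n) => m ≤ (c : ℕ)).card = n := by
  have h : (Finset.univ.filter fun c : Fin (m + n) => m ≤ (c : ℕ))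
      = Finset.image (Fin.natAdd m) Finset.univ := by
    ext x
    simp only [Finset.mem_filter, Finset.mem_univ, true_and, Finset.mem_image]
    constructor
    · intro hx
      refine ⟨⟨(x : ℕ) - m, by omega⟩, ?_⟩
      apply Fin.ext
      simp [Fin.natAdd]
      omega
    · rintro ⟨a, rfl⟩; simp
  rw [h, Finset.card_image_of_injective _
    (fun a b hab => Fin.ext (by have := congrArg Fin.val hab; simp [Fin.natAdd] at this; omega)),
    Finset.card_univ, Fintype.card_fin]

lemma wz_det_coeff_top [Nontrivial B] (p q : Polynomial B) (m : ℕ) :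
    ((wzSyl (p.map Polynomial.C) (q.map Polynomial.C - Polynomial.C Polynomial.X)
        p.natDegree m).det).coeff p.natDegree
      = p.leadingCoeff ^ m * (-1 : B) ^ p.natDegree := by
  classical
  set n := p.natDegree with hn
  set M := wzSyl (p.map (Polynomial.C (R := B)))
    (q.map Polynomial.C - Polynomial.C Polynomial.X) n m with hM
  have hqc : ∀ k, (q.map (Polynomial.C (R := B)) - Polynomial.C Polynomial.X).coeff k
      = Polynomial.C (q.coeff k) - (if k = 0 then Polynomial.X else 0) := by
    intro k
    rw [Polynomial.coeff_sub, Polynomial.coeff_map, Polynomial.coeff_C]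
  have hentry_deg : ∀ ρ c : Fin (m + n),
      (M ρ c).natDegree ≤ if ((ρ : ℕ) = (c : ℕ) ∧ m ≤ (c : ℕ)) then 1 else 0 := by
    intro ρ c
    by_cases hρ : (ρ : ℕ) < m
    · have h0 : (M ρ c).natDegree = 0 := by
        simp only [hM, wzSyl, if_pos hρ]
        split
        · rw [Polynomial.coeff_map]; exact Polynomial.natDegree_C _
        · exact Polynomial.natDegree_zero
      have : ¬ ((ρ : ℕ) = (c : ℕ) ∧ m ≤ (c : ℕ)) := by rintro ⟨h1, h2⟩; omega
      rw [if_neg this]; omega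
    · simp only [hM, wzSyl, if_neg hρ]
      by_cases hc : (c : ℕ) ≤ (ρ : ℕ)
      · rw [if_pos hc, hqc]
        by_cases hec : (ρ : ℕ) = (c : ℕ)
        · have h0 : (ρ : ℕ) - (c : ℕ) = 0 := by omega
          rw [h0]
          have hone : (if ((ρ:ℕ) = (c:ℕ) ∧ m ≤ (c:ℕ)) then (1:ℕ) else 0) = 1 :=
            if_pos ⟨hec, by omega⟩
          rw [hone]
          refine le_trans (Polynomial.natDegree_sub_le _ _) ?_
          rw [max_le_iff, Polynomial.natDegree_C]
          refine ⟨by omega, ?_⟩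
          split
          · exact Polynomial.natDegree_X_le
          · simp
        · have : (ρ : ℕ) - (c : ℕ) ≠ 0 := by omega
          rw [if_neg this, sub_zero]
          have := Polynomial.natDegree_C (q.coeff ((ρ:ℕ) - (c:ℕ)))
          split <;> omega
      · rw [if_neg hc]
        split <;> simp
  rw [Matrix.det_apply, Polynomial.finset_sum_coeff]
  rw [Finset.sum_eq_single (1 : Equiv.Perm (Fin (m + n)))]
  · -- main term
    have hsign : Equiv.Perm.sign (1 : Equiv.Perm (Fin (m + n))) = 1 := Equiv.Perm.sign_one
    rw [hsign, one_smul]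
    have h1 : ∀ c : Fin (m + n), M ((1 : Equiv.Perm (Fin (m+n))) c) c = M c c := fun c => rfl
    rw [Finset.prod_congr rfl (fun c _ => h1 c)]
    rw [← Finset.prod_filter_mul_prod_filter_not Finset.univ (fun c : Fin (m + n) => (c : ℕ) < m)]
    have hA : ∀ c ∈ Finset.univ.filter (fun c : Fin (m + n) => (c : ℕ) < m),
        M c c = Polynomial.C p.leadingCoeff := by
      intro c hc
      simp only [Finset.mem_filter] at hc
      simp only [hM, wzSyl, if_pos hc.2]
      rw [if_pos (by omega), Nat.add_sub_cancel, Polynomial.coeff_map]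
      rfl
    have hB : ∀ c ∈ Finset.univ.filter (fun c : Fin (m + n) => ¬ (c : ℕ) < m),
        M c c = Polynomial.C (q.coeff 0) - Polynomial.X := by
      intro c hc
      simp only [Finset.mem_filter] at hc
      simp only [hM, wzSyl, if_neg hc.2]
      rw [if_pos (le_refl _), Nat.sub_self, hqc, if_pos rfl]
    rw [Finset.prod_congr rfl hA, Finset.prod_congr rfl hB, Finset.prod_const,
      Finset.prod_const, wz_card_lt]
    have hfilt : (Finset.univ.filter fun c : Fin (m + n) => ¬ (c : ℕ) < m)
        = Finset.univ.filter fun c : Fin (m + n) => m ≤ (c : ℕ) := by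
      apply Finset.filter_congr
      intro c _
      simp [not_lt]
    have hcard2 : (Finset.univ.filter fun c : Fin (m + n) => ¬ (c : ℕ) < m).card = n := by
      rw [hfilt]; exact wz_card_ge m n
    rw [hcard2]
    have hneg : Polynomial.C (q.coeff 0) - Polynomial.X = -(Polynomial.X - Polynomial.C (q.coeff 0)) := by ring
    have e1 : (Polynomial.C p.leadingCoeff) ^ m = Polynomial.C (p.leadingCoeff ^ m) := by
      rw [← _root_.map_pow]
    have hC1 : ((-1 : Polynomial B)) ^ n = Polynomial.C ((-1 : B) ^ n) := by
      rw [_root_.map_pow, _root_.map_neg, Polynomial.C_1]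
    rw [e1, hneg, neg_pow, hC1]
    rw [Polynomial.coeff_C_mul, Polynomial.coeff_C_mul]
    have hmonic : ((Polynomial.X - Polynomial.C (q.coeff 0)) ^ n).coeff n = 1 := by
      have h2 := (Polynomial.monic_X_sub_C (q.coeff 0)).pow n
      have h3 : ((Polynomial.X - Polynomial.C (q.coeff 0)) ^ n).natDegree = n := by
        rw [(Polynomial.monic_X_sub_C (q.coeff 0)).natDegree_pow, Polynomial.natDegree_X_sub_C,
          mul_one]
      have := h2.coeff_natDegree
      rwa [h3] at this
    rw [hmonic, mul_one, mul_comm]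
  · -- other permutations
    intro σ _ hσ1
    suffices h : (∏ c, M (σ c) c).coeff n = 0 by
      rcases Int.units_eq_one_or (Equiv.Perm.sign σ) with hs | hs
      · rw [hs, one_smul, h]
      · rw [hs, Units.neg_smul, one_smul, Polynomial.coeff_neg, h, neg_zero]
    by_cases hfix : ∀ c : Fin (m + n), m ≤ (c : ℕ) → σ c = c
    · -- all q-columns fixed; find a p-column pushed up
      have hplt : ∀ c : Fin (m + n), (c : ℕ) < m → ((σ c : ℕ)) < m := by
        intro c hc
        by_contra h
        have h2 := hfix (σ c) (le_of_not_gt h)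
        have h3 : σ c = c := σ.injective h2
        omega
      have hex : ∃ c : Fin (m + n), (c : ℕ) < m ∧ (c : ℕ) < ((σ c : ℕ)) := by
        by_contra h
        push_neg at h
        have hid : ∀ k : ℕ, ∀ c : Fin (m + n), (c : ℕ) = k → σ c = c := by
          intro k
          induction k using Nat.strong_induction_on with
          | _ k ih =>
            intro c hck
            by_cases hcm : (c : ℕ) < m
            · have h1 : ((σ c : ℕ)) ≤ (c : ℕ) := h c hcm
              rcases lt_or_eq_of_le h1 with h2 | h2
              · have h3 := ih ((σ c : ℕ)) (by omega) (σ c) rfl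
                have h4 : σ c = c := σ.injective h3
                exact h4
              · exact Fin.ext h2
            · exact hfix c (le_of_not_gt hcm)
        exact hσ1 (Equiv.ext fun c => hid (c : ℕ) c rfl)
      obtain ⟨c0, hc0m, hc0lt⟩ := hex
      have hzero : M (σ c0) c0 = 0 := by
        have hrow : ((σ c0 : ℕ)) < m := hplt c0 hc0m
        simp only [hM, wzSyl, if_pos hrow]
        rw [if_pos (by omega), Polynomial.coeff_map,
          p.coeff_eq_zero_of_natDegree_lt (by omega), map_zero]
      have hprod : (∏ c : Fin (m + n), M (σ c) c) = 0 :=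
        Finset.prod_eq_zero (Finset.mem_univ c0) hzero
      rw [hprod, Polynomial.coeff_zero]
    · push_neg at hfix
      obtain ⟨j0, hj0m, hj0ne⟩ := hfix
      apply Polynomial.coeff_eq_zero_of_natDegree_lt
      have hstep1 : (∏ c, M (σ c) c).natDegree ≤ ∑ c : Fin (m + n), (M (σ c) c).natDegree :=
        Polynomial.natDegree_prod_le _ _
      have hstep2 : ∑ c : Fin (m + n), (M (σ c) c).natDegree
          ≤ ∑ c : Fin (m + n), (if (m ≤ (c : ℕ) ∧ σ c = c) then 1 else 0) := by
        apply Finset.sum_le_sum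
        intro c _
        refine le_trans (hentry_deg (σ c) c) ?_
        by_cases h1 : ((σ c : ℕ)) = (c : ℕ)
        · have h2 : σ c = c := Fin.ext h1
          simp [h1, h2]
        · rw [if_neg (by tauto)]
          have : ¬ (m ≤ (c:ℕ) ∧ σ c = c) := by
            rintro ⟨_, h3⟩; exact h1 (by rw [h3])
          rw [if_neg this]
      have hstep3 : ∑ c : Fin (m + n), (if (m ≤ (c : ℕ) ∧ σ c = c) then 1 else 0)
          = (Finset.univ.filter fun c : Fin (m + n) => m ≤ (c : ℕ) ∧ σ c = c).card := by
        rw [Finset.sum_boole]; simp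
      have hsub : (Finset.univ.filter fun c : Fin (m + n) => m ≤ (c : ℕ) ∧ σ c = c)
          ⊆ (Finset.univ.filter fun c : Fin (m + n) => m ≤ (c : ℕ)).erase j0 := by
        intro c hc
        simp only [Finset.mem_filter, Finset.mem_univ, true_and] at hc
        rw [Finset.mem_erase]
        refine ⟨?_, by simp [hc.1]⟩
        rintro rfl
        exact hj0ne hc.2
      have hcard : ((Finset.univ.filter fun c : Fin (m + n) => m ≤ (c : ℕ)).erase j0).card
          = n - 1 := by
        rw [Finset.card_erase_of_mem (by simp [hj0m]), wz_card_ge]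
      have hn1 : 1 ≤ n := by
        have := j0.isLt; omega
      have := Finset.card_le_card hsub
      omega
  · intro h
    exact absurd (Finset.mem_univ _) h


end Sylv



section Main
variable {K : Type*} [Field K] {τ i : ℕ}

/-- Degree conditions on a polynomial: total `s`-degree at most `S`, each `z`-degree at most
`Z`, and the variables `z_j` for `j ≥ r` do not occur. -/
def wzCond (r S Z : ℕ) (F : MvPolynomial (Fin τ ⊕ Fin (i + 1)) K) : Prop :=
  ∀ mon ∈ F.support, (∑ a : Fin τ, mon (Sum.inl a)) ≤ S ∧
    (∀ j : Fin (i + 1), mon (Sum.inr j) ≤ Z) ∧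
    (∀ j : Fin (i + 1), r ≤ (j : ℕ) → mon (Sum.inr j) = 0)

/-- The class of power series that are values at `(s, y')` of polynomials satisfying
`wzCond r S Z`. -/
def Wcl (y' : Fin (i + 1) → MvPowerSeries (Fin τ) K) (r S Z : ℕ)
    (f : MvPowerSeries (Fin τ) K) : Prop :=
  ∃ F, wzCond r S Z F ∧ substSeries y' F = f

variable {y' : Fin (i + 1) → MvPowerSeries (Fin τ) K}

lemma wzCond_mono {r S Z r' S' Z' : ℕ} {F : MvPolynomial (Fin τ ⊕ Fin (i + 1)) K}
    (hr : r ≤ r') (hS : S ≤ S') (hZ : Z ≤ Z') (h : wzCond r S Z F) : wzCond r' S' Z' F := by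
  intro mon hmon
  obtain ⟨h1, h2, h3⟩ := h mon hmon
  exact ⟨le_trans h1 hS, fun j => le_trans (h2 j) hZ, fun j hj => h3 j (le_trans hr hj)⟩

lemma Wcl_mono {r S Z r' S' Z' : ℕ} {f : MvPowerSeries (Fin τ) K}
    (hr : r ≤ r') (hS : S ≤ S') (hZ : Z ≤ Z') (h : Wcl y' r S Z f) : Wcl y' r' S' Z' f := by
  obtain ⟨F, hF, rfl⟩ := h
  exact ⟨F, wzCond_mono hr hS hZ hF, rfl⟩

lemma Wcl_zero (r S Z : ℕ) : Wcl y' r S Z 0 :=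
  ⟨0, by intro mon hmon; simp at hmon, by simp [substSeries]⟩

lemma Wcl_algebraMap (r S Z : ℕ) (c : K) : Wcl y' r S Z ((algebraMap K _) c) := by
  refine ⟨MvPolynomial.C c, ?_, by simp [substSeries]⟩
  intro mon hmon
  classical
  by_cases hc : c = 0
  · simp [hc] at hmon
  · rw [show (MvPolynomial.C c : MvPolynomial (Fin τ ⊕ Fin (i+1)) K)
      = MvPolynomial.monomial 0 c from rfl, MvPolynomial.support_monomial] at hmon
    rw [if_neg hc] at hmon
    simp only [Finset.mem_singleton] at hmon
    subst hmon
    simp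

lemma Wcl_one (r S Z : ℕ) : Wcl y' r S Z 1 := by
  have := Wcl_algebraMap (y' := y') r S Z 1
  rwa [map_one] at this

lemma Wcl_add {r S Z : ℕ} {f g : MvPowerSeries (Fin τ) K}
    (hf : Wcl y' r S Z f) (hg : Wcl y' r S Z g) : Wcl y' r S Z (f + g) := by
  classical
  obtain ⟨F, hF, rfl⟩ := hf
  obtain ⟨G, hG, rfl⟩ := hg
  refine ⟨F + G, ?_, by simp [substSeries]⟩
  intro mon hmon
  rcases Finset.mem_union.1 (MvPolynomial.support_add hmon) with h | h
  · exact hF mon h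
  · exact hG mon h

lemma Wcl_neg {r S Z : ℕ} {f : MvPowerSeries (Fin τ) K}
    (hf : Wcl y' r S Z f) : Wcl y' r S Z (-f) := by
  obtain ⟨F, hF, rfl⟩ := hf
  refine ⟨-F, ?_, by simp [substSeries]⟩
  intro mon hmon
  rw [MvPolynomial.support_neg] at hmon
  exact hF mon hmon

lemma Wcl_mul {r S Z S' Z' : ℕ} {f g : MvPowerSeries (Fin τ) K}
    (hf : Wcl y' r S Z f) (hg : Wcl y' r S' Z' g) : Wcl y' r (S + S') (Z + Z') (f * g) := by
  classical
  obtain ⟨F, hF, rfl⟩ := hf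
  obtain ⟨G, hG, rfl⟩ := hg
  refine ⟨F * G, ?_, by simp [substSeries]⟩
  intro mon hmon
  have := MvPolynomial.support_mul F G hmon
  rw [Finset.mem_add] at this
  obtain ⟨mf, hmf, mg, hmg, rfl⟩ := this
  obtain ⟨hF1, hF2, hF3⟩ := hF mf hmf
  obtain ⟨hG1, hG2, hG3⟩ := hG mg hmg
  refine ⟨?_, fun j => ?_, fun j hj => ?_⟩
  · simp only [Finsupp.add_apply]
    rw [Finset.sum_add_distrib]
    omega
  · simp only [Finsupp.add_apply]
    exact add_le_add (hF2 j) (hG2 j)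
  · simp only [Finsupp.add_apply]
    rw [hF3 j hj, hG3 j hj]

lemma Wcl_sum {r S Z : ℕ} {α : Type*} (s : Finset α) (f : α → MvPowerSeries (Fin τ) K)
    (h : ∀ x ∈ s, Wcl y' r S Z (f x)) : Wcl y' r S Z (∑ x ∈ s, f x) := by
  classical
  induction s using Finset.induction_on with
  | empty => simpa using Wcl_zero r S Z
  | insert x s hx ih =>
    rw [Finset.sum_insert hx]
    exact Wcl_add (h _ (Finset.mem_insert_self _ _))
      (ih fun x hxs => h x (Finset.mem_insert_of_mem hxs))

end Main


section Main2
variable {K : Type*} [Field K] {τ i : ℕ}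
variable (y' : Fin (i + 1) → MvPowerSeries (Fin τ) K)

/-- Combine an `s`-exponent and a `z`-exponent into one multi-exponent. -/
noncomputable def sumMon (k : Fin τ →₀ ℕ) (l : Fin (i + 1) → ℕ) :
    (Fin τ ⊕ Fin (i + 1)) →₀ ℕ :=
  Finsupp.equivFunOnFinite.symm (Sum.elim (fun a => k a) l)

@[simp] lemma sumMon_inl (k : Fin τ →₀ ℕ) (l : Fin (i + 1) → ℕ) (a : Fin τ) :
    sumMon k l (Sum.inl a) = k a := rfl

@[simp] lemma sumMon_inr (k : Fin τ →₀ ℕ) (l : Fin (i + 1) → ℕ) (j : Fin (i + 1)) :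
    sumMon k l (Sum.inr j) = l j := rfl

/-- The `s`-part of a multi-exponent. -/
noncomputable def projMon (mon : (Fin τ ⊕ Fin (i + 1)) →₀ ℕ) : Fin τ →₀ ℕ :=
  Finsupp.equivFunOnFinite.symm (fun a => mon (Sum.inl a))

@[simp] lemma projMon_apply (mon : (Fin τ ⊕ Fin (i + 1)) →₀ ℕ) (a : Fin τ) :
    projMon mon a = mon (Sum.inl a) := rfl

lemma projMon_sum (mon : (Fin τ ⊕ Fin (i + 1)) →₀ ℕ) :
    ((projMon mon).sum fun _ v => v) = ∑ a : Fin τ, mon (Sum.inl a) := by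
  rw [Finsupp.sum_fintype]
  · simp
  · intro a; rfl

lemma wz_monomial_eq (k : Fin τ →₀ ℕ) (c : K) :
    (MvPowerSeries.monomial k c) = (algebraMap K _) c * ∏ a, (MvPowerSeries.X a) ^ (k a) := by
  rw [← MvPolynomial.coe_monomial]
  have h : (MvPolynomial.monomial k c : MvPolynomial (Fin τ) K)
      = MvPolynomial.C c * ∏ a, (MvPolynomial.X a) ^ (k a) := by
    rw [MvPolynomial.monomial_eq]
    congr 1
    rw [Finsupp.prod_fintype]
    intro a; exact pow_zero _
  have hring : ∀ (p : MvPolynomial (Fin τ) K),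
      (p : MvPowerSeries (Fin τ) K) = MvPolynomial.coeToMvPowerSeries.ringHom p := fun p => rfl
  rw [h, hring, map_mul, map_prod]
  congr 1
  · rw [← hring, MvPolynomial.coe_C, MvPowerSeries.c_eq_algebraMap]
  · exact Finset.prod_congr rfl fun a _ => by rw [map_pow, ← hring, MvPolynomial.coe_X]

lemma wz_substSeries_monomial (k : Fin τ →₀ ℕ) (l : Fin (i + 1) → ℕ) (c : K) :
    substSeries y' (MvPolynomial.monomial (sumMon k l) c)
      = (MvPowerSeries.monomial k c) * ∏ j, (y' j) ^ (l j) := by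
  rw [substSeries, MvPolynomial.aeval_monomial, Finsupp.prod_fintype _ _ (fun v => pow_zero _),
    Fintype.prod_sum_type]
  simp only [Sum.elim_inl, Sum.elim_inr, sumMon_inl, sumMon_inr]
  rw [wz_monomial_eq]
  ring

lemma wz_substExcept_monomial (j : Fin (i + 1)) (mon : (Fin τ ⊕ Fin (i + 1)) →₀ ℕ) (c : K) :
    substExcept y' j (MvPolynomial.monomial mon c)
      = Polynomial.C (substSeries y' (MvPolynomial.monomial (Finsupp.erase (Sum.inr j) mon) c))
        * Polynomial.X ^ (mon (Sum.inr j)) := by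
  classical
  rw [substExcept, substSeries, MvPolynomial.aeval_monomial, MvPolynomial.aeval_monomial]
  rw [map_mul]
  have halg : (Polynomial.C ((algebraMap K (MvPowerSeries (Fin τ) K)) c))
      = algebraMap K (Polynomial (MvPowerSeries (Fin τ) K)) c := by
    rw [Polynomial.algebraMap_apply]
  rw [← halg]
  set g : (Fin τ ⊕ Fin (i + 1)) → Polynomial (MvPowerSeries (Fin τ) K) :=
    Sum.elim (fun a => Polynomial.C (MvPowerSeries.X a))
      (fun k => if k = j then Polynomial.X else Polynomial.C (y' k)) with hg
  set h : (Fin τ ⊕ Fin (i + 1)) → MvPowerSeries (Fin τ) K := Sum.elim MvPowerSeries.X y' with hh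
  have hgh : ∀ v, v ≠ Sum.inr j → g v = Polynomial.C (h v) := by
    intro v hv
    rcases v with a | k
    · rfl
    · have : k ≠ j := fun hk => hv (by rw [hk])
      simp [hg, hh, this]
  have herase_supp : (Finsupp.erase (Sum.inr j) mon).support = mon.support.erase (Sum.inr j) :=
    Finsupp.support_erase
  have hprod_erase : (Finsupp.erase (Sum.inr j) mon).prod (fun v e => h v ^ e)
      = ∏ v ∈ mon.support.erase (Sum.inr j), h v ^ mon v := by
    rw [Finsupp.prod, herase_supp]
    refine Finset.prod_congr rfl fun v hv => ?_
    rw [Finsupp.erase_ne (Finset.ne_of_mem_erase hv)]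
  have hCprod : Polynomial.C ((Finsupp.erase (Sum.inr j) mon).prod (fun v e => h v ^ e))
      = ∏ v ∈ mon.support.erase (Sum.inr j), g v ^ mon v := by
    rw [hprod_erase, map_prod]
    refine Finset.prod_congr rfl fun v hv => ?_
    rw [hgh v (Finset.ne_of_mem_erase hv), map_pow]
  by_cases hmem : Sum.inr j ∈ mon.support
  · have hsplit : mon.prod (fun v e => g v ^ e)
        = g (Sum.inr j) ^ mon (Sum.inr j) * ∏ v ∈ mon.support.erase (Sum.inr j), g v ^ mon v := by
      rw [Finsupp.prod, ← Finset.mul_prod_erase _ _ hmem]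
    rw [hsplit, hCprod]
    have hgj : g (Sum.inr j) = Polynomial.X := by simp [hg]
    rw [hgj]
    ring
  · have he : mon (Sum.inr j) = 0 := Finsupp.notMem_support_iff.1 hmem
    have herase : Finsupp.erase (Sum.inr j) mon = mon := Finsupp.erase_of_notMem_support hmem
    rw [he, pow_zero, mul_one, herase]
    have : mon.prod (fun v e => g v ^ e) = ∏ v ∈ mon.support, g v ^ mon v := rfl
    rw [this]
    have h2 : Polynomial.C (mon.prod (fun v e => h v ^ e)) = ∏ v ∈ mon.support, g v ^ mon v := by
      rw [Finsupp.prod, map_prod]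
      refine Finset.prod_congr rfl fun v hv => ?_
      have hv' : v ≠ Sum.inr j := fun hveq => hmem (hveq ▸ hv)
      rw [hgh v hv', map_pow]
    rw [← h2]

lemma wz_eval_substExcept (j : Fin (i + 1)) (F : MvPolynomial (Fin τ ⊕ Fin (i + 1)) K) :
    Polynomial.eval (y' j) (substExcept y' j F) = substSeries y' F := by
  induction F using MvPolynomial.induction_on with
  | C a => simp [substExcept, substSeries]
  | add p q hp hq => simp only [substExcept, substSeries, map_add, Polynomial.eval_add] at *
                     rw [hp, hq]
  | mul_X p s hp =>
    simp only [substExcept, substSeries, map_mul, Polynomial.eval_mul] at *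
    rw [hp]
    congr 1
    rcases s with a | k
    · simp
    · by_cases hk : k = j
      · subst hk; simp
      · simp [hk]

end Main2

section Main3
variable {K : Type*} [Field K] {τ i : ℕ}
variable {y' : Fin (i + 1) → MvPowerSeries (Fin τ) K}

lemma wz_substExcept_sum {α : Type*} (s : Finset α) (j : Fin (i + 1))
    (f : α → MvPolynomial (Fin τ ⊕ Fin (i + 1)) K) :
    substExcept y' j (∑ x ∈ s, f x) = ∑ x ∈ s, substExcept y' j (f x) := by
  simp [substExcept]

lemma wz_substSeries_sum {α : Type*} (s : Finset α)
    (f : α → MvPolynomial (Fin τ ⊕ Fin (i + 1)) K) :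
    substSeries y' (∑ x ∈ s, f x) = ∑ x ∈ s, substSeries y' (f x) := by
  simp [substSeries]

lemma wz_natDegree_substExcept (j : Fin (i + 1)) (Z : ℕ)
    (F : MvPolynomial (Fin τ ⊕ Fin (i + 1)) K)
    (hF : ∀ mon ∈ F.support, mon (Sum.inr j) ≤ Z) :
    (substExcept y' j F).natDegree ≤ Z := by
  classical
  conv_lhs => rw [MvPolynomial.as_sum F]
  rw [wz_substExcept_sum]
  apply Polynomial.natDegree_sum_le_of_forall_le
  intro mon hmon
  rw [wz_substExcept_monomial]
  refine le_trans (Polynomial.natDegree_mul_le) ?_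
  rw [Polynomial.natDegree_C, zero_add]
  refine le_trans Polynomial.natDegree_pow_le ?_
  calc mon (Sum.inr j) * Polynomial.X.natDegree
      ≤ mon (Sum.inr j) * 1 := Nat.mul_le_mul_left _ Polynomial.natDegree_X_le
    _ = mon (Sum.inr j) := mul_one _
    _ ≤ Z := hF mon hmon

lemma wz_coeff_substExcept (r S Z : ℕ) (j : Fin (i + 1)) (hj : (j : ℕ) = r)
    (F : MvPolynomial (Fin τ ⊕ Fin (i + 1)) K) (hF : wzCond (r + 1) S Z F) (t : ℕ) :
    Wcl y' r S Z ((substExcept y' j F).coeff t) := by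
  classical
  conv in substExcept y' j F => rw [MvPolynomial.as_sum F]
  rw [wz_substExcept_sum, Polynomial.finset_sum_coeff]
  apply Wcl_sum
  intro mon hmon
  rw [wz_substExcept_monomial, Polynomial.coeff_C_mul, Polynomial.coeff_X_pow]
  by_cases hte : t = mon (Sum.inr j)
  · rw [if_pos hte, mul_one]
    refine ⟨MvPolynomial.monomial (Finsupp.erase (Sum.inr j) mon)
      (MvPolynomial.coeff mon F), ?_, rfl⟩
    intro mon' hmon'
    rw [MvPolynomial.support_monomial] at hmon'
    by_cases hc0 : MvPolynomial.coeff mon F = 0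
    · rw [if_pos hc0] at hmon'
      exact absurd hmon' (Finset.notMem_empty _)
    · rw [if_neg hc0] at hmon'
      simp only [Finset.mem_singleton] at hmon'
      subst hmon'
      obtain ⟨h1, h2, h3⟩ := hF mon hmon
      refine ⟨?_, fun j' => ?_, fun j' hj' => ?_⟩
      · calc ∑ a : Fin τ, (Finsupp.erase (Sum.inr j) mon) (Sum.inl a)
            = ∑ a : Fin τ, mon (Sum.inl a) :=
              Finset.sum_congr rfl fun a _ => by rw [Finsupp.erase_ne (by simp)]
          _ ≤ S := h1
      · by_cases hjj : (Sum.inr j' : Fin τ ⊕ Fin (i + 1)) = Sum.inr j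
        · rw [hjj, Finsupp.erase_same]
          exact Nat.zero_le _
        · rw [Finsupp.erase_ne hjj]
          exact h2 j'
      · by_cases hjj : (j' : ℕ) = r
        · have hjeq : (Sum.inr j' : Fin τ ⊕ Fin (i + 1)) = Sum.inr j := by
            congr 1
            exact Fin.ext (by omega)
          rw [hjeq, Finsupp.erase_same]
        · have hne : (Sum.inr j' : Fin τ ⊕ Fin (i + 1)) ≠ Sum.inr j := by
            intro hc
            have : j' = j := by injection hc
            exact hjj (by rw [this, hj])
          rw [Finsupp.erase_ne hne]
          exact h3 j' (by omega)
  · rw [if_neg hte, mul_zero]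
    exact Wcl_zero r S Z

lemma wz_base (S Z : ℕ) (F : MvPolynomial (Fin τ ⊕ Fin (i + 1)) K) (hC : wzCond 0 S Z F)
    (hlow : ∀ mexp : Fin τ →₀ ℕ, (mexp.sum fun _ v => v) ≤ S →
      MvPowerSeries.coeff mexp (substSeries y' F) = 0) :
    substSeries y' F = 0 := by
  classical
  by_contra hne
  have hF : F ≠ 0 := fun h => hne (by rw [h]; simp [substSeries])
  obtain ⟨mon0, hmon0⟩ : F.support.Nonempty :=
    Finset.nonempty_iff_ne_empty.2 (fun h => hF (MvPolynomial.support_eq_empty.1 h))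
  have hrw : substSeries y' F = ∑ mon ∈ F.support,
      MvPowerSeries.monomial (projMon mon) (MvPolynomial.coeff mon F) := by
    conv_lhs => rw [MvPolynomial.as_sum F]
    rw [wz_substSeries_sum]
    refine Finset.sum_congr rfl fun mon hmon => ?_
    have hmon' : mon = sumMon (projMon mon) (fun _ => 0) := by
      apply Finsupp.ext
      intro v
      rcases v with a | j'
      · rfl
      · rw [sumMon_inr]
        exact (hC mon hmon).2.2 j' (Nat.zero_le _)
    rw [hmon', wz_substSeries_monomial]
    simp [← hmon']
  have hcoeff : MvPowerSeries.coeff (projMon mon0) (substSeries y' F)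
      = MvPolynomial.coeff mon0 F := by
    rw [hrw, map_sum]
    rw [Finset.sum_eq_single mon0]
    · rw [MvPowerSeries.coeff_monomial, if_pos rfl]
    · intro mon hmon hne'
      rw [MvPowerSeries.coeff_monomial, if_neg]
      intro heq
      apply hne'
      apply Finsupp.ext
      intro v
      rcases v with a | j'
      · have h2 := congrArg (fun g : Fin τ →₀ ℕ => g a) heq
        simp only [projMon_apply] at h2
        exact h2.symm
      · rw [(hC mon hmon).2.2 j' (Nat.zero_le _), (hC mon0 hmon0).2.2 j' (Nat.zero_le _)]
    · intro h
      exact absurd hmon0 h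
  have hb : ((projMon mon0).sum fun _ v => v) ≤ S := by
    rw [projMon_sum]
    exact (hC mon0 hmon0).1
  have hz := hlow _ hb
  rw [hcoeff] at hz
  exact (MvPolynomial.mem_support_iff.1 hmon0) hz

lemma wz_lowZero_mul (N : ℕ) (u v : MvPowerSeries (Fin τ) K)
    (hu : ∀ mexp : Fin τ →₀ ℕ, (mexp.sum fun _ v => v) ≤ N →
      MvPowerSeries.coeff mexp u = 0) :
    ∀ mexp : Fin τ →₀ ℕ, (mexp.sum fun _ v => v) ≤ N →
      MvPowerSeries.coeff mexp (u * v) = 0 := by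
  classical
  intro mexp h
  rw [MvPowerSeries.coeff_mul]
  apply Finset.sum_eq_zero
  intro pq hpq
  rw [Finset.HasAntidiagonal.mem_antidiagonal] at hpq
  have hsum : (pq.1.sum fun _ v => v) + (pq.2.sum fun _ v => v) = (mexp.sum fun _ v => v) := by
    rw [← hpq, Finsupp.sum_add_index']
    · intro a
      rfl
    · intro a b1 b2
      rfl
  rw [hu pq.1 (by omega), zero_mul]

end Main3
section Main4
variable {K : Type*} [Field K] {τ i : ℕ}
variable {y' : Fin (i + 1) → MvPowerSeries (Fin τ) K}

/-- The recursive depth bound. -/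
def wzBnd (ds d' : ℕ) : ℕ → ℕ → ℕ → ℕ
  | 0, S, _ => S
  | (r + 1), S, Z => wzBnd ds d' r (Z * ds + d' * S) (2 * d' * Z)

lemma Wcl_sub {r S Z : ℕ} {f g : MvPowerSeries (Fin τ) K}
    (hf : Wcl y' r S Z f) (hg : Wcl y' r S Z g) : Wcl y' r S Z (f - g) := by
  rw [sub_eq_add_neg]
  exact Wcl_add hf (Wcl_neg hg)

/-- Coefficients of products of polynomials with coefficients in the class. -/
lemma wz_WP_prod {r : ℕ} {α : Type*} (s : Finset α)
    (g : α → Polynomial (MvPowerSeries (Fin τ) K)) (A B : α → ℕ)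
    (h : ∀ x ∈ s, ∀ t, Wcl y' r (A x) (B x) ((g x).coeff t)) :
    ∀ t, Wcl y' r (∑ x ∈ s, A x) (∑ x ∈ s, B x) ((∏ x ∈ s, g x).coeff t) := by
  classical
  induction s using Finset.induction_on with
  | empty =>
    intro t
    simp only [Finset.prod_empty, Finset.sum_empty, Polynomial.coeff_one]
    split
    · exact Wcl_one (y' := y') _ _ _
    · exact Wcl_zero (y' := y') _ _ _
  | @insert x s hx ih =>
    intro t
    rw [Finset.prod_insert hx, Finset.sum_insert hx, Finset.sum_insert hx,
      Polynomial.coeff_mul]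
    apply Wcl_sum
    intro pq _
    exact Wcl_mul (h x (Finset.mem_insert_self _ _) pq.1)
      (ih (fun z hz t' => h z (Finset.mem_insert_of_mem hz) t') pq.2)

lemma wz_card_not_lt (m n : ℕ) :
    (Finset.univ.filter fun c : Fin (m + n) => ¬ (c : ℕ) < m).card = n := by
  have hfilt : (Finset.univ.filter fun c : Fin (m + n) => ¬ (c : ℕ) < m)
      = Finset.univ.filter fun c : Fin (m + n) => m ≤ (c : ℕ) := by
    apply Finset.filter_congr
    intro c _
    simp [not_lt]
  rw [hfilt]
  exact wz_card_ge m n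

lemma wz_key (ds d' : ℕ) (hd' : 3 ≤ d')
    (P : Fin (i + 1) → MvPolynomial (Fin τ ⊕ Fin (i + 1)) K)
    (hPs : ∀ j, ∀ mon ∈ (P j).support, (∑ a : Fin τ, mon (Sum.inl a)) ≤ ds)
    (hPz : ∀ j k, MvPolynomial.degreeOf (Sum.inr k) (P j) ≤ d')
    (hPtri : ∀ j k : Fin (i + 1), (j : ℕ) < (k : ℕ) →
      MvPolynomial.degreeOf (Sum.inr k) (P j) = 0)
    (hProot : ∀ j, substSeries y' (P j) = 0)
    (hPsep : ∀ j, substExcept y' j (P j) ≠ 0) :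
    ∀ r, r ≤ i + 1 → ∀ S Z : ℕ, ∀ u : MvPowerSeries (Fin τ) K, Wcl y' r S Z u →
      (∀ mexp : Fin τ →₀ ℕ, (mexp.sum fun _ v => v) ≤ wzBnd ds d' r S Z →
        MvPowerSeries.coeff mexp u = 0) → u = 0 := by
  classical
  intro r
  induction r with
  | zero =>
    intro _ S Z u hW hlow
    obtain ⟨F, hF, rfl⟩ := hW
    exact wz_base S Z F hF hlow
  | succ r IH =>
    intro hri S Z u hW hlow
    by_contra hne
    obtain ⟨F, hF, rfl⟩ := hW
    set u0 := substSeries y' F with hu0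
    set j : Fin (i + 1) := ⟨r, by omega⟩ with hjdef
    have hjr : (j : ℕ) = r := rfl
    set q := substExcept y' j F with hq
    have hqeval : Polynomial.eval (y' j) q = u0 := wz_eval_substExcept y' j F
    have hqdeg : q.natDegree ≤ Z :=
      wz_natDegree_substExcept j Z F (fun mon hmon => (hF mon hmon).2.1 j)
    have hqcoeff : ∀ t, Wcl y' r S Z (q.coeff t) :=
      wz_coeff_substExcept r S Z j hjr F hF
    set p := substExcept y' j (P j) with hp
    have hpne : p ≠ 0 := hPsep j
    have hproot : Polynomial.eval (y' j) p = 0 := by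
      rw [hp, wz_eval_substExcept]
      exact hProot j
    have hPcond : wzCond (r + 1) ds d' (P j) := by
      intro mon hmon
      refine ⟨hPs j mon hmon, fun k => ?_, fun k hk => ?_⟩
      · have h1 : mon (Sum.inr k) ≤ MvPolynomial.degreeOf (Sum.inr k) (P j) := by
          rw [MvPolynomial.degreeOf_eq_sup]
          exact Finset.le_sup (f := fun mo => mo (Sum.inr k)) hmon
        exact le_trans h1 (hPz j k)
      · have h0 : MvPolynomial.degreeOf (Sum.inr k) (P j) = 0 := by
          apply hPtri j k
          omega
        have h1 : mon (Sum.inr k) ≤ MvPolynomial.degreeOf (Sum.inr k) (P j) := by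
          rw [MvPolynomial.degreeOf_eq_sup]
          exact Finset.le_sup (f := fun mo => mo (Sum.inr k)) hmon
        omega
    have hpdeg : p.natDegree ≤ d' :=
      wz_natDegree_substExcept j d' (P j) (fun mon hmon => (hPcond mon hmon).2.1 j)
    have hpcoeff : ∀ t, Wcl y' r ds d' (p.coeff t) :=
      wz_coeff_substExcept r ds d' j hjr (P j) hPcond
    set n := p.natDegree with hn
    set m := q.natDegree with hm
    have hSle : S ≤ Z * ds + d' * S := by
      have : S ≤ d' * S := Nat.le_mul_of_pos_left S (by omega)
      omega
    have hZle : Z ≤ 2 * d' * Z := by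
      have h1 : Z ≤ d' * Z := Nat.le_mul_of_pos_left Z (by omega)
      have h2 : 2 * d' * Z = 2 * (d' * Z) := by ring
      omega
    have hBnd : wzBnd ds d' (r + 1) S Z = wzBnd ds d' r (Z * ds + d' * S) (2 * d' * Z) := rfl
    by_cases hm0 : m = 0
    · have hqC := Polynomial.eq_C_of_natDegree_eq_zero hm0
      have hu : u0 = q.coeff 0 := by
        rw [← hqeval]
        conv_lhs => rw [hqC]
        rw [Polynomial.eval_C]
      apply hne
      rw [hu]
      refine IH (by omega) (Z * ds + d' * S) (2 * d' * Z) (q.coeff 0)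
        (Wcl_mono (le_refl r) hSle hZle (hqcoeff 0)) ?_
      intro mexp hmexp
      rw [← hu]
      exact hlow mexp (by rw [hBnd]; exact hmexp)
    · have hm1 : 1 ≤ m := by omega
      have hn1 : 1 ≤ n := by
        by_contra hcon
        have hn0 : n = 0 := by omega
        have hpC := Polynomial.eq_C_of_natDegree_eq_zero hn0
        have hc : p.coeff 0 = 0 := by
          rw [← hproot]
          conv_rhs => rw [hpC]
          rw [Polynomial.eval_C]
        exact hpne (by rw [hpC, hc, map_zero])
      set E := (wzSyl (p.map Polynomial.C)
        (q.map Polynomial.C - Polynomial.C Polynomial.X) n m).det with hE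
      obtain ⟨a, b, hab⟩ := wz_det_comb (p.map Polynomial.C)
        (q.map Polynomial.C - Polynomial.C Polynomial.X) n m
        Polynomial.natDegree_map_le
        (le_trans (Polynomial.natDegree_sub_le _ _) (by
          rw [max_le_iff]
          constructor
          · exact Polynomial.natDegree_map_le
          · rw [Polynomial.natDegree_C]
            omega))
        (by omega)
      have hEu : Polynomial.eval u0 E = 0 := by
        set φ := Polynomial.mapRingHom (Polynomial.evalRingHom u0) with hφ
        set ψ := Polynomial.evalRingHom (y' j) with hψ
        have h1 := congrArg (fun W => ψ (φ W)) hab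
        simp only [map_add, map_mul] at h1
        have hid : (Polynomial.evalRingHom u0).comp
            (Polynomial.C : MvPowerSeries (Fin τ) K →+* _) = RingHom.id _ :=
          RingHom.ext fun x => Polynomial.eval_C
        have e1 : ψ (φ (Polynomial.C E)) = Polynomial.eval u0 E := by
          rw [hφ, hψ]
          simp [Polynomial.map_C]
        have e2 : ψ (φ (p.map Polynomial.C)) = 0 := by
          have h2 : φ (p.map Polynomial.C) = p := by
            rw [hφ]
            simp only [Polynomial.coe_mapRingHom, Polynomial.map_map]
            rw [hid, Polynomial.map_id]
          rw [h2, hψ]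
          exact hproot
        have e3 : ψ (φ (q.map Polynomial.C - Polynomial.C Polynomial.X)) = 0 := by
          rw [_root_.map_sub φ (q.map Polynomial.C) (Polynomial.C Polynomial.X),
            _root_.map_sub ψ]
          have h2 : φ (q.map Polynomial.C) = q := by
            rw [hφ]
            simp only [Polynomial.coe_mapRingHom, Polynomial.map_map]
            rw [hid, Polynomial.map_id]
          have h3 : φ (Polynomial.C Polynomial.X) = Polynomial.C u0 := by
            rw [hφ]
            simp [Polynomial.map_C]
          rw [h2, h3, hψ]
          simp only [Polynomial.eval_C, Polynomial.coe_evalRingHom]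
          rw [hqeval]
          ring
        rw [e1, e2, e3, mul_zero, mul_zero, add_zero] at h1
        exact h1
      have hEcn : E.coeff n = p.leadingCoeff ^ m * (-1 : MvPowerSeries (Fin τ) K) ^ n :=
        wz_det_coeff_top p q m
      have hE0 : E.coeff n ≠ 0 := by
        rw [hEcn]
        apply mul_ne_zero
        · exact pow_ne_zero _ (Polynomial.leadingCoeff_ne_zero.2 hpne)
        · exact pow_ne_zero _ (neg_ne_zero.2 one_ne_zero)
      have hEne : E ≠ 0 := fun h => hE0 (by rw [h, Polynomial.coeff_zero])
      -- coefficients of E lie in the class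
      have hentry : ∀ ρ c : Fin (m + n), ∀ t,
          Wcl y' r (if (ρ : ℕ) < m then ds else S) (if (ρ : ℕ) < m then d' else Z)
            ((wzSyl (p.map Polynomial.C)
              (q.map Polynomial.C - Polynomial.C Polynomial.X) n m ρ c).coeff t) := by
        intro ρ c t
        by_cases hρ : (ρ : ℕ) < m
        · rw [if_pos hρ, if_pos hρ]
          simp only [wzSyl, if_pos hρ]
          split
          · rw [Polynomial.coeff_map, Polynomial.coeff_C]
            split
            · exact hpcoeff _
            · exact Wcl_zero _ _ _
          · rw [Polynomial.coeff_zero]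
            exact Wcl_zero _ _ _
        · rw [if_neg hρ, if_neg hρ]
          simp only [wzSyl, if_neg hρ]
          split
          · rw [Polynomial.coeff_sub, Polynomial.coeff_sub, Polynomial.coeff_map,
              Polynomial.coeff_C, Polynomial.coeff_C]
            apply Wcl_sub
            · split
              · exact hqcoeff _
              · exact Wcl_zero _ _ _
            · split
              · rw [Polynomial.coeff_X]
                split
                · exact Wcl_one _ _ _
                · exact Wcl_zero _ _ _
              · rw [Polynomial.coeff_zero]
                exact Wcl_zero _ _ _
          · rw [Polynomial.coeff_zero]
            exact Wcl_zero _ _ _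
      have hEcoeff : ∀ t, Wcl y' r (Z * ds + d' * S) (2 * d' * Z) (E.coeff t) := by
        intro t
        rw [hE, Matrix.det_apply, Polynomial.finset_sum_coeff]
        apply Wcl_sum
        intro σ _
        have hprod : ∀ t', Wcl y' r (m * ds + n * S) (m * d' + n * Z)
            ((∏ c : Fin (m + n), wzSyl (p.map Polynomial.C)
              (q.map Polynomial.C - Polynomial.C Polynomial.X) n m (σ c) c).coeff t') := by
          intro t'
          have h1 := wz_WP_prod Finset.univ
            (fun c => wzSyl (p.map Polynomial.C)
              (q.map Polynomial.C - Polynomial.C Polynomial.X) n m (σ c) c)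
            (fun c => if ((σ c : ℕ)) < m then ds else S)
            (fun c => if ((σ c : ℕ)) < m then d' else Z)
            (fun c _ t'' => hentry (σ c) c t'') t'
          have hsA : ∑ c : Fin (m + n), (if ((σ c : ℕ)) < m then ds else S)
              = m * ds + n * S := by
            rw [Equiv.sum_comp σ (fun ρ : Fin (m + n) => if (ρ : ℕ) < m then ds else S)]
            rw [Finset.sum_ite, Finset.sum_const, Finset.sum_const, wz_card_lt,
              wz_card_not_lt, smul_eq_mul, smul_eq_mul]
          have hsB : ∑ c : Fin (m + n), (if ((σ c : ℕ)) < m then d' else Z)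
              = m * d' + n * Z := by
            rw [Equiv.sum_comp σ (fun ρ : Fin (m + n) => if (ρ : ℕ) < m then d' else Z)]
            rw [Finset.sum_ite, Finset.sum_const, Finset.sum_const, wz_card_lt,
              wz_card_not_lt, smul_eq_mul, smul_eq_mul]
          rwa [hsA, hsB] at h1
        have hmZ : m * ds + n * S ≤ Z * ds + d' * S :=
          add_le_add (Nat.mul_le_mul_right ds hqdeg) (Nat.mul_le_mul_right S hpdeg)
        have hmZ' : m * d' + n * Z ≤ 2 * d' * Z := by
          have h1 : m * d' ≤ Z * d' := Nat.mul_le_mul_right d' hqdeg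
          have h2 : n * Z ≤ d' * Z := Nat.mul_le_mul_right Z hpdeg
          have h3 : Z * d' = d' * Z := Nat.mul_comm _ _
          have h4 : 2 * d' * Z = 2 * (d' * Z) := by ring
          omega
        rcases Int.units_eq_one_or (Equiv.Perm.sign σ) with hs | hs
        · rw [hs, one_smul]
          exact Wcl_mono (le_refl r) hmZ hmZ' (hprod t)
        · rw [hs, Units.neg_smul, one_smul, Polynomial.coeff_neg]
          exact Wcl_neg (Wcl_mono (le_refl r) hmZ hmZ' (hprod t))
      -- trailing coefficient argument
      set D := E.natDegree with hD
      set t0 := E.natTrailingDegree with ht0def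
      have ht0D : t0 ≤ D := Polynomial.natTrailingDegree_le_natDegree E
      have hc0 : E.coeff t0 ≠ 0 := Polynomial.trailingCoeff_nonzero_iff_nonzero.2 hEne
      set V := ∑ t ∈ Finset.range (D - t0), E.coeff (t0 + (t + 1)) * u0 ^ t with hV
      have hfact : E.coeff t0 = u0 * (-V) := by
        have h1 : ∑ t ∈ Finset.range (D + 1), E.coeff t * u0 ^ t = 0 := by
          rw [← Polynomial.eval_eq_sum_range]
          exact hEu
        have hsplitn : D + 1 = t0 + (D + 1 - t0) := by omega
        rw [hsplitn, Finset.sum_range_add] at h1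
        have h2 : ∑ t ∈ Finset.range t0, E.coeff t * u0 ^ t = 0 :=
          Finset.sum_eq_zero fun t ht => by
            rw [Polynomial.coeff_eq_zero_of_lt_natTrailingDegree
              (by simp only [Finset.mem_range] at ht; omega), zero_mul]
        rw [h2, zero_add] at h1
        have h3 : ∑ t ∈ Finset.range (D + 1 - t0), E.coeff (t0 + t) * u0 ^ (t0 + t)
            = u0 ^ t0 * ∑ t ∈ Finset.range (D + 1 - t0), E.coeff (t0 + t) * u0 ^ t := by
          rw [Finset.mul_sum]
          refine Finset.sum_congr rfl fun t _ => ?_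
          rw [pow_add]
          ring
        rw [h3] at h1
        have hu0ne : u0 ^ t0 ≠ 0 := pow_ne_zero _ hne
        have h4 : ∑ t ∈ Finset.range (D + 1 - t0), E.coeff (t0 + t) * u0 ^ t = 0 := by
          rcases mul_eq_zero.1 h1 with h | h
          · exact absurd h hu0ne
          · exact h
        have h5 : D + 1 - t0 = (D - t0) + 1 := by omega
        rw [h5, Finset.sum_range_succ'] at h4
        have h6 : ∑ t ∈ Finset.range (D - t0), E.coeff (t0 + (t + 1)) * u0 ^ (t + 1)
            = u0 * V := by
          rw [hV, Finset.mul_sum]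
          refine Finset.sum_congr rfl fun t _ => ?_
          ring
        rw [h6] at h4
        have h7 : E.coeff (t0 + 0) * u0 ^ 0 = E.coeff t0 := by
          rw [add_zero, pow_zero, mul_one]
        rw [h7] at h4
        have : E.coeff t0 = -(u0 * V) := by linear_combination h4
        rw [this]
        ring
      have hlow2 : ∀ mexp : Fin τ →₀ ℕ,
          (mexp.sum fun _ v => v) ≤ wzBnd ds d' r (Z * ds + d' * S) (2 * d' * Z) →
          MvPowerSeries.coeff mexp (E.coeff t0) = 0 := by
        intro mexp hmexp
        rw [hfact]
        exact wz_lowZero_mul _ u0 (-V)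
          (fun me hme => hlow me (by rw [hBnd]; exact hme)) mexp hmexp
      exact hc0 (IH (by omega) _ _ _ (hEcoeff t0) hlow2)
end Main4
section Arith

lemma wzBnd_le (ds d' : ℕ) (hd' : 1 ≤ d') :
    ∀ r S Z : ℕ, wzBnd ds d' r S Z ≤ 3 ^ r * d' ^ r * (S + ds * Z) := by
  intro r
  induction r with
  | zero =>
    intro S Z
    simp [wzBnd]
  | succ r ih =>
    intro S Z
    have h1 : wzBnd ds d' (r + 1) S Z = wzBnd ds d' r (Z * ds + d' * S) (2 * d' * Z) := rfl
    rw [h1]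
    refine le_trans (ih _ _) ?_
    have h2 : Z * ds + d' * S + ds * (2 * d' * Z) ≤ 3 * d' * (S + ds * Z) := by
      have h3 : Z * ds ≤ d' * (ds * Z) := by
        have := Nat.mul_le_mul_right (ds * Z) hd'
        calc Z * ds = 1 * (ds * Z) := by ring
          _ ≤ d' * (ds * Z) := by exact Nat.mul_le_mul_right _ hd'
      have h4 : ds * (2 * d' * Z) = 2 * (d' * (ds * Z)) := by ring
      have h5 : 3 * d' * (S + ds * Z) = 3 * (d' * S) + 3 * (d' * (ds * Z)) := by ring
      omega
    calc 3 ^ r * d' ^ r * (Z * ds + d' * S + ds * (2 * d' * Z))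
        ≤ 3 ^ r * d' ^ r * (3 * d' * (S + ds * Z)) := Nat.mul_le_mul_left _ h2
      _ = 3 ^ (r + 1) * d' ^ (r + 1) * (S + ds * Z) := by ring

lemma wzBnd_le_N (i ds d' : ℕ) (hi : 1 ≤ i) (hd' : 3 ≤ d') :
    wzBnd ds d' (i + 1) ds d'
      ≤ 2 * 3 ^ (∑ t ∈ Finset.range i, d' ^ t) * ds
        * d' ^ (∑ t ∈ Finset.range (i + 1), d' ^ t) := by
  set A := ∑ t ∈ Finset.range i, d' ^ t with hA
  set B := ∑ t ∈ Finset.range (i + 1), d' ^ t with hB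
  have hAi : i ≤ A := by
    calc i = ∑ _t ∈ Finset.range i, 1 := by simp
      _ ≤ A := Finset.sum_le_sum fun t _ => Nat.one_le_pow t d' (by omega)
  have hBi : 1 + 3 * i ≤ B := by
    have h1 : B = (∑ t ∈ Finset.range i, d' ^ (t + 1)) + d' ^ 0 := Finset.sum_range_succ' _ i
    have h2 : ∀ t ∈ Finset.range i, 3 ≤ d' ^ (t + 1) := by
      intro t _
      calc 3 ≤ d' := hd'
        _ ≤ d' ^ (t + 1) := Nat.le_self_pow (by omega) d'
    have h3 : 3 * i ≤ ∑ t ∈ Finset.range i, d' ^ (t + 1) := by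
      calc 3 * i = ∑ _t ∈ Finset.range i, 3 := by simp [Nat.mul_comm]
        _ ≤ _ := Finset.sum_le_sum h2
    have h0 : d' ^ 0 = 1 := pow_zero d'
    omega
  have step1 : wzBnd ds d' (i + 1) ds d' ≤ 2 * 3 ^ (i + 1) * ds * d' ^ (i + 2) := by
    refine le_trans (wzBnd_le ds d' (by omega) (i + 1) ds d') ?_
    have h1 : ds + ds * d' ≤ ds * (2 * d') := by nlinarith
    calc 3 ^ (i + 1) * d' ^ (i + 1) * (ds + ds * d')
        ≤ 3 ^ (i + 1) * d' ^ (i + 1) * (ds * (2 * d')) := Nat.mul_le_mul_left _ h1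
      _ = 2 * 3 ^ (i + 1) * ds * (d' ^ (i + 1) * d') := by ring
      _ = 2 * 3 ^ (i + 1) * ds * d' ^ (i + 2) := by rw [← pow_succ]
  refine le_trans step1 ?_
  have hBge : i + 2 ≤ B := by omega
  obtain ⟨e, hBe⟩ : ∃ e, B = (i + 2) + e := ⟨B - (i + 2), by omega⟩
  have h1 : 3 ^ (i + 1) * d' ^ (i + 2) ≤ 3 ^ A * d' ^ B := by
    have h2 : d' ^ B = d' ^ (i + 2) * d' ^ e := by rw [hBe, pow_add]
    have h3 : 3 ^ (i + 1) ≤ 3 ^ A * 3 ^ e := by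
      rw [← pow_add]
      apply Nat.pow_le_pow_right (by omega)
      omega
    have h4 : 3 ^ e ≤ d' ^ e := Nat.pow_le_pow_left (by omega) e
    calc 3 ^ (i + 1) * d' ^ (i + 2) ≤ (3 ^ A * 3 ^ e) * d' ^ (i + 2) :=
          Nat.mul_le_mul_right _ h3
      _ ≤ (3 ^ A * d' ^ e) * d' ^ (i + 2) :=
          Nat.mul_le_mul_right _ (Nat.mul_le_mul_left _ h4)
      _ = 3 ^ A * d' ^ B := by rw [h2]; ring
  calc 2 * 3 ^ (i + 1) * ds * d' ^ (i + 2)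
      = 2 * ds * (3 ^ (i + 1) * d' ^ (i + 2)) := by ring
    _ ≤ 2 * ds * (3 ^ A * d' ^ B) := Nat.mul_le_mul_left _ h1
    _ = 2 * 3 ^ A * ds * d' ^ B := by ring

end Arith
/-- **Wilczynski criterion with an explicit depth bound, for several algebraic series.**
Under the algebraicity hypotheses on `y₀',…,y_i'`, with
`N := 2·3^(1+d'+⋯+(d')^(i-1)) · d_s · (d')^(1+d'+⋯+(d')^i)`, there is a nonzero polynomial
with support in `K' ∪ L'` vanishing at `(s, y₀',…,y_i')` iff there is a not-all-zero family
`(a_{k,l})_{(k,l)∈K'}` such that the coefficient of `s^m` in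
`Σ_{(k,l)∈K'} a_{k,l} s^k (y₀')^{l₀}⋯(y_i')^{l_i}` vanishes for all `m` with `(m,0) ∉ L'`
and `|m| ≤ N`. -/
theorem wilczynski_multi_depth {K : Type*} [Field K] [CharZero K] [IsAlgClosed K]
    {τ : ℕ} (hτ : 1 ≤ τ) (i ds d' : ℕ) (hi : 1 ≤ i) (hd' : 3 ≤ d')
    (y' : Fin (i + 1) → MvPowerSeries (Fin τ) K) (hy' : ∃ j, y' j ≠ 0)
    (P : Fin (i + 1) → MvPolynomial (Fin τ ⊕ Fin (i + 1)) K)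
    (hPne : ∀ j, P j ≠ 0)
    (hPs : ∀ j, ∀ mon ∈ (P j).support, (∑ a : Fin τ, mon (Sum.inl a)) ≤ ds)
    (hPz : ∀ j k, MvPolynomial.degreeOf (Sum.inr k) (P j) ≤ d')
    (hPtri : ∀ j k : Fin (i + 1), (j : ℕ) < (k : ℕ) →
      MvPolynomial.degreeOf (Sum.inr k) (P j) = 0)
    (hProot : ∀ j, substSeries y' (P j) = 0)
    (hPsep : ∀ j, substExcept y' j (P j) ≠ 0)
    (K' L' : Finset ((Fin τ →₀ ℕ) × (Fin (i + 1) → ℕ)))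
    (hK : ∀ p ∈ K', p.2 ≠ 0) (hL : ∀ p ∈ L', p.2 = 0) (hKne : K'.Nonempty)
    (hks : ∀ p ∈ K' ∪ L', (p.1.sum fun _ v => v) ≤ ds)
    (hkd : ∀ p ∈ K', ∀ j, p.2 j ≤ d') :
    (∃ a : ((Fin τ →₀ ℕ) × (Fin (i + 1) → ℕ)) → K,
        (∀ p, a p ≠ 0 → p ∈ K' ∪ L') ∧ (∃ p, a p ≠ 0) ∧
        ∑ p ∈ K' ∪ L',
          (MvPowerSeries.monomial p.1 (a p)) * ∏ j, (y' j) ^ (p.2 j) = 0) ↔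
    (∃ a : ((Fin τ →₀ ℕ) × (Fin (i + 1) → ℕ)) → K,
        (∀ p, a p ≠ 0 → p ∈ K') ∧ (∃ p, a p ≠ 0) ∧
        ∀ m : Fin τ →₀ ℕ, (m, (0 : Fin (i + 1) → ℕ)) ∉ L' →
          (m.sum fun _ v => v) ≤
            2 * 3 ^ (∑ t ∈ Finset.range i, d' ^ t) * ds
              * d' ^ (∑ t ∈ Finset.range (i + 1), d' ^ t) →
          MvPowerSeries.coeff m
            (∑ p ∈ K', (MvPowerSeries.monomial p.1 (a p)) * ∏ j, (y' j) ^ (p.2 j)) = 0) := by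

  classical
  have hdisj : Disjoint K' L' := by
    rw [Finset.disjoint_left]
    intro p hpK hpL
    exact hK p hpK (hL p hpL)
  constructor
  · rintro ⟨a, hsupp, ⟨p0, hp0⟩, hsum⟩
    set f : ((Fin τ →₀ ℕ) × (Fin (i + 1) → ℕ)) → MvPowerSeries (Fin τ) K :=
      fun p => (MvPowerSeries.monomial p.1 (a p)) * ∏ j, (y' j) ^ (p.2 j) with hf
    have hsplit : ∑ p ∈ K' ∪ L', f p = ∑ p ∈ K', f p + ∑ p ∈ L', f p :=
      Finset.sum_union hdisj
    have hLform : ∀ p ∈ L', f p = MvPowerSeries.monomial p.1 (a p) := by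
      intro p hp
      have h2 := hL p hp
      rw [hf]
      simp only [h2, Pi.zero_apply, pow_zero, Finset.prod_const_one, mul_one]
    have hKnz : ∃ pk ∈ K', a pk ≠ 0 := by
      by_contra hcon
      push_neg at hcon
      have hKzero : ∑ p ∈ K', f p = 0 := Finset.sum_eq_zero fun p hp => by
        rw [hf]
        simp [hcon p hp]
      have hLzero : ∑ p ∈ L', MvPowerSeries.monomial p.1 (a p) = 0 := by
        rw [← Finset.sum_congr rfl hLform]
        rw [hsplit, hKzero, zero_add] at hsum
        exact hsum
      have hp0L : p0 ∈ L' := by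
        rcases Finset.mem_union.1 (hsupp p0 hp0) with h | h
        · exact absurd (hcon p0 h) hp0
        · exact h
      have hco := congrArg (MvPowerSeries.coeff p0.1) hLzero
      rw [map_sum, Finset.sum_eq_single p0] at hco
      · rw [MvPowerSeries.coeff_monomial, if_pos rfl] at hco
        simp only [map_zero] at hco
        exact hp0 hco
      · intro p hp hne
        rw [MvPowerSeries.coeff_monomial, if_neg]
        intro heq
        apply hne
        apply Prod.ext
        · exact heq.symm
        · rw [hL p hp, hL p0 hp0L]
      · intro h
        exact absurd hp0L h
    obtain ⟨pk, hpkK, hpk⟩ := hKnz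
    refine ⟨fun p => if p ∈ K' then a p else 0, ?_, ⟨pk, by simpa [hpkK] using hpk⟩, ?_⟩
    · intro p hp
      by_cases h : p ∈ K'
      · exact h
      · simp [h] at hp
    · intro mexp hmexpL _
      have hfK : ∑ p ∈ K',
          (MvPowerSeries.monomial p.1 (if p ∈ K' then a p else 0)) * ∏ j, (y' j) ^ (p.2 j)
            = ∑ p ∈ K', f p :=
        Finset.sum_congr rfl fun p hp => by rw [if_pos hp]
      have hfK0 : ∑ p ∈ K', f p = -∑ p ∈ L', f p := by
        rw [hsplit] at hsum
        linear_combination hsum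
      rw [hfK, hfK0, map_neg, map_sum, neg_eq_zero]
      apply Finset.sum_eq_zero
      intro p hp
      rw [hLform p hp, MvPowerSeries.coeff_monomial, if_neg]
      intro heq
      apply hmexpL
      have hze : p = (mexp, (0 : Fin (i + 1) → ℕ)) := by
        apply Prod.ext
        · exact heq.symm
        · exact hL p hp
      rwa [← hze]
  · rintro ⟨a, hsupp, ⟨p0, hp0⟩, hcoeff⟩
    set f : MvPowerSeries (Fin τ) K :=
      ∑ p ∈ K', (MvPowerSeries.monomial p.1 (a p)) * ∏ j, (y' j) ^ (p.2 j) with hf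
    set g : MvPowerSeries (Fin τ) K :=
      f - ∑ p ∈ L', MvPowerSeries.monomial p.1 (MvPowerSeries.coeff p.1 f) with hg
    have hWg : Wcl y' (i + 1) ds d' g := by
      rw [hg]
      apply Wcl_sub
      · rw [hf]
        apply Wcl_sum
        intro p hp
        refine ⟨MvPolynomial.monomial (sumMon p.1 p.2) (a p), ?_,
          wz_substSeries_monomial y' p.1 p.2 (a p)⟩
        intro mon hmon
        rw [MvPolynomial.support_monomial] at hmon
        by_cases hc0 : a p = 0
        · rw [if_pos hc0] at hmon
          exact absurd hmon (Finset.notMem_empty _)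
        · rw [if_neg hc0] at hmon
          simp only [Finset.mem_singleton] at hmon
          subst hmon
          refine ⟨?_, fun j => ?_, fun j hj => ?_⟩
          · have h1 := hks p (Finset.mem_union_left _ hp)
            rw [Finsupp.sum_fintype _ _ (fun _ => rfl)] at h1
            simpa using h1
          · simpa using hkd p hp j
          · have := j.isLt
            omega
      · apply Wcl_sum
        intro p hp
        refine ⟨MvPolynomial.monomial (sumMon p.1 (fun _ => 0))
          (MvPowerSeries.coeff p.1 f), ?_, ?_⟩
        · intro mon hmon
          rw [MvPolynomial.support_monomial] at hmon
          by_cases hc0 : MvPowerSeries.coeff p.1 f = 0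
          · rw [if_pos hc0] at hmon
            exact absurd hmon (Finset.notMem_empty _)
          · rw [if_neg hc0] at hmon
            simp only [Finset.mem_singleton] at hmon
            subst hmon
            refine ⟨?_, fun j => ?_, fun j hj => ?_⟩
            · have h1 := hks p (Finset.mem_union_right _ hp)
              rw [Finsupp.sum_fintype _ _ (fun _ => rfl)] at h1
              simpa using h1
            · simp
            · simp
        · rw [wz_substSeries_monomial]
          simp
    have hgl : ∀ mexp : Fin τ →₀ ℕ, (mexp.sum fun _ v => v) ≤ wzBnd ds d' (i + 1) ds d' →
        MvPowerSeries.coeff mexp g = 0 := by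
      intro mexp hme
      have hmeN : (mexp.sum fun _ v => v)
          ≤ 2 * 3 ^ (∑ t ∈ Finset.range i, d' ^ t) * ds
            * d' ^ (∑ t ∈ Finset.range (i + 1), d' ^ t) :=
        le_trans hme (wzBnd_le_N i ds d' hi hd')
      rw [hg, map_sub, map_sum (MvPowerSeries.coeff mexp)
        (fun p => MvPowerSeries.monomial p.1 (MvPowerSeries.coeff p.1 f)) L']
      by_cases hmL : (mexp, (0 : Fin (i + 1) → ℕ)) ∈ L'
      · have hLsum : ∑ p ∈ L',
            MvPowerSeries.coeff mexp (MvPowerSeries.monomial p.1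
              (MvPowerSeries.coeff p.1 f)) = MvPowerSeries.coeff mexp f := by
          rw [Finset.sum_eq_single ((mexp, (0 : Fin (i + 1) → ℕ)))]
          · rw [MvPowerSeries.coeff_monomial, if_pos rfl]
          · intro p hp hne
            rw [MvPowerSeries.coeff_monomial, if_neg]
            intro heq
            apply hne
            apply Prod.ext
            · exact heq.symm
            · rw [hL p hp]
          · intro h
            exact absurd hmL h
        rw [hLsum, sub_self]
      · have hf0 : MvPowerSeries.coeff mexp f = 0 := hcoeff mexp hmL hmeN
        have hLsum : ∑ p ∈ L',
            MvPowerSeries.coeff mexp (MvPowerSeries.monomial p.1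
              (MvPowerSeries.coeff p.1 f)) = 0 := by
          apply Finset.sum_eq_zero
          intro p hp
          rw [MvPowerSeries.coeff_monomial, if_neg]
          intro heq
          apply hmL
          have hze : p = (mexp, (0 : Fin (i + 1) → ℕ)) := by
            apply Prod.ext
            · exact heq.symm
            · exact hL p hp
          rwa [← hze]
        rw [hf0, hLsum, sub_self]
    have hg0 : g = 0 :=
      wz_key ds d' hd' P hPs hPz hPtri hProot hPsep (i + 1) (le_refl _) ds d' g hWg hgl
    refine ⟨fun p => if p ∈ K' then a p else
        (if p ∈ L' then -(MvPowerSeries.coeff p.1 f) else 0), ?_, ⟨p0, ?_⟩, ?_⟩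
    · intro p hp
      by_cases h1 : p ∈ K'
      · exact Finset.mem_union_left _ h1
      · by_cases h2 : p ∈ L'
        · exact Finset.mem_union_right _ h2
        · simp [h1, h2] at hp
    · simpa [hsupp p0 hp0] using hp0
    · rw [Finset.sum_union hdisj]
      have h1 : ∑ p ∈ K', (MvPowerSeries.monomial p.1
          (if p ∈ K' then a p else (if p ∈ L' then -(MvPowerSeries.coeff p.1 f) else 0)))
            * ∏ j, (y' j) ^ (p.2 j) = f := by
        rw [hf]
        refine Finset.sum_congr rfl fun p hp => by rw [if_pos hp]
      have h2 : ∑ p ∈ L', (MvPowerSeries.monomial p.1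
          (if p ∈ K' then a p else (if p ∈ L' then -(MvPowerSeries.coeff p.1 f) else 0)))
            * ∏ j, (y' j) ^ (p.2 j)
          = -∑ p ∈ L', MvPowerSeries.monomial p.1 (MvPowerSeries.coeff p.1 f) := by
        rw [← Finset.sum_neg_distrib]
        refine Finset.sum_congr rfl fun p hp => ?_
        have hpnK : p ∉ K' := fun h => (Finset.disjoint_left.1 hdisj) h hp
        rw [if_neg hpnK, if_pos hp, map_neg]
        have h3 := hL p hp
        simp only [h3, Pi.zero_apply, pow_zero, Finset.prod_const_one, mul_one]
      rw [h1, h2, ← sub_eq_add_neg, ← hg]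
      exact hg0
end

section
/- Every strongly reduced Henselian equation y = F(u,y) admits a unique solution y_0 in K((u^{ℤ^r}))^{grlex} whose support is contained in {n ∈ ℤ^r : n >_grlex 0}; that is, there exists exactly one generalized series y_0 = Σ_{n >_grlex 0} c_n u^n with y_0 = F(u, y_0). -/
instance (r : ℕ) : WellFoundedLT (Fin r) := inferInstance

/-- `ℤ^r`, to be equipped with the graded lexicographic order. -/
def GrLexZ (r : ℕ) : Type := Fin r → ℤ

namespace GrLexZ

variable {r : ℕ}

instance : AddCommGroup (GrLexZ r) := inferInstanceAs (AddCommGroup (Fin r → ℤ))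

/-- The underlying function of an element of `GrLexZ r`. -/
def toFun (a : GrLexZ r) : Fin r → ℤ := a

@[simp] theorem toFun_add (a b : GrLexZ r) : toFun (a + b) = toFun a + toFun b := rfl

/-- The total degree `|a| = a₁ + ⋯ + a_r`. -/
def deg (a : GrLexZ r) : ℤ := ∑ i, toFun a i

theorem deg_add (a b : GrLexZ r) : deg (a + b) = deg a + deg b := by
  simp [deg, Finset.sum_add_distrib]

/-- The comparison key realizing the graded lexicographic order:
first the total degree, then the lexicographic order. -/
def key (a : GrLexZ r) : ℤ ×ₗ Lex (Fin r → ℤ) := toLex (deg a, toLex (toFun a))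

theorem key_injective : Function.Injective (key (r := r)) := by
  intro a b h
  have h2 : (ofLex (key a)).2 = (ofLex (key b)).2 := by rw [h]
  exact h2

theorem key_add (a b : GrLexZ r) : key (a + b) = key a + key b := by
  unfold key
  rw [deg_add]
  rfl

noncomputable instance : LinearOrder (GrLexZ r) := LinearOrder.lift' key key_injective

theorem le_iff_key {a b : GrLexZ r} : a ≤ b ↔ key a ≤ key b := Iff.rfl

instance : IsOrderedAddMonoid (GrLexZ r) :=
  { add_le_add_left := by
      intro a b hab c
      rw [le_iff_key, key_add, key_add]
      exact add_le_add (le_iff_key.mp hab) le_rfl }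

end GrLexZ


/-- The Mod condition for a generalized series with exponents in `ℤ^r`:
its support is contained in `c + ℕ^r` for some `c ∈ ℤ^r`. -/
def HasMod {r : ℕ} {K : Type*} [Field K] (x : HahnSeries (GrLexZ r) K) : Prop :=
  ∃ c : GrLexZ r, ∀ n ∈ x.support, ∀ i, GrLexZ.toFun c i ≤ GrLexZ.toFun n i

/-- A strongly reduced Henselian equation `y = F(u,y)`: `F` is a polynomial in `y` whose
coefficients satisfy the Mod condition and have valuation `>grlex 0`, and `F(u,0) ≠ 0`. -/
def StronglyReducedHenselian {r : ℕ} {K : Type*} [Field K]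
    (F : Polynomial (HahnSeries (GrLexZ r) K)) : Prop :=
  (∀ j, HasMod (F.coeff j)) ∧
  (∀ j, F.coeff j ≠ 0 → 0 < (F.coeff j).order) ∧
  F.coeff 0 ≠ 0

namespace GrLexZ

variable {r : ℕ}

theorem lt_iff_key {a b : GrLexZ r} : a < b ↔ key a < key b := by
  rw [lt_iff_le_not_ge, lt_iff_le_not_ge, le_iff_key, le_iff_key]

@[simp] theorem toFun_zero : toFun (0 : GrLexZ r) = 0 := rfl

@[simp] theorem deg_zero : deg (0 : GrLexZ r) = 0 := by simp [deg]

theorem pos_iff {x : GrLexZ r} :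
    0 < x ↔ 0 < deg x ∨ (deg x = 0 ∧ toLex (0 : Fin r → ℤ) < toLex (toFun x)) := by
  rw [lt_iff_key]
  unfold key
  rw [Prod.Lex.lt_iff]
  simp [eq_comm]

theorem deg_mono {a b : GrLexZ r} (h : a ≤ b) : deg a ≤ deg b := by
  rw [le_iff_key] at h
  unfold key at h
  rw [Prod.Lex.le_iff] at h
  rcases h with h | h
  · exact h.le
  · exact h.1.le

end GrLexZ
namespace HenselProofAux

open HahnSeries Polynomial Pointwise

variable {Γ : Type*} [AddCommGroup Γ] [LinearOrder Γ] [IsOrderedAddMonoid Γ] {K : Type*} [Field K]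

theorem support_sum_subset {ι : Type*} (s : Finset ι) (f : ι → HahnSeries Γ K) (T : Set Γ)
    (h : ∀ j ∈ s, (f j).support ⊆ T) : (∑ j ∈ s, f j).support ⊆ T := by
  classical
  induction s using Finset.induction_on with
  | empty => simp [HahnSeries.support_zero]
  | @insert a s ha ih =>
      rw [Finset.sum_insert ha]
      exact (HahnSeries.support_add_subset _ _).trans
        (Set.union_subset (h _ (Finset.mem_insert_self _ _))
          (ih fun j hj => h j (Finset.mem_insert_of_mem hj)))

theorem support_mul_subset {a b : HahnSeries Γ K} {T₁ T₂ T₃ : Set Γ} (ha : a.support ⊆ T₁)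
    (hb : b.support ⊆ T₂) (hT : T₁ + T₂ ⊆ T₃) : (a * b).support ⊆ T₃ :=
  HahnSeries.support_mul_subset.trans ((Set.add_subset_add ha hb).trans hT)

theorem support_pow_subset {a : HahnSeries Γ K} {T : Set Γ} (h0 : (0 : Γ) ∈ T)
    (hT : T + T ⊆ T) (ha : a.support ⊆ T) : ∀ i, (a ^ i).support ⊆ T := by
  intro i
  induction i with
  | zero =>
      rw [pow_zero]
      intro g hg
      rw [HahnSeries.support_one, Set.mem_singleton_iff] at hg
      rwa [hg]
  | succ n ih => rw [pow_succ]; exact support_mul_subset ih ha hT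

/-- The cofactor in the telescoping identity `F(a) - F(b) = (a-b) * Gfac F a b`. -/
noncomputable def Gfac (F : Polynomial (HahnSeries Γ K)) (a b : HahnSeries Γ K) :
    HahnSeries Γ K :=
  ∑ j ∈ Finset.range (F.natDegree + 1),
    F.coeff j * ∑ i ∈ Finset.range j, a ^ i * b ^ (j - 1 - i)

theorem eval_sub_eval (F : Polynomial (HahnSeries Γ K)) (a b : HahnSeries Γ K) :
    F.eval a - F.eval b = (a - b) * Gfac F a b := by
  rw [Polynomial.eval_eq_sum_range, Polynomial.eval_eq_sum_range, Gfac, Finset.mul_sum,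
    ← Finset.sum_sub_distrib]
  refine Finset.sum_congr rfl fun j _ => ?_
  have h := geom_sum₂_mul a b j
  calc F.coeff j * a ^ j - F.coeff j * b ^ j = F.coeff j * (a ^ j - b ^ j) := by ring
  _ = F.coeff j * ((∑ i ∈ Finset.range j, a ^ i * b ^ (j - 1 - i)) * (a - b)) := by rw [h]
  _ = (a - b) * (F.coeff j * ∑ i ∈ Finset.range j, a ^ i * b ^ (j - 1 - i)) := by ring

theorem support_Gfac (F : Polynomial (HahnSeries Γ K)) {a b : HahnSeries Γ K}
    {T₀ T₁ : Set Γ} (h0 : (0 : Γ) ∈ T₀) (hT00 : T₀ + T₀ ⊆ T₀) (hT10 : T₁ + T₀ ⊆ T₁)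
    (hcoeff : ∀ j, (F.coeff j).support ⊆ T₁)
    (ha : a.support ⊆ T₀) (hb : b.support ⊆ T₀) :
    (Gfac F a b).support ⊆ T₁ := by
  refine support_sum_subset _ _ _ fun j _ => ?_
  refine support_mul_subset (hcoeff j) ?_ hT10
  exact support_sum_subset _ _ _ fun i _ =>
    support_mul_subset (support_pow_subset h0 hT00 ha i) (support_pow_subset h0 hT00 hb _) hT00

theorem eval_support_subset (F : Polynomial (HahnSeries Γ K)) {a : HahnSeries Γ K}
    {T₀ T₁ : Set Γ} (h0 : (0 : Γ) ∈ T₀) (hT00 : T₀ + T₀ ⊆ T₀) (hT10 : T₁ + T₀ ⊆ T₁)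
    (hcoeff : ∀ j, (F.coeff j).support ⊆ T₁) (ha : a.support ⊆ T₀) :
    (F.eval a).support ⊆ T₁ := by
  rw [Polynomial.eval_eq_sum_range]
  exact support_sum_subset _ _ _ fun j _ =>
    support_mul_subset (hcoeff j) (support_pow_subset h0 hT00 ha j) hT10

end HenselProofAux
namespace HenselProofAux

/-- A positive additive functional on the grlex-positive, componentwise-bounded-below cone. -/
theorem key_functional {r : ℕ} (c : Fin r → ℤ) :
    ∃ μ : GrLexZ r → ℤ, (∀ a b, μ (a + b) = μ a + μ b) ∧
      ∀ x : GrLexZ r, 0 < x → (∀ i, c i ≤ GrLexZ.toFun x i) → 1 ≤ μ x := by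
  classical
  obtain ⟨B, hB1, hBc⟩ : ∃ B : ℤ, 1 ≤ B ∧ ∀ i, -B ≤ c i := by
    refine ⟨(∑ i, |c i|) + 1, ?_, ?_⟩
    · have : (0:ℤ) ≤ ∑ i, |c i| := Finset.sum_nonneg fun i _ => abs_nonneg _
      omega
    · intro i
      have h1 : |c i| ≤ ∑ i, |c i| :=
        Finset.single_le_sum (fun i _ => abs_nonneg (c i)) (Finset.mem_univ i)
      have h2 := neg_abs_le (c i)
      omega
  set M : ℤ := B + 1 with hM
  have hM2 : (2:ℤ) ≤ M := by omega
  have hw1 : ∀ e : ℕ, (1:ℤ) ≤ M ^ e := fun e => one_le_pow₀ (by omega)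
  have hw0 : ∀ e : ℕ, (0:ℤ) ≤ M ^ e := fun e => le_trans zero_le_one (hw1 e)
  set Cc : ℤ := B * ∑ i : Fin r, M ^ (r - 1 - (i:ℕ)) with hCc
  have hCc0 : (0:ℤ) ≤ Cc :=
    mul_nonneg (by omega) (Finset.sum_nonneg fun i _ => hw0 _)
  refine ⟨fun x => (Cc + 1) * GrLexZ.deg x + ∑ i : Fin r, M ^ (r - 1 - (i:ℕ)) * GrLexZ.toFun x i,
    ?_, ?_⟩
  · intro a b
    dsimp only
    rw [GrLexZ.deg_add]
    simp only [GrLexZ.toFun_add, Pi.add_apply, mul_add, Finset.sum_add_distrib]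
    ring
  · intro x hx hxc
    dsimp only
    have hxB : ∀ i, -B ≤ GrLexZ.toFun x i := fun i => le_trans (hBc i) (hxc i)
    have hlb : -Cc ≤ ∑ i : Fin r, M ^ (r - 1 - (i:ℕ)) * GrLexZ.toFun x i := by
      have h1 : ∀ i ∈ (Finset.univ : Finset (Fin r)), M ^ (r - 1 - (i:ℕ)) * (-B)
          ≤ M ^ (r - 1 - (i:ℕ)) * GrLexZ.toFun x i :=
        fun i _ => mul_le_mul_of_nonneg_left (hxB i) (hw0 _)
      have h2 := Finset.sum_le_sum h1
      have h3 : ∑ i : Fin r, M ^ (r - 1 - (i:ℕ)) * (-B) = -Cc := by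
        rw [hCc, Finset.mul_sum, ← Finset.sum_neg_distrib]
        exact Finset.sum_congr rfl fun i _ => by ring
      rw [h3] at h2
      exact h2
    rcases GrLexZ.pos_iff.1 hx with hd | ⟨hd0, hlex⟩
    · have h4 : Cc + 1 ≤ (Cc + 1) * GrLexZ.deg x :=
        le_mul_of_one_le_right (by omega) (by omega)
      linarith
    · rw [hd0, mul_zero, zero_add]
      have h' : ∃ i₀ : Fin r, (∀ j, j < i₀ → (0 : Fin r → ℤ) j = GrLexZ.toFun x j) ∧
          (0 : Fin r → ℤ) i₀ < GrLexZ.toFun x i₀ := hlex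
      obtain ⟨i₀, hz, hp⟩ := h'
      have hz' : ∀ j : Fin r, j < i₀ → GrLexZ.toFun x j = 0 := fun j hj => (hz j hj).symm
      have hp' : 1 ≤ GrLexZ.toFun x i₀ := by
        have : (0:ℤ) < GrLexZ.toFun x i₀ := hp
        omega
      have hterm : ∀ i ∈ (Finset.univ : Finset (Fin r)),
          ((if i = i₀ then M ^ (r - 1 - (i₀:ℕ)) else 0)
            + (if i₀ < i then -(B * M ^ (r - 1 - (i:ℕ))) else 0))
          ≤ M ^ (r - 1 - (i:ℕ)) * GrLexZ.toFun x i := by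
        intro i _
        rcases lt_trichotomy i i₀ with h | h | h
        · rw [if_neg (ne_of_lt h), if_neg (not_lt.2 h.le), hz' i h, mul_zero]
          omega
        · rw [if_pos h, if_neg (by rw [h]; exact lt_irrefl _), add_zero, h]
          exact le_mul_of_one_le_right (hw0 _) hp'
        · rw [if_neg (ne_of_gt h), if_pos h, zero_add]
          have h5 : M ^ (r - 1 - (i:ℕ)) * (-B) ≤ M ^ (r - 1 - (i:ℕ)) * GrLexZ.toFun x i :=
            mul_le_mul_of_nonneg_left (hxB i) (hw0 _)
          have h6 : -(B * M ^ (r - 1 - (i:ℕ))) = M ^ (r - 1 - (i:ℕ)) * (-B) := by ring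
          rw [h6]
          exact h5
      have hsum := Finset.sum_le_sum hterm
      have hsplit : ∑ i : Fin r, ((if i = i₀ then M ^ (r - 1 - (i₀:ℕ)) else 0)
            + (if i₀ < i then -(B * M ^ (r - 1 - (i:ℕ))) else 0))
          = M ^ (r - 1 - (i₀:ℕ))
            + ∑ i ∈ Finset.univ.filter (fun i : Fin r => i₀ < i), -(B * M ^ (r - 1 - (i:ℕ))) := by
        rw [Finset.sum_add_distrib, Finset.sum_ite_eq' Finset.univ i₀
          (fun _ => M ^ (r - 1 - (i₀:ℕ))), if_pos (Finset.mem_univ _), ← Finset.sum_filter]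
      have hfin : ∑ i ∈ Finset.univ.filter (fun i : Fin r => i₀ < i), B * M ^ (r - 1 - (i:ℕ))
          ≤ M ^ (r - 1 - (i₀:ℕ)) - 1 := by
        have hinj : ∀ a ∈ Finset.univ.filter (fun i : Fin r => i₀ < i),
            ∀ b ∈ Finset.univ.filter (fun i : Fin r => i₀ < i),
            r - 1 - (a:ℕ) = r - 1 - (b:ℕ) → a = b := by
          intro a _ b _ hab
          have ha2 : (a:ℕ) < r := a.2
          have hb2 : (b:ℕ) < r := b.2
          exact Fin.ext (by omega)
        have himg : ∑ i ∈ Finset.univ.filter (fun i : Fin r => i₀ < i), M ^ (r - 1 - (i:ℕ))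
            = ∑ e ∈ (Finset.univ.filter (fun i : Fin r => i₀ < i)).image
                (fun i : Fin r => r - 1 - (i:ℕ)), M ^ e :=
          (Finset.sum_image hinj).symm
        have hsub : (Finset.univ.filter (fun i : Fin r => i₀ < i)).image
            (fun i : Fin r => r - 1 - (i:ℕ)) ⊆ Finset.range (r - 1 - (i₀:ℕ)) := by
          intro e he
          rw [Finset.mem_image] at he
          obtain ⟨i, hi, rfl⟩ := he
          rw [Finset.mem_filter] at hi
          have h1 : (i₀:ℕ) < (i:ℕ) := hi.2
          have h2 : (i:ℕ) < r := i.2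
          rw [Finset.mem_range]
          omega
        have hle : ∑ e ∈ (Finset.univ.filter (fun i : Fin r => i₀ < i)).image
              (fun i : Fin r => r - 1 - (i:ℕ)), M ^ e
            ≤ ∑ e ∈ Finset.range (r - 1 - (i₀:ℕ)), M ^ e :=
          Finset.sum_le_sum_of_subset_of_nonneg hsub fun e _ _ => hw0 e
        have hgeom : (∑ e ∈ Finset.range (r - 1 - (i₀:ℕ)), M ^ e) * (M - 1)
            = M ^ (r - 1 - (i₀:ℕ)) - 1 := geom_sum_mul M _
        have hMB : M - 1 = B := by omega
        calc ∑ i ∈ Finset.univ.filter (fun i : Fin r => i₀ < i), B * M ^ (r - 1 - (i:ℕ))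
            = B * ∑ i ∈ Finset.univ.filter (fun i : Fin r => i₀ < i), M ^ (r - 1 - (i:ℕ)) := by
              rw [Finset.mul_sum]
          _ = B * ∑ e ∈ (Finset.univ.filter (fun i : Fin r => i₀ < i)).image
                (fun i : Fin r => r - 1 - (i:ℕ)), M ^ e := by rw [himg]
          _ ≤ B * ∑ e ∈ Finset.range (r - 1 - (i₀:ℕ)), M ^ e :=
              mul_le_mul_of_nonneg_left hle (by omega)
          _ = (∑ e ∈ Finset.range (r - 1 - (i₀:ℕ)), M ^ e) * (M - 1) := by
              rw [hMB]; ring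
          _ = M ^ (r - 1 - (i₀:ℕ)) - 1 := hgeom
      have hneg : ∑ i ∈ Finset.univ.filter (fun i : Fin r => i₀ < i),
            -(B * M ^ (r - 1 - (i:ℕ)))
          = -∑ i ∈ Finset.univ.filter (fun i : Fin r => i₀ < i), B * M ^ (r - 1 - (i:ℕ)) := by
        rw [← Finset.sum_neg_distrib]
      rw [hsplit, hneg] at hsum
      linarith
  
end HenselProofAux
namespace HenselProofAux

variable {Γ : Type*} [AddCommGroup Γ] [LinearOrder Γ] [IsOrderedAddMonoid Γ] {K : Type*} [Field K]

open HahnSeries Polynomial Pointwise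

theorem exists_unique_fixed (μ : Γ → ℤ) (hμadd : ∀ a b, μ (a + b) = μ a + μ b)
    (S₀ : Set Γ) (hpos : ∀ x ∈ S₀, 0 < x) (hμ1 : ∀ x ∈ S₀, 1 ≤ μ x) (hpwo : S₀.IsPWO)
    (F : Polynomial (HahnSeries Γ K)) (hsupp : ∀ j, (F.coeff j).support ⊆ S₀) :
    ∃! y0 : HahnSeries Γ K, (∀ n ∈ y0.support, 0 < n) ∧ Polynomial.eval y0 F = y0 := by
  classical
  have hμ0 : μ 0 = 0 := by have := hμadd 0 0; simp only [add_zero] at this; omega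
  set Mon := AddSubmonoid.closure S₀ with hMonDef
  have hMon_nonneg : ∀ x ∈ Mon, 0 ≤ x := by
    intro x hx
    have h : Mon ≤ ⟨⟨{y : Γ | 0 ≤ y}, fun {a b} ha hb => add_nonneg ha hb⟩, le_rfl⟩ :=
      AddSubmonoid.closure_le.2 fun y hy => (hpos y hy).le
    exact h hx
  have hMon_μ : ∀ x ∈ Mon, 0 ≤ μ x := by
    intro x hx
    have h : Mon ≤ ⟨⟨{y : Γ | 0 ≤ μ y}, fun {a b} ha hb => by
        simp only [Set.mem_setOf_eq] at *; rw [hμadd]; omega⟩, by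
        simp only [Set.mem_setOf_eq, hμ0]; exact le_rfl⟩ :=
      AddSubmonoid.closure_le.2 fun y hy => by
        have := hμ1 y hy; show (0:ℤ) ≤ μ y; omega
    exact h hx
  set E : ℕ → Set Γ := fun k => {x | x ∈ Mon ∧ (k : ℤ) ≤ μ x} with hEdef
  have hE_add : ∀ k l, E k + E l ⊆ E (k + l) := by
    rintro k l x ⟨a, ha, b, hb, rfl⟩
    refine ⟨Mon.add_mem ha.1 hb.1, ?_⟩
    rw [hμadd]
    push_cast
    have := ha.2; have := hb.2
    omega
  have hE_mono : ∀ {k l : ℕ}, k ≤ l → E l ⊆ E k := by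
    intro k l hkl x hx
    refine ⟨hx.1, le_trans ?_ hx.2⟩
    exact_mod_cast hkl
  have hE0_zero : (0 : Γ) ∈ E 0 := ⟨Mon.zero_mem, by norm_num [hμ0]⟩
  have hS₀E1 : S₀ ⊆ E 1 := fun x hx =>
    ⟨AddSubmonoid.subset_closure hx, by exact_mod_cast hμ1 x hx⟩
  have hcoeffE1 : ∀ j, (F.coeff j).support ⊆ E 1 := fun j => (hsupp j).trans hS₀E1
  have hE1_pwo : (E 1).IsPWO :=
    (hpwo.addSubmonoid_closure fun x hx => (hpos x hx).le).mono fun x hx => hx.1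
  have hE_pos : ∀ x ∈ E 1, 0 < x := by
    intro x hx
    rcases (hMon_nonneg x hx.1).lt_or_eq with h | h
    · exact h
    · exfalso
      have h2 := hx.2
      rw [← h, hμ0] at h2
      omega
  have hE10 : E 1 + E 0 ⊆ E 1 := hE_add 1 0
  have hE00 : E 0 + E 0 ⊆ E 0 := hE_add 0 0
  have hE1E0 : E 1 ⊆ E 0 := hE_mono (Nat.zero_le 1)
  -- the iteration
  set y : ℕ → HahnSeries Γ K := fun k => (fun z => F.eval z)^[k] 0 with hydef
  have hy_succ : ∀ k, y (k + 1) = F.eval (y k) := fun k => Function.iterate_succ_apply' _ _ _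
  have hy0 : y 0 = 0 := rfl
  have hy_supp : ∀ k, (y k).support ⊆ E 1 := by
    intro k; induction k with
    | zero => rw [hy0, HahnSeries.support_zero]; exact Set.empty_subset _
    | succ n ih =>
        rw [hy_succ]
        exact eval_support_subset F hE0_zero hE00 hE10 hcoeffE1 (ih.trans hE1E0)
  have hdiff : ∀ k, (y (k + 1) - y k).support ⊆ E (k + 1) := by
    intro k; induction k with
    | zero =>
        rw [hy_succ, hy0, sub_zero]
        refine eval_support_subset F hE0_zero hE00 hE10 hcoeffE1 ?_
        rw [HahnSeries.support_zero]; exact Set.empty_subset _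
    | succ n ih =>
        have heq : y (n + 1 + 1) - y (n + 1) = (y (n + 1) - y n) * Gfac F (y (n + 1)) (y n) := by
          have h := eval_sub_eval F (y (n + 1)) (y n)
          rw [← hy_succ, ← hy_succ] at h
          exact h
        rw [heq]
        exact support_mul_subset ih
          (support_Gfac F hE0_zero hE00 hE10 hcoeffE1 ((hy_supp _).trans hE1E0)
            ((hy_supp _).trans hE1E0)) (hE_add (n + 1) 1)
  -- the limit
  set c : Γ → K := fun n => (y ((μ n).toNat + 1)).coeff n with hcdef
  have hstab : ∀ n k, (μ n).toNat + 1 ≤ k → (y k).coeff n = c n := by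
    intro n k hk
    induction k, hk using Nat.le_induction with
    | base => rfl
    | succ k hk ih =>
        have hnot : n ∉ (y (k + 1) - y k).support := by
          intro hn
          have h2 := (hdiff k hn).2
          have h3 : (μ n) ≤ ((μ n).toNat : ℤ) := Int.self_le_toNat _
          push_cast at h2
          omega
        rw [HahnSeries.mem_support, not_not, HahnSeries.coeff_sub, sub_eq_zero] at hnot
        rw [hnot]
        exact ih
  have hc_pwo : (Function.support c).IsPWO := by
    refine hE1_pwo.mono fun n hn => hy_supp ((μ n).toNat + 1) ?_
    exact hn
  set yl : HahnSeries Γ K := ⟨c, hc_pwo⟩ with hyl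
  have hyl_coeff : ∀ n, yl.coeff n = c n := fun n => rfl
  have hyl_supp : yl.support ⊆ E 1 := fun n hn => hy_supp ((μ n).toNat + 1) hn
  have hdiffl : ∀ k, (yl - y k).support ⊆ E k := by
    intro k n hn
    rw [HahnSeries.mem_support, HahnSeries.coeff_sub] at hn
    have hne : yl.coeff n - (y k).coeff n ≠ 0 := hn
    have hmem1 : n ∈ E 1 := by
      by_cases h : yl.coeff n = 0
      · refine hy_supp k ?_
        rw [HahnSeries.mem_support]
        intro h2
        exact hne (by rw [h, h2, sub_zero])
      · exact hyl_supp h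
    have hKk : ¬((μ n).toNat + 1 ≤ k) := by
      intro h
      exact hne (by rw [hstab n k h, hyl_coeff, sub_self])
    refine ⟨hmem1.1, ?_⟩
    have h0μ : (0 : ℤ) ≤ μ n := hMon_μ n hmem1.1
    have h3 := Int.toNat_of_nonneg h0μ
    omega
  have hfix : Polynomial.eval yl F = yl := by
    apply HahnSeries.ext
    funext n
    have h1 : (F.eval yl - F.eval (y ((μ n).toNat + 1))).support ⊆ E ((μ n).toNat + 1 + 1) := by
      rw [eval_sub_eval]
      exact support_mul_subset (hdiffl _)
        (support_Gfac F hE0_zero hE00 hE10 hcoeffE1 (hyl_supp.trans hE1E0)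
          ((hy_supp _).trans hE1E0)) (hE_add _ 1)
    have h2 : n ∉ E ((μ n).toNat + 1 + 1) := by
      rintro ⟨-, h⟩
      have h3 : (μ n) ≤ ((μ n).toNat : ℤ) := Int.self_le_toNat _
      push_cast at h
      omega
    have h4 : (F.eval yl).coeff n - (F.eval (y ((μ n).toNat + 1))).coeff n = 0 := by
      rw [← HahnSeries.coeff_sub]
      by_contra h5
      exact h2 (h1 h5)
    have h6 : (F.eval (y ((μ n).toNat + 1))).coeff n = c n := by
      rw [← hy_succ]
      exact hstab n ((μ n).toNat + 1 + 1) (Nat.le_succ _)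
    rw [hyl_coeff, ← h6]
    exact sub_eq_zero.mp h4
  refine ⟨yl, ⟨fun n hn => hE_pos n (hyl_supp hn), hfix⟩, ?_⟩
  rintro z ⟨hzpos, hzfix⟩
  by_contra hne
  have hd : z - yl ≠ 0 := sub_ne_zero.2 hne
  have hGsupp : (Gfac F z yl).support ⊆ {x : Γ | 0 < x} := by
    refine support_Gfac F (T₀ := {x : Γ | 0 ≤ x}) (T₁ := {x : Γ | 0 < x}) le_rfl ?_ ?_ ?_ ?_ ?_
    · rintro x ⟨a, ha, b, hb, rfl⟩; exact add_nonneg ha hb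
    · rintro x ⟨a, ha, b, hb, rfl⟩; exact add_pos_of_pos_of_nonneg ha hb
    · exact fun j => (hsupp j).trans fun x hx => hpos x hx
    · exact fun n hn => (hzpos n hn).le
    · exact fun n hn => (hE_pos n (hyl_supp hn)).le
  have heq : z - yl = (z - yl) * Gfac F z yl := by
    conv_lhs => rw [← hzfix, ← hfix]
    exact eval_sub_eval F z yl
  have hm : (z - yl).coeff (z - yl).order ≠ 0 := fun h => hd (HahnSeries.coeff_order_eq_zero.mp h)
  have hmem : (z - yl).order ∈ ((z - yl) * Gfac F z yl).support := by
    rw [← heq]; exact hm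
  obtain ⟨a, ha, b, hb, hab⟩ := HahnSeries.support_mul_subset hmem
  have h1 : (z - yl).order ≤ a := HahnSeries.order_le_of_coeff_ne_zero ha
  have h2 : (0 : Γ) < b := hGsupp hb
  have : (z - yl).order < (z - yl).order := by
    calc (z - yl).order ≤ a := h1
    _ < a + b := lt_add_of_pos_right a h2
    _ = (z - yl).order := hab
  exact absurd this (lt_irrefl _)

end HenselProofAux
namespace HenselProofAux

/-- The set of grlex-positive lattice points bounded below componentwise is
partially well-ordered for the grlex order. -/
theorem isPWO_cone {r : ℕ} (c : Fin r → ℤ) :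
    ({x : GrLexZ r | 0 < x ∧ ∀ i, c i ≤ GrLexZ.toFun x i}).IsPWO := by
  classical
  refine Set.IsWF.isPWO ?_
  rw [Set.isWF_iff_no_descending_seq]
  intro f hf hmem
  have hm : ∀ n : ℕ, 0 < f n ∧ ∀ i, c i ≤ GrLexZ.toFun (f n) i := fun n => hmem n
  have hmono : ∀ n : ℕ, f n ≤ f 0 := fun n => hf.antitone (Nat.zero_le n)
  set d : ℤ := GrLexZ.deg (f 0) with hd
  set U : Set (GrLexZ r) :=
    {x | (∀ i, c i ≤ GrLexZ.toFun x i) ∧ 0 ≤ GrLexZ.deg x ∧ GrLexZ.deg x ≤ d} with hU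
  have hfU : ∀ n, f n ∈ U := by
    intro n
    obtain ⟨hpos, hcn⟩ := hm n
    refine ⟨hcn, ?_, GrLexZ.deg_mono (hmono n)⟩
    rcases GrLexZ.pos_iff.1 hpos with h | h
    · exact h.le
    · exact h.1.ge
  have hUfin : U.Finite := by
    set ub : Fin r → ℤ := fun i => d - ∑ j ∈ Finset.univ.erase i, c j with hub
    have hsub : U ⊆ GrLexZ.toFun ⁻¹' (Set.Icc c ub) := by
      intro x hx
      obtain ⟨hcx, hd0, hdle⟩ := hx
      rw [Set.mem_preimage, Set.mem_Icc]
      refine ⟨fun i => hcx i, fun i => ?_⟩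
      have h1 : GrLexZ.toFun x i + ∑ j ∈ Finset.univ.erase i, GrLexZ.toFun x j
          = GrLexZ.deg x := Finset.add_sum_erase _ _ (Finset.mem_univ i)
      have h2 : ∑ j ∈ Finset.univ.erase i, c j
          ≤ ∑ j ∈ Finset.univ.erase i, GrLexZ.toFun x j :=
        Finset.sum_le_sum fun j _ => hcx j
      show GrLexZ.toFun x i ≤ d - ∑ j ∈ Finset.univ.erase i, c j
      omega
    refine Set.Finite.subset (Set.Finite.preimage ?_ (Set.finite_Icc c ub)) hsub
    exact Function.Injective.injOn fun a b h => h
  exact (Set.infinite_of_injective_forall_mem hf.injective hfU) hUfin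

end HenselProofAux

/-- **Hensel's lemma for strongly reduced Henselian equations.**
Any strongly reduced Henselian equation `y = F(u,y)` admits a unique solution
`y₀ = Σ_{n >grlex 0} c_n uⁿ` in `K((u^(ℤ^r)))^grlex` with support contained in
`{n : n >grlex 0}`. -/
theorem strongly_reduced_henselian_unique_solution {K : Type*} [Field K] [CharZero K]
    {r : ℕ} (hr : 1 ≤ r) (F : Polynomial (HahnSeries (GrLexZ r) K))
    (hF : StronglyReducedHenselian F) :
    ∃! y0 : HahnSeries (GrLexZ r) K,
      (∀ n ∈ y0.support, 0 < n) ∧ Polynomial.eval y0 F = y0 := by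
  classical
  obtain ⟨hmod, hord, -⟩ := hF
  have hne : (Finset.range (F.natDegree + 1)).Nonempty := ⟨0, by simp⟩
  set c : Fin r → ℤ := fun i =>
    (Finset.range (F.natDegree + 1)).inf' hne
      (fun j => GrLexZ.toFun (Classical.choose (hmod j)) i) with hc
  have hc_le : ∀ j, ∀ n ∈ (F.coeff j).support, ∀ i, c i ≤ GrLexZ.toFun n i := by
    intro j n hn i
    by_cases hj : j ≤ F.natDegree
    · refine le_trans (Finset.inf'_le _ (Finset.mem_range.2 (Nat.lt_succ_of_le hj))) ?_
      exact Classical.choose_spec (hmod j) n hn i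
    · exfalso
      have h0 : F.coeff j = 0 := Polynomial.coeff_eq_zero_of_natDegree_lt (by omega)
      rw [h0, HahnSeries.support_zero] at hn
      exact hn
  obtain ⟨μ, hμadd, hμ1⟩ := HenselProofAux.key_functional c
  set S₀ : Set (GrLexZ r) := {x | 0 < x ∧ ∀ i, c i ≤ GrLexZ.toFun x i} with hS₀
  have hsupp : ∀ j, (F.coeff j).support ⊆ S₀ := by
    intro j n hn
    have hne0 : F.coeff j ≠ 0 := by
      intro h0; rw [h0, HahnSeries.support_zero] at hn; exact hn
    have h1 : (F.coeff j).order ≤ n :=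
      HahnSeries.order_le_of_coeff_ne_zero ((HahnSeries.mem_support _ _).1 hn)
    exact ⟨lt_of_lt_of_le (hord j hne0) h1, fun i => hc_le j n hn i⟩
  exact HenselProofAux.exists_unique_fixed μ hμadd S₀ (fun x hx => hx.1)
    (fun x hx => hμ1 x hx.1 hx.2) (HenselProofAux.isPWO_cone c) F hsupp
end

section
/- Let P ∈ K[[u_1,…,u_r]][y] be a nonzero polynomial and let y_0 = Σ_{n∈ℕ^r} c_n u^n ∈ K[[u_1,…,u_r]] be a power series with c_0 ≠ 0. Then y_0 is a root of P (i.e., P(u, y_0) = 0) if and only if the sequence (i_k)_{k∈ℕ^r} is strictly increasing for the graded lexicographic order, i.e., i_k <_grlex i_{k'} whenever k <_grlex k'. -/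
open scoped Classical

/-- Total degree of a multi-index. -/
def degOf {r : ℕ} (a : Fin r →₀ ℕ) : ℕ := a.sum fun _ v => v

/-- Strict graded lexicographic order on `ℕ^r`. -/
def grlt {r : ℕ} (a b : Fin r →₀ ℕ) : Prop :=
  degOf a < degOf b ∨ (degOf a = degOf b ∧ toLex a < toLex b)

/-- Graded lexicographic order on `ℕ^r`. -/
def grle {r : ℕ} (a b : Fin r →₀ ℕ) : Prop := grlt a b ∨ a = b

/-- `S` is the successor function of `(ℕ^r, ≤_grlex)`. -/
def IsSucc {r : ℕ} (S : (Fin r →₀ ℕ) → (Fin r →₀ ℕ)) : Prop :=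
  ∀ k, grlt k (S k) ∧ ∀ m, grlt k m → grle (S k) m

/-- The truncation `z_k = Σ_{n ≤grlex k} c_n u^n` of a power series. -/
noncomputable def zk {K : Type*} [Field K] {r : ℕ}
    (y0 : MvPowerSeries (Fin r) K) (k : Fin r →₀ ℕ) : MvPowerSeries (Fin r) K :=
  fun n => if grle n k then MvPowerSeries.coeff n y0 else 0

/-- `P_k(u,y) := P(u, z_k + u^(S k) · y)`. -/
noncomputable def Pk {K : Type*} [Field K] {r : ℕ}
    (P : Polynomial (MvPowerSeries (Fin r) K)) (y0 : MvPowerSeries (Fin r) K)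
    (S : (Fin r →₀ ℕ) → (Fin r →₀ ℕ)) (k : Fin r →₀ ℕ) :
    Polynomial (MvPowerSeries (Fin r) K) :=
  P.comp (Polynomial.C (zk y0 k) +
    Polynomial.C ((MvPowerSeries.monomial (S k)) (1 : K)) * Polynomial.X)

/-- `d` is the valuation `w(Q)` of a polynomial `Q` with power series coefficients:
the `≤grlex`-least exponent appearing in some coefficient of `Q`. -/
def IsW {K : Type*} [Field K] {r : ℕ}
    (Q : Polynomial (MvPowerSeries (Fin r) K)) (d : Fin r →₀ ℕ) : Prop :=
  (∃ j, MvPowerSeries.coeff d (Q.coeff j) ≠ 0) ∧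
  ∀ e, grlt e d → ∀ j, MvPowerSeries.coeff e (Q.coeff j) = 0

namespace GrlexAux

variable {r : ℕ}

lemma degOf_eq (a : Fin r →₀ ℕ) : degOf a = ∑ i, a i := by
  rw [degOf, Finsupp.sum_fintype]; intro; rfl

lemma degOf_add (a b : Fin r →₀ ℕ) : degOf (a + b) = degOf a + degOf b := by
  simp [degOf_eq, Finset.sum_add_distrib]

lemma eq_of_le_of_degOf_eq {a b : Fin r →₀ ℕ} (h : ∀ i, a i ≤ b i)
    (hd : degOf a = degOf b) : a = b := by
  ext i
  by_contra hne
  have hlt : a i < b i := lt_of_le_of_ne (h i) hne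
  have : degOf a < degOf b := by
    rw [degOf_eq, degOf_eq]
    exact Finset.sum_lt_sum (fun j _ => h j) ⟨i, Finset.mem_univ i, hlt⟩
  omega

lemma grle_of_le {a b : Fin r →₀ ℕ} (h : ∀ i, a i ≤ b i) : grle a b := by
  rcases lt_or_eq_of_le (Finset.sum_le_sum (fun j (_ : j ∈ Finset.univ) => h j) :
      ∑ i, a i ≤ ∑ i, b i) with hlt | heq
  · exact Or.inl (Or.inl (by rwa [degOf_eq, degOf_eq]))
  · exact Or.inr (eq_of_le_of_degOf_eq h (by rwa [degOf_eq, degOf_eq]))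

lemma grlt_irrefl (a : Fin r →₀ ℕ) : ¬ grlt a a := by
  rintro (h | ⟨-, h⟩)
  · exact lt_irrefl _ h
  · exact lt_irrefl _ h

lemma grlt_trans {a b c : Fin r →₀ ℕ} (h1 : grlt a b) (h2 : grlt b c) : grlt a c := by
  rcases h1 with h1 | ⟨e1, l1⟩ <;> rcases h2 with h2 | ⟨e2, l2⟩
  · exact Or.inl (h1.trans h2)
  · exact Or.inl (e2 ▸ h1)
  · exact Or.inl (e1 ▸ h2)
  · exact Or.inr ⟨e1.trans e2, l1.trans l2⟩

lemma grlt_trichotomy (a b : Fin r →₀ ℕ) : grlt a b ∨ a = b ∨ grlt b a := by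
  rcases lt_trichotomy (degOf a) (degOf b) with h | h | h
  · exact Or.inl (Or.inl h)
  · rcases lt_trichotomy (toLex a) (toLex b) with hl | hl | hl
    · exact Or.inl (Or.inr ⟨h, hl⟩)
    · exact Or.inr (Or.inl (by exact_mod_cast hl))
    · exact Or.inr (Or.inr (Or.inr ⟨h.symm, hl⟩))
  · exact Or.inr (Or.inr (Or.inl h))

lemma grle_refl (a : Fin r →₀ ℕ) : grle a a := Or.inr rfl

lemma grlt_of_grlt_of_grle {a b c : Fin r →₀ ℕ} (h1 : grlt a b) (h2 : grle b c) : grlt a c := by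
  rcases h2 with h2 | rfl
  · exact grlt_trans h1 h2
  · exact h1

lemma grlt_of_grle_of_grlt {a b c : Fin r →₀ ℕ} (h1 : grle a b) (h2 : grlt b c) : grlt a c := by
  rcases h1 with h1 | rfl
  · exact grlt_trans h1 h2
  · exact h2

lemma grle_trans {a b c : Fin r →₀ ℕ} (h1 : grle a b) (h2 : grle b c) : grle a c := by
  rcases h1 with h1 | rfl
  · exact Or.inl (grlt_of_grlt_of_grle h1 h2)
  · exact h2

lemma grle_of_not_grlt {a b : Fin r →₀ ℕ} (h : ¬ grlt a b) : grle b a := by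
  rcases grlt_trichotomy a b with h1 | rfl | h1
  · exact absurd h1 h
  · exact grle_refl _
  · exact Or.inl h1

lemma not_grlt_of_grle {a b : Fin r →₀ ℕ} (h : grle a b) : ¬ grlt b a := fun h' =>
  grlt_irrefl a (grlt_of_grle_of_grlt h h')

lemma grlt_add_right {a b : Fin r →₀ ℕ} (h : grlt a b) (c : Fin r →₀ ℕ) :
    grlt (a + c) (b + c) := by
  rcases h with h | ⟨e, l⟩
  · exact Or.inl (by rw [degOf_add, degOf_add]; omega)
  · refine Or.inr ⟨by rw [degOf_add, degOf_add, e], ?_⟩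
    exact add_lt_add_left (α := Lex (Fin r →₀ ℕ)) l (toLex c)

lemma grlt_add_left {a b : Fin r →₀ ℕ} (h : grlt a b) (c : Fin r →₀ ℕ) :
    grlt (c + a) (c + b) := by
  rw [add_comm c a, add_comm c b]; exact grlt_add_right h c

lemma grle_add {a b c d : Fin r →₀ ℕ} (h1 : grle a b) (h2 : grle c d) :
    grle (a + c) (b + d) := by
  rcases h1 with h1 | rfl
  · rcases h2 with h2 | rfl
    · exact Or.inl (grlt_trans (grlt_add_right h1 c) (grlt_add_left h2 b))
    · exact Or.inl (grlt_add_right h1 c)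
  · rcases h2 with h2 | rfl
    · exact Or.inl (grlt_add_left h2 a)
    · exact grle_refl _

lemma grlt_of_add_right {a b c : Fin r →₀ ℕ} (h : grlt (a + c) (b + c)) : grlt a b := by
  rcases grlt_trichotomy a b with h1 | rfl | h1
  · exact h1
  · exact absurd h (grlt_irrefl _)
  · exact absurd (grlt_trans h (grlt_add_right h1 c)) (grlt_irrefl _)

lemma grle_smul {a b : Fin r →₀ ℕ} (h : grle a b) (j : ℕ) : grle (j • a) (j • b) := by
  induction j with
  | zero => simp [grle_refl]
  | succ n ih => rw [succ_nsmul, succ_nsmul]; exact grle_add ih h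

lemma grlt_smul {a b : Fin r →₀ ℕ} (h : grlt a b) {j : ℕ} (hj : 1 ≤ j) :
    grlt (j • a) (j • b) := by
  obtain ⟨n, rfl⟩ := Nat.exists_eq_add_of_le hj
  rw [add_comm, succ_nsmul, succ_nsmul]
  exact grlt_of_grle_of_grlt (grle_add (grle_smul (Or.inl h) n) (grle_refl a))
    (grlt_add_left h _)

lemma not_grlt_zero (e : Fin r →₀ ℕ) : ¬ grlt e 0 := by
  rintro (h | ⟨hd, hl⟩)
  · simp [degOf_eq] at h
  · have : e = 0 := by
      ext i
      have := hd
      simp only [degOf_eq] at this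
      have h0 : ∑ i, e i = 0 := by simpa using this
      have := Finset.sum_eq_zero_iff.mp h0 i (Finset.mem_univ i)
      simpa using this
    rw [this] at hl
    exact lt_irrefl _ hl

lemma finite_grle (b : Fin r →₀ ℕ) : {a : Fin r →₀ ℕ | grle a b}.Finite := by
  have hsub : {a : Fin r →₀ ℕ | grle a b} ⊆
      (fun (a : Fin r →₀ ℕ) (i : Fin r) => a i) ⁻¹'
        (Set.pi Set.univ fun _ : Fin r => Set.Iic (degOf b)) := by
    intro a ha
    intro i _
    have hd : degOf a ≤ degOf b := by
      rcases ha with h | rfl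
      · rcases h with h | ⟨h, -⟩ <;> omega
      · exact le_rfl
    have : a i ≤ degOf a := by
      rw [degOf_eq]
      exact Finset.single_le_sum (fun j _ => Nat.zero_le (a j)) (Finset.mem_univ i)
    exact le_trans this hd
  have hfin : (Set.pi Set.univ fun _ : Fin r => Set.Iic (degOf b)).Finite :=
    Set.Finite.pi fun _ => Set.finite_Iic _
  exact (hfin.preimage (Function.Injective.injOn (by
    intro a b h
    exact Finsupp.ext (fun i => congrFun h i)))).subset hsub

lemma finset_exists_min (t : Finset (Fin r →₀ ℕ)) (ht : t.Nonempty) :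
    ∃ m ∈ t, ∀ e ∈ t, grle m e := by
  classical
  induction t using Finset.induction_on with
  | empty => exact absurd ht (by simp)
  | @insert a s ha ih =>
    rcases s.eq_empty_or_nonempty with rfl | hs
    · exact ⟨a, by simp, by simp [grle_refl]⟩
    · obtain ⟨m, hm, hmin⟩ := ih hs
      rcases grlt_trichotomy a m with h | heq | h
      · refine ⟨a, Finset.mem_insert_self _ _, ?_⟩
        intro e he
        rcases Finset.mem_insert.mp he with rfl | he
        · exact grle_refl _
        · exact grle_trans (Or.inl h) (hmin e he)
      · refine ⟨a, Finset.mem_insert_self _ _, ?_⟩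
        intro e he
        rcases Finset.mem_insert.mp he with rfl | he
        · exact grle_refl _
        · exact heq ▸ hmin e he
      · refine ⟨m, Finset.mem_insert_of_mem hm, ?_⟩
        intro e he
        rcases Finset.mem_insert.mp he with rfl | he
        · exact Or.inl h
        · exact hmin e he

lemma exists_min {s : Set (Fin r →₀ ℕ)} (hs : s.Nonempty) :
    ∃ m ∈ s, ∀ e ∈ s, grle m e := by
  obtain ⟨a, ha⟩ := hs
  have hfin : (s ∩ {e | grle e a}).Finite := (finite_grle a).subset (Set.inter_subset_right)
  have hne : (hfin.toFinset).Nonempty := by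
    refine ⟨a, ?_⟩
    rw [Set.Finite.mem_toFinset]
    exact ⟨ha, grle_refl a⟩
  obtain ⟨m, hm, hmin⟩ := finset_exists_min _ hne
  rw [Set.Finite.mem_toFinset] at hm
  refine ⟨m, hm.1, fun e he => ?_⟩
  rcases grlt_trichotomy m e with h | rfl | h
  · exact Or.inl h
  · exact grle_refl _
  · have het : e ∈ hfin.toFinset := by
      rw [Set.Finite.mem_toFinset]
      exact ⟨he, grle_trans (Or.inl h) hm.2⟩
    exact absurd (grlt_of_grle_of_grlt (hmin e het) h) (grlt_irrefl _)

section Series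
variable {K : Type*} [Field K] {r : ℕ}
open MvPowerSeries

/-- `Vbd f a` : all coefficients of `f` at exponents `<grlex a` vanish. -/
def Vbd (f : MvPowerSeries (Fin r) K) (a : Fin r →₀ ℕ) : Prop :=
  ∀ e, grlt e a → MvPowerSeries.coeff e f = 0

lemma Vbd_mul {f g : MvPowerSeries (Fin r) K} {a b : Fin r →₀ ℕ}
    (hf : Vbd f a) (hg : Vbd g b) : Vbd (f * g) (a + b) := by
  intro e he
  classical
  rw [MvPowerSeries.coeff_mul]
  refine Finset.sum_eq_zero fun p hp => ?_
  have hpq : p.1 + p.2 = e := Finset.HasAntidiagonal.mem_antidiagonal.mp hp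
  by_cases h1 : MvPowerSeries.coeff p.1 f = 0
  · rw [h1, zero_mul]
  by_cases h2 : MvPowerSeries.coeff p.2 g = 0
  · rw [h2, mul_zero]
  exfalso
  have ha : grle a p.1 := grle_of_not_grlt fun h => h1 (hf _ h)
  have hb : grle b p.2 := grle_of_not_grlt fun h => h2 (hg _ h)
  have : grle (a + b) e := hpq ▸ grle_add ha hb
  exact grlt_irrefl _ (grlt_of_grlt_of_grle he this)

lemma Vbd_pow {f : MvPowerSeries (Fin r) K} {a : Fin r →₀ ℕ} (hf : Vbd f a) (n : ℕ) :
    Vbd (f ^ n) (n • a) := by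
  induction n with
  | zero =>
    intro e he
    exact absurd (by simpa using he) (not_grlt_zero e)
  | succ n ih =>
    rw [pow_succ, succ_nsmul]
    exact Vbd_mul ih hf

lemma Vbd_monomial (m : Fin r →₀ ℕ) : Vbd (MvPowerSeries.monomial m (1 : K)) m := by
  intro e he
  classical
  rw [MvPowerSeries.coeff_monomial, if_neg]
  rintro rfl
  exact grlt_irrefl _ he

lemma monomial_pow (m : Fin r →₀ ℕ) (j : ℕ) :
    (MvPowerSeries.monomial m (1 : K)) ^ j = MvPowerSeries.monomial (j • m) (1 : K) := by
  induction j with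
  | zero => simp
  | succ n ih =>
    rw [pow_succ, ih, MvPowerSeries.monomial_mul_monomial, one_mul, succ_nsmul]

end Series

section Series2
variable {K : Type*} [Field K] {r : ℕ}

lemma coeff_zk (y0 : MvPowerSeries (Fin r) K) (k e : Fin r →₀ ℕ) :
    MvPowerSeries.coeff e (zk y0 k) =
      if grle e k then MvPowerSeries.coeff e y0 else 0 := by
  rw [MvPowerSeries.coeff_apply]
  rfl

lemma grle_of_grlt_succ {S : (Fin r →₀ ℕ) → (Fin r →₀ ℕ)} (hS : IsSucc S)
    {e k : Fin r →₀ ℕ} (h : grlt e (S k)) : grle e k := by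
  refine grle_of_not_grlt fun hk => ?_
  exact grlt_irrefl _ (grlt_of_grlt_of_grle h ((hS k).2 e hk))

lemma Vbd_sub_zk {S : (Fin r →₀ ℕ) → (Fin r →₀ ℕ)} (hS : IsSucc S)
    (y0 : MvPowerSeries (Fin r) K) {k k' : Fin r →₀ ℕ} (hkk' : grle k k') :
    Vbd (zk y0 k' - zk y0 k) (S k) := by
  intro e he
  have h1 : grle e k := grle_of_grlt_succ hS he
  have h2 : grle e k' := grle_trans h1 hkk'
  rw [map_sub, coeff_zk, coeff_zk, if_pos h1, if_pos h2, sub_self]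

lemma Vbd_y0_sub_zk {S : (Fin r →₀ ℕ) → (Fin r →₀ ℕ)} (hS : IsSucc S)
    (y0 : MvPowerSeries (Fin r) K) (k : Fin r →₀ ℕ) :
    Vbd (y0 - zk y0 k) (S k) := by
  intro e he
  have h1 : grle e k := grle_of_grlt_succ hS he
  rw [map_sub, coeff_zk, if_pos h1, sub_self]

/-- agreement of two series below `k`. -/
def Agr (f g : MvPowerSeries (Fin r) K) (k : Fin r →₀ ℕ) : Prop :=
  ∀ n, grle n k → MvPowerSeries.coeff n f = MvPowerSeries.coeff n g

lemma Agr_mul {f g f' g' : MvPowerSeries (Fin r) K} {k : Fin r →₀ ℕ}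
    (h1 : Agr f g k) (h2 : Agr f' g' k) : Agr (f * f') (g * g') k := by
  intro n hn
  classical
  rw [MvPowerSeries.coeff_mul, MvPowerSeries.coeff_mul]
  refine Finset.sum_congr rfl fun p hp => ?_
  have hpq : p.1 + p.2 = n := Finset.HasAntidiagonal.mem_antidiagonal.mp hp
  have hp1 : grle p.1 k := by
    refine grle_trans (grle_trans (grle_of_le fun i => ?_) (grle_refl n)) hn
    have : p.1 i + p.2 i = n i := by
      rw [← hpq]; rfl
    omega
  have hp2 : grle p.2 k := by
    refine grle_trans (grle_trans (grle_of_le fun i => ?_) (grle_refl n)) hn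
    have : p.1 i + p.2 i = n i := by
      rw [← hpq]; rfl
    omega
  rw [h1 _ hp1, h2 _ hp2]

lemma Agr_pow {f g : MvPowerSeries (Fin r) K} {k : Fin r →₀ ℕ}
    (h : Agr f g k) (n : ℕ) : Agr (f ^ n) (g ^ n) k := by
  induction n with
  | zero => intro n hn; rfl
  | succ m ih =>
    rw [pow_succ, pow_succ]
    exact Agr_mul ih h

lemma Agr_zk (y0 : MvPowerSeries (Fin r) K) (k : Fin r →₀ ℕ) :
    Agr (zk y0 k) y0 k := by
  intro n hn
  rw [coeff_zk, if_pos hn]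

lemma Agr_eval (P : Polynomial (MvPowerSeries (Fin r) K))
    {f g : MvPowerSeries (Fin r) K} {k : Fin r →₀ ℕ} (h : Agr f g k) :
    Agr (P.eval f) (P.eval g) k := by
  intro n hn
  rw [Polynomial.eval_eq_sum, Polynomial.eval_eq_sum, Polynomial.sum, Polynomial.sum,
    map_sum, map_sum]
  refine Finset.sum_congr rfl fun m _ => ?_
  exact Agr_mul (fun n _ => rfl) (Agr_pow h m) n hn

end Series2

section Poly
variable {R : Type*} [CommRing R]
open Polynomial

lemma coeff_comp_C_mul_X (Q : R[X]) (b : R) (j : ℕ) :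
    (Q.comp (C b * X)).coeff j = Q.coeff j * b ^ j := by
  rw [comp_eq_sum_left, Polynomial.sum, finset_sum_coeff]
  have key : ∀ e ∈ Q.support,
      (C (Q.coeff e) * (C b * X) ^ e).coeff j =
        if e = j then Q.coeff j * b ^ j else 0 := by
    intro e _
    rw [mul_pow, ← C_pow, ← mul_assoc, ← C_mul, coeff_C_mul, coeff_X_pow]
    by_cases h : e = j
    · subst h; simp
    · simp [h, Ne.symm h]
  rw [Finset.sum_congr rfl key]
  by_cases hj : j ∈ Q.support
  · rw [Finset.sum_ite_eq' Q.support j fun _ => Q.coeff j * b ^ j, if_pos hj]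
  · rw [Finset.sum_ite_eq' Q.support j fun _ => Q.coeff j * b ^ j, if_neg hj]
    rw [Polynomial.notMem_support_iff.mp hj, zero_mul]

lemma coeff_comp_linear (P : R[X]) (a b : R) (j : ℕ) :
    (P.comp (C a + C b * X)).coeff j = (hasseDeriv j P).eval a * b ^ j := by
  have h1 : (C a + C b * X : R[X]) = (X + C a).comp (C b * X) := by
    rw [add_comp, X_comp, C_comp, add_comm]
  rw [h1, ← comp_assoc, ← taylor_apply, coeff_comp_C_mul_X, taylor_coeff]

lemma eval_add_eq_sum (Q : R[X]) (z h : R) :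
    Q.eval (z + h) = ∑ l ∈ Finset.range (Q.natDegree + 1),
      (hasseDeriv l Q).eval z * h ^ l := by
  rw [add_comm, ← taylor_eval z Q h, eval_eq_sum_range, natDegree_taylor]
  refine Finset.sum_congr rfl fun l _ => ?_
  rw [taylor_coeff]

lemma hasseDeriv_hasseDeriv (l j : ℕ) (P : R[X]) :
    hasseDeriv l (hasseDeriv j P) = (l + j).choose l • hasseDeriv (l + j) P := by
  have h := LinearMap.congr_fun (Polynomial.hasseDeriv_comp (R := R) l j) P
  simpa using h

end Poly

section Main
variable {K : Type*} [Field K] {r : ℕ}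
open Polynomial

lemma coeff_term_zero {c e ma mb : Fin r →₀ ℕ} {A B : MvPowerSeries (Fin r) K}
    (hA : ∀ p, MvPowerSeries.coeff p A ≠ 0 → grle c (p + ma))
    (hB : Vbd B mb) (hlt : grlt ma mb) (he : grle e c) :
    MvPowerSeries.coeff e (A * B) = 0 := by
  classical
  rw [MvPowerSeries.coeff_mul]
  refine Finset.sum_eq_zero fun p hp => ?_
  have hpq : p.1 + p.2 = e := Finset.HasAntidiagonal.mem_antidiagonal.mp hp
  by_cases h1 : MvPowerSeries.coeff p.1 A = 0
  · rw [h1, zero_mul]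
  by_cases h2 : MvPowerSeries.coeff p.2 B = 0
  · rw [h2, mul_zero]
  exfalso
  have ha : grle c (p.1 + ma) := hA p.1 h1
  have hb : grle mb p.2 := grle_of_not_grlt fun h => h2 (hB _ h)
  have key : grle (c + mb) (e + ma) := by
    have := grle_add ha hb
    have heq : p.1 + ma + p.2 = e + ma := by
      rw [← hpq, add_right_comm]
    rwa [heq] at this
  have h3 : grlt (e + ma) (e + mb) := grlt_add_left hlt e
  have h4 : grle (e + mb) (c + mb) := grle_add he (grle_refl mb)
  exact grlt_irrefl _ (grlt_of_grlt_of_grle (grlt_of_grlt_of_grle h3 h4) key)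

variable (P : Polynomial (MvPowerSeries (Fin r) K)) (y0 : MvPowerSeries (Fin r) K)
  (S : (Fin r →₀ ℕ) → (Fin r →₀ ℕ))

lemma coeff_Pk (k : Fin r →₀ ℕ) (j : ℕ) :
    (Pk P y0 S k).coeff j =
      (hasseDeriv j P).eval (zk y0 k) * MvPowerSeries.monomial (j • S k) (1 : K) := by
  rw [Pk, coeff_comp_linear, monomial_pow]

lemma hA_lemma {k c : Fin r →₀ ℕ} (hW : IsW (Pk P y0 S k) c) (m : ℕ) (p : Fin r →₀ ℕ)
    (hne : MvPowerSeries.coeff p ((hasseDeriv m P).eval (zk y0 k)) ≠ 0) :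
    grle c (p + m • S k) := by
  refine grle_of_not_grlt fun h => hne ?_
  have h2 := hW.2 _ h m
  rw [coeff_Pk, MvPowerSeries.coeff_add_mul_monomial, mul_one] at h2
  exact h2

lemma core_lemma {k c e b : Fin r →₀ ℕ} (hW : IsW (Pk P y0 S k) c) (he : grle e c)
    (hb : grlt (S k) b) {h : MvPowerSeries (Fin r) K} (hh : Vbd h (S k))
    (l j : ℕ) (hj : 1 ≤ j) {g : MvPowerSeries (Fin r) K} (hg : Vbd g (j • b)) :
    MvPowerSeries.coeff e ((hasseDeriv (l + j) P).eval (zk y0 k) * (h ^ l * g)) = 0 := by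
  refine coeff_term_zero (ma := (l + j) • S k) (mb := l • S k + j • b)
    (fun p hp => hA_lemma P y0 S hW (l + j) p hp)
    (Vbd_mul (Vbd_pow hh l) hg) ?_ he
  rw [add_nsmul]
  exact grlt_add_left (grlt_smul hb hj) (l • S k)

lemma forward_claim (hS : IsSucc S) {i : (Fin r →₀ ℕ) → (Fin r →₀ ℕ)}
    (hi : ∀ k, IsW (Pk P y0 S k) (i k)) (hroot : P.eval y0 = 0)
    {k k' : Fin r →₀ ℕ} (hkk' : grlt k k') {e : Fin r →₀ ℕ} (he : grle e (i k)) (j : ℕ) :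
    MvPowerSeries.coeff e ((Pk P y0 S k').coeff j) = 0 := by
  set z := zk y0 k with hz
  set z' := zk y0 k' with hz'
  have hb : grlt (S k) (S k') := grlt_of_grle_of_grlt ((hS k).2 k' hkk') (hS k').1
  have hh : Vbd (z' - z) (S k) := Vbd_sub_zk hS y0 (Or.inl hkk')
  have hzz : z' = z + (z' - z) := by ring
  have hexp : ∀ jj : ℕ, (hasseDeriv jj P).eval z' =
      ∑ l ∈ Finset.range ((hasseDeriv jj P).natDegree + 1),
        ((l + jj).choose l • (hasseDeriv (l + jj) P)).eval z * (z' - z) ^ l := by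
    intro jj
    have h := eval_add_eq_sum (hasseDeriv jj P) z (z' - z)
    rw [← hzz] at h
    rw [h]
    exact Finset.sum_congr rfl fun m _ => by rw [hasseDeriv_hasseDeriv]
  rcases Nat.eq_zero_or_pos j with rfl | hj
  · -- j = 0 : use the root identity
    have h0 : Vbd (y0 - z') (S k') := Vbd_y0_sub_zk hS y0 k'
    have hy0 : y0 = z' + (y0 - z') := by ring
    have hsum : ∑ l ∈ Finset.range (P.natDegree + 1),
        (hasseDeriv l P).eval z' * (y0 - z') ^ l = 0 := by
      rw [← eval_add_eq_sum P z' (y0 - z'), ← hy0, hroot]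
    have hPz' : P.eval z' = -∑ l ∈ Finset.range P.natDegree,
        (hasseDeriv (l + 1) P).eval z' * (y0 - z') ^ (l + 1) := by
      rw [Finset.sum_range_succ'] at hsum
      simp only [hasseDeriv_zero, LinearMap.id_apply, pow_zero, mul_one] at hsum
      exact eq_neg_of_add_eq_zero_left (by rw [add_comm] at hsum; exact hsum)
    rw [coeff_Pk]
    simp only [hasseDeriv_zero, LinearMap.id_apply, zero_smul,
      MvPowerSeries.monomial_zero_one, mul_one]
    rw [hPz', map_neg, map_sum, neg_eq_zero]
    refine Finset.sum_eq_zero fun l _ => ?_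
    rw [hexp (l + 1), Finset.sum_mul, map_sum]
    refine Finset.sum_eq_zero fun m _ => ?_
    rw [eval_smul, smul_mul_assoc, smul_mul_assoc, mul_assoc, map_nsmul]
    rw [core_lemma P y0 S (hi k) he hb hh m (l + 1) (Nat.succ_le_succ (Nat.zero_le l))
      (Vbd_pow h0 (l + 1))]
    simp
  · -- j ≥ 1
    rw [coeff_Pk]
    rw [hexp j, Finset.sum_mul, map_sum]
    refine Finset.sum_eq_zero fun l _ => ?_
    rw [eval_smul, smul_mul_assoc, smul_mul_assoc, mul_assoc, map_nsmul]
    have hg : Vbd (MvPowerSeries.monomial (j • S k') (1 : K)) (j • S k') := Vbd_monomial _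
    rw [core_lemma P y0 S (hi k) he hb hh l j hj hg]
    simp

end Main

end GrlexAux

open GrlexAux

/-- **Roots are detected by the strict growth of the valuations `i_k = w(P_k)`.**
Let `P ∈ K[[u₁,…,u_r]][y]` be nonzero and `y₀ = Σ c_n uⁿ` with `c₀ ≠ 0`.  Then `y₀` is a
root of `P` iff the sequence `(i_k)` is strictly increasing for the graded lexicographic
order. -/
theorem root_iff_strictMono {K : Type*} [Field K] [CharZero K] {r : ℕ} (hr : 1 ≤ r)
    (P : Polynomial (MvPowerSeries (Fin r) K)) (hP : P ≠ 0)
    (y0 : MvPowerSeries (Fin r) K)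
    (hc0 : MvPowerSeries.constantCoeff y0 ≠ 0)
    (S : (Fin r →₀ ℕ) → (Fin r →₀ ℕ)) (hS : IsSucc S)
    (i : (Fin r →₀ ℕ) → (Fin r →₀ ℕ)) (hi : ∀ k, IsW (Pk P y0 S k) (i k)) :
    Polynomial.eval y0 P = 0 ↔ ∀ k k', grlt k k' → grlt (i k) (i k') := by

  constructor
  · intro hroot k k' hkk'
    by_contra hn
    have hle : grle (i k') (i k) := grle_of_not_grlt hn
    obtain ⟨j, hj⟩ := (hi k').1
    exact hj (forward_claim P y0 S hS hi hroot hkk' hle j)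
  · intro hmono
    by_contra hne
    have hex : ∃ e, MvPowerSeries.coeff e (Polynomial.eval y0 P) ≠ 0 := by
      by_contra h
      push_neg at h
      exact hne (MvPowerSeries.ext fun n => by rw [h n, map_zero])
    obtain ⟨e0, he0, hmin⟩ := exists_min hex
    have claim : ∀ k, grle e0 k → grle (i k) e0 := by
      intro k hk
      have h1 : MvPowerSeries.coeff e0 ((Pk P y0 S k).coeff 0) ≠ 0 := by
        rw [coeff_Pk]
        simp only [Polynomial.hasseDeriv_zero, LinearMap.id_apply, zero_smul,
          MvPowerSeries.monomial_zero_one, mul_one]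
        rw [Agr_eval P (Agr_zk y0 k) e0 hk]
        exact he0
      exact grle_of_not_grlt fun h => h1 ((hi k).2 e0 h 0)
    set κ : ℕ → (Fin r →₀ ℕ) := fun n => e0 + Finsupp.single ⟨0, hr⟩ n with hκ
    have hdeg : ∀ n, degOf (κ n) = degOf e0 + n := by
      intro n
      rw [hκ, degOf_add]
      congr 1
      rw [degOf_eq]
      simp [Finsupp.single_apply]
    have hk0 : ∀ n, grle e0 (κ n) := by
      intro n
      refine grle_of_le fun j => ?_
      simp [hκ, Finsupp.add_apply]
    have hinc : ∀ n m : ℕ, n < m → grlt (κ n) (κ m) := by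
      intro n m h
      exact Or.inl (by rw [hdeg, hdeg]; omega)
    obtain ⟨n, -, m, -, hnm, heqq⟩ :=
      Set.infinite_univ.exists_ne_map_eq_of_mapsTo
        (f := fun n => i (κ n)) (t := {m | grle m e0})
        (fun n _ => claim _ (hk0 n)) (finite_grle e0)
    rcases lt_trichotomy n m with h | h | h
    · have := hmono _ _ (hinc n m h)
      rw [heqq] at this
      exact grlt_irrefl _ this
    · exact hnm h
    · have := hmono _ _ (hinc m n h)
      rw [← heqq] at this
      exact grlt_irrefl _ this
end

section
/- Let P ∈ K[[u_1,…,u_r]][y] be a nonzero polynomial of degree at most d_y in y with only simple roots, i.e., whose discriminant Δ_P := Res_y(P, ∂P/∂y) ∈ K[[u_1,…,u_r]] is nonzero. If y_0, y_1 ∈ K[[u_1,…,u_r]] are two distinct roots of P, then ord(y_0 − y_1) ≤ ord(Δ_P). -/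
/-- The `(d+e) × (d+e)` Sylvester matrix of two polynomials `P` and `Q`
(with formal degrees `d` and `e`). -/
def sylvester {A : Type*} [CommRing A] (P Q : Polynomial A) (d e : ℕ) :
    Matrix (Fin (d + e)) (Fin (d + e)) A :=
  Matrix.of fun i j =>
    if (j : ℕ) < e then
      (if (j : ℕ) ≤ (i : ℕ) then P.coeff ((i : ℕ) - (j : ℕ)) else 0)
    else
      (if (j : ℕ) - e ≤ (i : ℕ) then Q.coeff ((i : ℕ) - ((j : ℕ) - e)) else 0)

/-- The discriminant of `P ∈ R[y]`: the resultant of `P` and `∂P/∂y`, computed as the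
determinant of their Sylvester matrix. -/
noncomputable def discrim' {A : Type*} [CommRing A] (P : Polynomial A) : A :=
  (sylvester P (Polynomial.derivative P) P.natDegree (Polynomial.derivative P).natDegree).det

lemma shift_sum_aux {A : Type*} [CommRing A] (p : Polynomial A) (a : A) (t n : ℕ)
    (h : p.natDegree + t < n) :
    (∑ i ∈ Finset.range n, a ^ i * (if t ≤ i then p.coeff (i - t) else 0))
      = a ^ t * p.eval a := by
  have htn : t ≤ n := by omega
  rw [Polynomial.eval_eq_sum_range' (show p.natDegree < n - t by omega), Finset.mul_sum]
  rw [Finset.range_eq_Ico, ← Finset.sum_Ico_consecutive _ (Nat.zero_le t) htn]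
  have h1 : ∑ i ∈ Finset.Ico 0 t, a ^ i * (if t ≤ i then p.coeff (i - t) else 0) = 0 := by
    apply Finset.sum_eq_zero
    intro i hi
    simp only [Finset.mem_Ico] at hi
    rw [if_neg (by omega)]
    ring
  rw [h1, zero_add, Finset.sum_Ico_eq_sum_range]
  apply Finset.sum_congr rfl
  intro i _
  rw [if_pos (by omega)]
  simp only [Nat.add_sub_cancel_left]
  ring

lemma sylvester_det_eq_zero {A : Type*} [CommRing A] (P Q : Polynomial A) (d e : ℕ)
    (hd : P.natDegree ≤ d) (he : Q.natDegree ≤ e) (hpos : 0 < d + e)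
    (a : A) (hPa : P.eval a = 0) (hQa : Q.eval a = 0) :
    (sylvester P Q d e).det = 0 := by
  set M := sylvester P Q d e with hM
  set v : Fin (d + e) → A := fun i => a ^ (i : ℕ) with hv
  have hker : Matrix.vecMul v M = 0 := by
    funext j
    show ∑ i, v i * M i j = 0
    by_cases hj : (j : ℕ) < e
    · have : ∀ i : Fin (d + e), v i * M i j
          = a ^ (i : ℕ) * (if (j : ℕ) ≤ (i : ℕ) then P.coeff ((i : ℕ) - (j : ℕ)) else 0) := by
        intro i
        simp [hM, sylvester, hv, hj]
      rw [Finset.sum_congr rfl fun i _ => this i, Fin.sum_univ_eq_sum_range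
        (fun i => a ^ i * (if (j : ℕ) ≤ i then P.coeff (i - (j : ℕ)) else 0)),
        shift_sum_aux P a (j : ℕ) (d + e) (by omega), hPa, mul_zero]
    · have : ∀ i : Fin (d + e), v i * M i j
          = a ^ (i : ℕ) * (if (j : ℕ) - e ≤ (i : ℕ) then Q.coeff ((i : ℕ) - ((j : ℕ) - e)) else 0) := by
        intro i
        simp [hM, sylvester, hv, hj]
      have hjlt : (j : ℕ) < d + e := j.isLt
      rw [Finset.sum_congr rfl fun i _ => this i, Fin.sum_univ_eq_sum_range
        (fun i => a ^ i * (if (j : ℕ) - e ≤ i then Q.coeff (i - ((j : ℕ) - e)) else 0)),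
        shift_sum_aux Q a ((j : ℕ) - e) (d + e) (by omega), hQa, mul_zero]
  have h2 : M.det • v = 0 := by
    calc M.det • v = Matrix.vecMul v (M.det • (1 : Matrix (Fin (d+e)) (Fin (d+e)) A)) := by
          funext i
          show M.det * v i = ∑ k, v k * (M.det • (1 : Matrix (Fin (d+e)) (Fin (d+e)) A)) k i
          simp [Matrix.one_apply, mul_ite, mul_comm]
      _ = Matrix.vecMul v (M * M.adjugate) := by rw [Matrix.mul_adjugate]
      _ = Matrix.vecMul (Matrix.vecMul v M) M.adjugate := by rw [Matrix.vecMul_vecMul]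
      _ = 0 := by rw [hker, Matrix.zero_vecMul]
  have h3 := congrFun h2 ⟨0, hpos⟩
  simpa [hv] using h3

theorem dvd_discrim'_of_roots {K : Type*} [Field K] [CharZero K]
    {r : ℕ}
    (P : Polynomial (MvPowerSeries (Fin r) K)) (hP : P ≠ 0)
    (y0 y1 : MvPowerSeries (Fin r) K)
    (h0 : Polynomial.eval y0 P = 0) (h1 : Polynomial.eval y1 P = 0) (hne : y0 ≠ y1) :
    (y0 - y1) ∣ discrim' P := by
  -- step 1 : (y0 - y1) divides the evaluation of the derivative at y0
  obtain ⟨k, hk⟩ := Polynomial.binomExpansion P y0 (y1 - y0)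
  rw [add_sub_cancel, h1, h0, zero_add] at hk
  have hsub : y1 - y0 ≠ 0 := sub_ne_zero.mpr (Ne.symm hne)
  have hder : (Polynomial.derivative P).eval y0 = -k * (y1 - y0) := by
    apply mul_right_cancel₀ hsub
    have : (Polynomial.derivative P).eval y0 * (y1 - y0) = -(k * (y1 - y0) ^ 2) := by
      linear_combination -hk
    rw [this]; ring
  have hdvd1 : (y0 - y1) ∣ (Polynomial.derivative P).eval y0 := ⟨k, by rw [hder]; ring⟩
  -- step 2 : pass to the quotient by (y0 - y1)
  set I : Ideal (MvPowerSeries (Fin r) K) := Ideal.span {y0 - y1} with hI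
  set π := Ideal.Quotient.mk I with hπ
  rw [← Ideal.mem_span_singleton, ← hI, ← Ideal.Quotient.eq_zero_iff_mem, ← hπ]
  -- the image of the sylvester matrix
  set d := P.natDegree with hd
  set e := (Polynomial.derivative P).natDegree with he
  have hmapM : (sylvester P (Polynomial.derivative P) d e).map π
      = sylvester (P.map π) (Polynomial.derivative (P.map π)) d e := by
    ext i j
    simp only [Matrix.map_apply, sylvester, Matrix.of_apply, Polynomial.derivative_map,
      Polynomial.coeff_map, apply_ite π, map_zero]
  have hdpos : 0 < d := by
    rcases Nat.eq_zero_or_pos d with h | h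
    · exfalso
      have hPC := Polynomial.eq_C_of_natDegree_eq_zero h
      rw [hPC, Polynomial.eval_C] at h0
      exact hP (by rw [hPC, h0, map_zero])
    · exact h
  have hevP : (P.map π).eval (π y0) = 0 := by
    rw [Polynomial.eval_map, Polynomial.eval₂_at_apply, h0, map_zero]
  have hevQ : (Polynomial.derivative (P.map π)).eval (π y0) = 0 := by
    rw [Polynomial.derivative_map, Polynomial.eval_map, Polynomial.eval₂_at_apply]
    rw [Ideal.Quotient.eq_zero_iff_mem, hI, Ideal.mem_span_singleton]
    exact hdvd1
  rw [discrim', ← hd, ← he, RingHom.map_det, RingHom.mapMatrix_apply, hmapM]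
  exact sylvester_det_eq_zero (P.map π) (Polynomial.derivative (P.map π)) d e
    (hd ▸ Polynomial.natDegree_map_le)
    (by rw [Polynomial.derivative_map]; exact he ▸ Polynomial.natDegree_map_le)
    (by omega) (π y0) hevP hevQ

/-- **Distinct roots are separated by the discriminant.**
If `P ∈ K[[u₁,…,u_r]][y]` is a nonzero polynomial of degree at most `d_y` in `y` with
nonzero discriminant `Δ_P`, and `y₀ ≠ y₁` are two roots of `P` in `K[[u₁,…,u_r]]`, then
`ord (y₀ − y₁) ≤ ord Δ_P`. -/
theorem order_sub_roots_le_order_discrim {K : Type*} [Field K] [CharZero K]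
    {r : ℕ} (hr : 1 ≤ r) (dy : ℕ)
    (P : Polynomial (MvPowerSeries (Fin r) K)) (hP : P ≠ 0) (hdy : P.natDegree ≤ dy)
    (hΔ : discrim' P ≠ 0)
    (y0 y1 : MvPowerSeries (Fin r) K)
    (h0 : Polynomial.eval y0 P = 0) (h1 : Polynomial.eval y1 P = 0) (hne : y0 ≠ y1) :
    MvPowerSeries.order (y0 - y1) ≤ MvPowerSeries.order (discrim' P) := by
  obtain ⟨c, hc⟩ := dvd_discrim'_of_roots P hP y0 y1 h0 h1 hne
  rw [hc]
  calc MvPowerSeries.order (y0 - y1)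
      ≤ MvPowerSeries.order (y0 - y1) + MvPowerSeries.order c := le_self_add
    _ ≤ MvPowerSeries.order ((y0 - y1) * c) := MvPowerSeries.le_order_mul
end
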